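/- arXiv:1711.09036 — 5 statements merged into one kernel-verified Lean document; each statement's English description precedes it below -/
import Mathlib

section
/- Assume λ > 0 and μ satisfies (aa). Then ∫₀^∞ G(r)/r dr < ∞, i.e. the function r ↦ G(r)/r belongs to L¹(0,∞). -/
open MeasureTheory Set Real Filter Topology

namespace GAux

lemma sin_pi_nonneg {α : ℝ} (h0 : 0 ≤ α) (h1 : α ≤ 1) : 0 ≤ Real.sin (π * α) :=
  Real.sin_nonneg_of_nonneg_of_le_pi (by positivity)
    (by nlinarith [Real.pi_pos])

lemma rpow_le_max (r : ℝ) (hr : 0 ≤ r) {α : ℝ} (hα : α ∈ Ioo (0:ℝ) 1) :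
    r ^ α ≤ max 1 r := by
  rcases le_or_gt r 1 with h | h
  · exact le_max_of_le_left (Real.rpow_le_one hr h hα.1.le)
  · refine le_max_of_le_right ?_
    calc r ^ α ≤ r ^ (1:ℝ) := Real.rpow_le_rpow_of_exponent_le h.le hα.2.le
    _ = r := Real.rpow_one r

variable {μ : ℝ → ℝ}

lemma integrable_weight (hmeas : Measurable μ) (hint : IntegrableOn μ (Ioo 0 1))
    {φ : ℝ → ℝ} (hφm : Measurable φ) (hφb : ∀ x, |φ x| ≤ 1) {r : ℝ} (hr : 0 ≤ r) :
    IntegrableOn (fun α => r ^ α * φ α * μ α) (Ioo 0 1) := by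
  refine Integrable.mono' ((hint.abs.const_mul (max 1 r)))
    (((measurable_const.pow measurable_id).mul hφm).mul hmeas).aestronglyMeasurable ?_
  filter_upwards [ae_restrict_mem measurableSet_Ioo] with α hα
  have h1 : (0:ℝ) ≤ r ^ α := Real.rpow_nonneg hr α
  have h2 := rpow_le_max r hr hα
  have h3 := hφb α
  have h4 : |r ^ α * φ α * μ α| = r ^ α * |φ α| * |μ α| := by
    rw [abs_mul, abs_mul, abs_of_nonneg h1]
  rw [Real.norm_eq_abs, h4]
  have : r ^ α * |φ α| ≤ max 1 r := by
    calc r ^ α * |φ α| ≤ r ^ α * 1 := by nlinarith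
    _ ≤ max 1 r := by simpa using h2
  nlinarith [abs_nonneg (μ α), abs_nonneg (φ α)]

lemma meas_param (hmeas : Measurable μ) {φ : ℝ → ℝ} (hφm : Measurable φ) :
    Measurable (fun r : ℝ => ∫ α in Ioo (0:ℝ) 1, r ^ α * φ α * μ α) := by
  have : StronglyMeasurable (fun p : ℝ × ℝ => p.1 ^ p.2 * φ p.2 * μ p.2) :=
    (((measurable_fst.pow measurable_snd).mul (hφm.comp measurable_snd)).mul
      (hmeas.comp measurable_snd)).stronglyMeasurable
  exact this.integral_prod_right'.measurable



-- monotonicity in r for nonneg weight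
lemma integral_mono_r (hmeas : Measurable μ) (hint : IntegrableOn μ (Ioo 0 1))
    (hnn : ∀ α ∈ Icc (0:ℝ) 1, 0 ≤ μ α)
    {φ : ℝ → ℝ} (hφm : Measurable φ) (hφb : ∀ x, |φ x| ≤ 1)
    (hφnn : ∀ α ∈ Ioo (0:ℝ) 1, 0 ≤ φ α)
    {r r' : ℝ} (hr : 0 ≤ r) (hrr' : r ≤ r') :
    (∫ α in Ioo (0:ℝ) 1, r ^ α * φ α * μ α) ≤ ∫ α in Ioo (0:ℝ) 1, r' ^ α * φ α * μ α := by
  refine setIntegral_mono_on (integrable_weight hmeas hint hφm hφb hr)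
    (integrable_weight hmeas hint hφm hφb (hr.trans hrr')) measurableSet_Ioo ?_
  intro α hα
  have h1 : r ^ α ≤ r' ^ α := Real.rpow_le_rpow hr hrr' hα.1.le
  have h2 : 0 ≤ φ α * μ α :=
    mul_nonneg (hφnn α hα) (hnn α ⟨hα.1.le, hα.2.le⟩)
  calc r ^ α * φ α * μ α = r ^ α * (φ α * μ α) := by ring
  _ ≤ r' ^ α * (φ α * μ α) := by nlinarith
  _ = r' ^ α * φ α * μ α := by ring

lemma abs_C_le (hmeas : Measurable μ) (hint : IntegrableOn μ (Ioo 0 1))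
    (hnn : ∀ α ∈ Icc (0:ℝ) 1, 0 ≤ μ α) {r : ℝ} (hr : 0 ≤ r) :
    |∫ α in Ioo (0:ℝ) 1, r ^ α * Real.cos (π * α) * μ α| ≤
      ∫ α in Ioo (0:ℝ) 1, r ^ α * 1 * μ α := by
  have hi := integrable_weight (φ := fun α => Real.cos (π * α)) hmeas hint
    (by fun_prop) (fun x => Real.abs_cos_le_one _) hr
  calc |∫ α in Ioo (0:ℝ) 1, r ^ α * Real.cos (π * α) * μ α|
      ≤ ∫ α in Ioo (0:ℝ) 1, |r ^ α * Real.cos (π * α) * μ α| := by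
        simpa only [Real.norm_eq_abs] using
          norm_integral_le_integral_norm (μ := volume.restrict (Ioo 0 1))
            (fun α => r ^ α * Real.cos (π * α) * μ α)
  _ ≤ ∫ α in Ioo (0:ℝ) 1, r ^ α * 1 * μ α := by
    refine setIntegral_mono_on hi.abs
      (integrable_weight (φ := fun _ => (1:ℝ)) hmeas hint measurable_const (by norm_num) hr)
      measurableSet_Ioo ?_
    intro α hα
    have h1 : (0:ℝ) ≤ r ^ α := Real.rpow_nonneg hr α
    have h2 := hnn α ⟨hα.1.le, hα.2.le⟩
    rw [abs_mul, abs_mul, abs_of_nonneg h1, abs_of_nonneg h2]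
    have h3 := Real.abs_cos_le_one (π * α)
    exact mul_le_mul_of_nonneg_right (mul_le_mul_of_nonneg_left h3 h1) h2


lemma sinmu_integrable (hmeas : Measurable μ) (hint : IntegrableOn μ (Ioo 0 1)) :
    IntegrableOn (fun α => Real.sin (π * α) * μ α) (Ioo 0 1) := by
  have := integrable_weight (φ := fun α => Real.sin (π * α)) hmeas hint
    (by fun_prop) (fun x => Real.abs_sin_le_one (π * x)) (zero_le_one)
  simpa [Real.one_rpow] using this

lemma tendsto_h_zero (hmeas : Measurable μ) (hint : IntegrableOn μ (Ioo 0 1)) :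
    Tendsto (fun r : ℝ => ∫ α in Ioo (0:ℝ) 1, r ^ α * 1 * μ α) (𝓝[>] (0:ℝ)) (𝓝 0) := by
  have main : Tendsto (fun r : ℝ => ∫ α in Ioo (0:ℝ) 1, r ^ α * 1 * μ α) (𝓝[>] (0:ℝ))
      (𝓝 (∫ _α in Ioo (0:ℝ) 1, (0:ℝ))) := by
    apply tendsto_integral_filter_of_dominated_convergence (bound := fun α => |μ α|)
    · filter_upwards with r
      exact (((measurable_const.pow measurable_id).mul measurable_const).mul
        hmeas).aestronglyMeasurable
    · filter_upwards [Ioc_mem_nhdsGT zero_lt_one] with r hr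
      filter_upwards [ae_restrict_mem measurableSet_Ioo] with α hα
      have h1 : r ^ α ≤ 1 := Real.rpow_le_one hr.1.le hr.2 hα.1.le
      have h2 : (0:ℝ) ≤ r ^ α := Real.rpow_nonneg hr.1.le α
      rw [Real.norm_eq_abs, mul_one, abs_mul, abs_of_nonneg h2]
      nlinarith [abs_nonneg (μ α)]
    · exact hint.abs
    · filter_upwards [ae_restrict_mem measurableSet_Ioo] with α hα
      have t1 : Tendsto (fun r : ℝ => r ^ α) (𝓝[>] (0:ℝ)) (𝓝 0) := by
        have c := (Real.continuousAt_rpow_const 0 α (Or.inr hα.1.le)).tendsto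
        rw [Real.zero_rpow hα.1.ne'] at c
        exact c.mono_left nhdsWithin_le_nhds
      simpa [mul_one] using (t1.mul_const (μ α))
  simpa using main

lemma m_pos (hmeas : Measurable μ) (hnn : ∀ α ∈ Icc (0:ℝ) 1, 0 ≤ μ α)
    (hint : IntegrableOn μ (Ioo 0 1)) (hpos : 0 < ∫ α in Ioo (0:ℝ) 1, μ α) :
    0 < ∫ α in Ioo (0:ℝ) 1, Real.sin (π * α) * μ α := by
  have hμnn : 0 ≤ᵐ[volume.restrict (Ioo (0:ℝ) 1)] μ := by
    filter_upwards [ae_restrict_mem measurableSet_Ioo] with α hα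
    exact hnn α ⟨hα.1.le, hα.2.le⟩
  have hsupp : 0 < volume (Function.support μ ∩ Ioo 0 1) :=
    (setIntegral_pos_iff_support_of_nonneg_ae hμnn hint).mp hpos
  have hsin_nn : 0 ≤ᵐ[volume.restrict (Ioo (0:ℝ) 1)]
      (fun α => Real.sin (π * α) * μ α) := by
    filter_upwards [ae_restrict_mem measurableSet_Ioo] with α hα
    exact mul_nonneg (sin_pi_nonneg hα.1.le hα.2.le) (hnn α ⟨hα.1.le, hα.2.le⟩)
  refine (setIntegral_pos_iff_support_of_nonneg_ae hsin_nn
    (sinmu_integrable hmeas hint)).mpr ?_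
  have hseteq : Function.support (fun α => Real.sin (π * α) * μ α) ∩ Ioo 0 1 =
      Function.support μ ∩ Ioo (0:ℝ) 1 := by
    ext α
    simp only [Function.mem_support, mem_inter_iff, mem_Ioo, ne_eq]
    constructor
    · rintro ⟨h, h2⟩
      exact ⟨fun hm => h (by rw [hm, mul_zero]), h2⟩
    · rintro ⟨h, h2⟩
      have hs : Real.sin (π * α) ≠ 0 := by
        refine ne_of_gt (Real.sin_pos_of_pos_of_lt_pi ?_ ?_)
        · exact mul_pos Real.pi_pos h2.1
        · nlinarith [Real.pi_pos, h2.2]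
      exact ⟨mul_ne_zero hs h, h2⟩
  rw [hseteq]; exact hsupp

lemma piece1 (hmeas : Measurable μ) (hnn : ∀ α ∈ Icc (0:ℝ) 1, 0 ≤ μ α)
    (hint : IntegrableOn μ (Ioo 0 1)) {r₀ : ℝ} (h0 : 0 < r₀) (h1 : r₀ ≤ 1) :
    IntegrableOn
      (fun r => ∫ α in Ioo (0:ℝ) 1, r ^ (α - 1) * (Real.sin (π * α) * μ α)) (Ioc 0 r₀) := by
  have hfmeas : Measurable (fun p : ℝ × ℝ => p.1 ^ (p.2 - 1) * (Real.sin (π * p.2) * μ p.2)) :=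
    (measurable_fst.pow (measurable_snd.sub measurable_const)).mul
      (((measurable_const.mul measurable_snd).sin).mul (hmeas.comp measurable_snd))
  have hfm : AEStronglyMeasurable (fun p : ℝ × ℝ => p.1 ^ (p.2 - 1) * (Real.sin (π * p.2) * μ p.2))
      ((volume.restrict (Ioc (0:ℝ) r₀)).prod (volume.restrict (Ioo (0:ℝ) 1))) :=
    hfmeas.aestronglyMeasurable
  have key : Integrable (fun p : ℝ × ℝ => p.1 ^ (p.2 - 1) * (Real.sin (π * p.2) * μ p.2))
      ((volume.restrict (Ioc (0:ℝ) r₀)).prod (volume.restrict (Ioo (0:ℝ) 1))) := by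
    rw [integrable_prod_iff' hfm]
    constructor
    · filter_upwards [ae_restrict_mem measurableSet_Ioo] with α hα
      have : IntegrableOn (fun r : ℝ => r ^ (α - 1)) (Ioc 0 r₀) :=
        (intervalIntegrable_iff_integrableOn_Ioc_of_le h0.le).mp
          (intervalIntegral.intervalIntegrable_rpow' (by linarith [hα.1]))
      exact this.mul_const _
    · refine Integrable.mono' (hint.const_mul π)
        ((hfmeas.norm.stronglyMeasurable.integral_prod_left').aestronglyMeasurable) ?_
      filter_upwards [ae_restrict_mem measurableSet_Ioo] with α hα
      have hα0 := hα.1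
      have hα1 := hα.2
      have hIkey : (∫ r in Ioc (0:ℝ) r₀, ‖r ^ (α - 1) * (Real.sin (π * α) * μ α)‖)
          = (∫ r in Ioc (0:ℝ) r₀, r ^ (α - 1)) * (Real.sin (π * α) * μ α) := by
        rw [← MeasureTheory.integral_mul_const]
        refine setIntegral_congr_fun measurableSet_Ioc (fun r hr => ?_)
        have h1' : (0:ℝ) ≤ r ^ (α - 1) := Real.rpow_nonneg hr.1.le _
        have h2' : 0 ≤ Real.sin (π * α) * μ α :=
          mul_nonneg (sin_pi_nonneg hα0.le hα1.le) (hnn α ⟨hα0.le, hα1.le⟩)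
        rw [Real.norm_eq_abs, abs_of_nonneg (mul_nonneg h1' h2')]
      have hI : (∫ r in Ioc (0:ℝ) r₀, r ^ (α - 1)) = r₀ ^ α / α := by
        rw [← intervalIntegral.integral_of_le h0.le,
          integral_rpow (Or.inl (by linarith : (-1:ℝ) < α - 1))]
        rw [sub_add_cancel, Real.zero_rpow hα0.ne']
        ring
      rw [hIkey, hI]
      have hsle : Real.sin (π * α) ≤ π * α := Real.sin_le (by positivity)
      have hr₀α : r₀ ^ α ≤ 1 := Real.rpow_le_one h0.le h1 hα0.le
      have hμα := hnn α ⟨hα0.le, hα1.le⟩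
      have hrnn : (0:ℝ) ≤ r₀ ^ α := Real.rpow_nonneg h0.le α
      have hsnn : 0 ≤ Real.sin (π * α) := sin_pi_nonneg hα0.le hα1.le
      have hnnval : 0 ≤ r₀ ^ α / α * (Real.sin (π * α) * μ α) := by positivity
      rw [Real.norm_eq_abs, abs_of_nonneg hnnval]
      rw [div_mul_eq_mul_div, div_le_iff₀ hα0]
      nlinarith [mul_le_mul_of_nonneg_right hr₀α (mul_nonneg hsnn hμα),
        mul_le_mul_of_nonneg_right hsle hμα]
  exact key.integral_prod_left

end GAux

open GAux

/-- The function `G(r)` from formula (g1). -/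
noncomputable def Gfun (μ : ℝ → ℝ) (lam : ℝ) (r : ℝ) : ℝ :=
  (∫ α in Ioo (0:ℝ) 1, r ^ α * Real.sin (π * α) * μ α) /
    ((lam + ∫ α in Ioo (0:ℝ) 1, r ^ α * Real.cos (π * α) * μ α) ^ 2 +
      (∫ α in Ioo (0:ℝ) 1, r ^ α * Real.sin (π * α) * μ α) ^ 2)

/-- under (aa), `r ↦ G(r)/r` belongs to `L¹(0,∞)`. -/
theorem G_div_r_integrable (μ : ℝ → ℝ) (lam : ℝ) (hlam : 0 < lam)
    (hmeas : Measurable μ)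
    (hnn : ∀ α ∈ Icc (0:ℝ) 1, 0 ≤ μ α)
    (hint : IntegrableOn μ (Ioo 0 1))
    (hpos : 0 < ∫ α in Ioo (0:ℝ) 1, μ α) :
    IntegrableOn (fun r => Gfun μ lam r / r) (Ioi 0) := by
  set S : ℝ → ℝ := fun r => ∫ α in Ioo (0:ℝ) 1, r ^ α * Real.sin (π * α) * μ α with hS
  set C : ℝ → ℝ := fun r => ∫ α in Ioo (0:ℝ) 1, r ^ α * Real.cos (π * α) * μ α with hC
  set h : ℝ → ℝ := fun r => ∫ α in Ioo (0:ℝ) 1, r ^ α * 1 * μ α with hh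
  have hGr : ∀ r, Gfun μ lam r = S r / ((lam + C r) ^ 2 + S r ^ 2) := by
    intro r; simp only [Gfun, hS, hC]
  have hsin_m : Measurable fun α : ℝ => Real.sin (π * α) := by fun_prop
  have hcos_m : Measurable fun α : ℝ => Real.cos (π * α) := by fun_prop
  have hsin_b : ∀ x : ℝ, |Real.sin (π * x)| ≤ 1 := fun x => Real.abs_sin_le_one _
  have hone_b : ∀ _x : ℝ, |(1:ℝ)| ≤ 1 := by norm_num
  have hsin_nn : ∀ α ∈ Ioo (0:ℝ) 1, 0 ≤ Real.sin (π * α) := fun α hα =>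
    GAux.sin_pi_nonneg hα.1.le hα.2.le
  have hSnn : ∀ r : ℝ, 0 ≤ r → 0 ≤ S r := by
    intro r hr
    refine setIntegral_nonneg measurableSet_Ioo fun α hα => ?_
    exact mul_nonneg (mul_nonneg (Real.rpow_nonneg hr α) (hsin_nn α hα))
      (hnn α ⟨hα.1.le, hα.2.le⟩)
  have hGnn : ∀ r : ℝ, 0 ≤ r → 0 ≤ Gfun μ lam r := by
    intro r hr; rw [hGr]; exact div_nonneg (hSnn r hr) (by positivity)
  have hmS : Measurable S := by rw [hS]; exact GAux.meas_param hmeas hsin_m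
  have hmC : Measurable C := by rw [hC]; exact GAux.meas_param hmeas hcos_m
  have hGm : AEStronglyMeasurable (fun r => Gfun μ lam r / r) volume := by
    have heq : (fun r => Gfun μ lam r / r) =
        fun r => (S r / ((lam + C r) ^ 2 + S r ^ 2)) / r := by
      funext r; rw [hGr]
    rw [heq]
    exact ((hmS.div (((measurable_const.add hmC).pow_const 2).add
      (hmS.pow_const 2))).div measurable_id).aestronglyMeasurable
  have hGle1S : ∀ r : ℝ, 0 ≤ r → 0 < S r → Gfun μ lam r ≤ 1 / S r := by
    intro r hr hSr
    rw [hGr]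
    have h2 : S r / ((lam + C r) ^ 2 + S r ^ 2) ≤ S r / S r ^ 2 :=
      div_le_div_of_nonneg_left hSr.le (by positivity) (by nlinarith [sq_nonneg (lam + C r)])
    calc S r / ((lam + C r) ^ 2 + S r ^ 2) ≤ S r / S r ^ 2 := h2
    _ = 1 / S r := by rw [sq, ← div_div, div_self hSr.ne']
  have hGsmall : ∀ r : ℝ, 0 ≤ r → |C r| ≤ lam / 2 →
      Gfun μ lam r ≤ 4 / lam ^ 2 * S r := by
    intro r hr hCr
    rw [hGr]
    have habs := abs_le.mp hCr
    have hD : lam ^ 2 / 4 ≤ (lam + C r) ^ 2 + S r ^ 2 := by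
      nlinarith [sq_nonneg (S r), habs.1, habs.2]
    calc S r / ((lam + C r) ^ 2 + S r ^ 2) ≤ S r / (lam ^ 2 / 4) :=
      div_le_div_of_nonneg_left (hSnn r hr) (by positivity) hD
    _ = 4 / lam ^ 2 * S r := by field_simp
  -- small threshold r₀
  have hh_tendsto : Tendsto h (𝓝[>] (0:ℝ)) (𝓝 0) := by
    rw [hh]; exact GAux.tendsto_h_zero hmeas hint
  obtain ⟨r₀, hr₀lt, hr₀mem⟩ : ∃ r₀ : ℝ, h r₀ < lam / 2 ∧ r₀ ∈ Ioo (0:ℝ) 1 := by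
    have h1 := hh_tendsto.eventually_lt_const (by positivity : (0:ℝ) < lam / 2)
    have h2 : ∀ᶠ r in 𝓝[>] (0:ℝ), r ∈ Ioo (0:ℝ) 1 :=
      eventually_mem_set.mpr (Ioo_mem_nhdsGT_of_mem ⟨le_rfl, zero_lt_one⟩)
    exact (h1.and h2).exists
  have hmono : ∀ {r r' : ℝ}, 0 ≤ r → r ≤ r' → h r ≤ h r' := by
    intro r r' hr hrr'
    simp only [hh]
    exact GAux.integral_mono_r hmeas hint hnn measurable_const hone_b
      (fun α _ => zero_le_one) hr hrr'
  have hCsmall : ∀ r ∈ Ioc (0:ℝ) r₀, |C r| ≤ lam / 2 := by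
    intro r hr
    have h1 : |C r| ≤ h r := by
      simp only [hC, hh]; exact GAux.abs_C_le hmeas hint hnn hr.1.le
    exact h1.trans ((hmono hr.1.le hr.2).trans hr₀lt.le)
  -- positive mass
  set m : ℝ := ∫ α in Ioo (0:ℝ) 1, Real.sin (π * α) * μ α with hm_def
  have hm : 0 < m := GAux.m_pos hmeas hnn hint hpos
  set M : ℝ := ∫ α in Ioo (0:ℝ) 1, μ α with hM_def
  have hM : 0 < M := hpos
  set ε : ℝ := min (1/2) (m / (2 * π * M)) with hε_def
  have hπ := Real.pi_pos
  have hε0 : 0 < ε := lt_min (by norm_num) (by positivity)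
  have hε2 : ε ≤ 1/2 := min_le_left _ _
  have hε1 : ε < 1 := by linarith
  have hεm : π * ε * M ≤ m / 2 := by
    have h1 : ε ≤ m / (2 * π * M) := min_le_right _ _
    have h2 : π * ε * M ≤ π * (m / (2 * π * M)) * M := by
      nlinarith [mul_le_mul_of_nonneg_right (mul_le_mul_of_nonneg_left h1 hπ.le) hM.le]
    have h3 : π * (m / (2 * π * M)) * M = m / 2 := by field_simp
    linarith
  set c : ℝ := ∫ α in Ioo ε 1, Real.sin (π * α) * μ α with hc_def
  have hsinμ_int := GAux.sinmu_integrable hmeas hint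
  have hsub1 : Ioc (0:ℝ) ε ⊆ Ioo (0:ℝ) 1 := fun x hx => ⟨hx.1, lt_of_le_of_lt hx.2 hε1⟩
  have hsub2 : Ioo ε 1 ⊆ Ioo (0:ℝ) 1 := Ioo_subset_Ioo hε0.le le_rfl
  have hsplit : m = (∫ α in Ioc (0:ℝ) ε, Real.sin (π * α) * μ α) + c := by
    rw [hm_def, hc_def, ← Ioc_union_Ioo_eq_Ioo hε0.le hε1,
      setIntegral_union (Set.Ioc_disjoint_Ioi_same.mono_right Set.Ioo_subset_Ioi_self) measurableSet_Ioo
        (hsinμ_int.mono_set hsub1) (hsinμ_int.mono_set hsub2)]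
  have hIocle : (∫ α in Ioc (0:ℝ) ε, Real.sin (π * α) * μ α) ≤ π * ε * M := by
    have step1 : (∫ α in Ioc (0:ℝ) ε, Real.sin (π * α) * μ α)
        ≤ ∫ α in Ioc (0:ℝ) ε, π * ε * μ α := by
      refine setIntegral_mono_on (hsinμ_int.mono_set hsub1)
        ((hint.mono_set hsub1).const_mul _) measurableSet_Ioc fun α hα => ?_
      have hα01 : α ∈ Icc (0:ℝ) 1 := ⟨hα.1.le, le_trans hα.2 (by linarith)⟩
      have hμα := hnn α hα01
      have hs : Real.sin (π * α) ≤ π * ε := by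
        calc Real.sin (π * α) ≤ π * α := Real.sin_le (mul_nonneg hπ.le hα.1.le)
        _ ≤ π * ε := by nlinarith [hα.2]
      exact mul_le_mul_of_nonneg_right hs hμα
    have step2 : (∫ α in Ioc (0:ℝ) ε, π * ε * μ α) = π * ε * ∫ α in Ioc (0:ℝ) ε, μ α :=
      MeasureTheory.integral_const_mul _ _
    have step3 : (∫ α in Ioc (0:ℝ) ε, μ α) ≤ M := by
      rw [hM_def]
      refine setIntegral_mono_set hint ?_ (HasSubset.Subset.eventuallyLE hsub1)
      filter_upwards [ae_restrict_mem measurableSet_Ioo] with α hα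
      exact hnn α ⟨hα.1.le, hα.2.le⟩
    calc (∫ α in Ioc (0:ℝ) ε, Real.sin (π * α) * μ α)
        ≤ π * ε * ∫ α in Ioc (0:ℝ) ε, μ α := by rw [← step2]; exact step1
    _ ≤ π * ε * M := by nlinarith [mul_pos hπ hε0]
  have hc : m / 2 ≤ c := by linarith
  have hcpos : 0 < c := lt_of_lt_of_le (by linarith) hc
  -- lower bounds for S
  have hSlow_tail : ∀ r : ℝ, 1 ≤ r → c * r ^ ε ≤ S r := by
    intro r hr
    have hr0 : (0:ℝ) ≤ r := by linarith
    have hint_r := GAux.integrable_weight hmeas hint hsin_m hsin_b hr0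
    have step1 : (∫ α in Ioo ε 1, r ^ α * Real.sin (π * α) * μ α) ≤ S r := by
      rw [hS]
      refine setIntegral_mono_set hint_r ?_ (HasSubset.Subset.eventuallyLE hsub2)
      filter_upwards [ae_restrict_mem measurableSet_Ioo] with α hα
      exact mul_nonneg (mul_nonneg (Real.rpow_nonneg hr0 α) (hsin_nn α hα))
        (hnn α ⟨hα.1.le, hα.2.le⟩)
    have step2 : (∫ α in Ioo ε 1, r ^ ε * (Real.sin (π * α) * μ α))
        ≤ ∫ α in Ioo ε 1, r ^ α * Real.sin (π * α) * μ α := by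
      refine setIntegral_mono_on ((hsinμ_int.mono_set hsub2).const_mul _)
        (hint_r.mono_set hsub2) measurableSet_Ioo fun α hα => ?_
      have h1 : r ^ ε ≤ r ^ α := Real.rpow_le_rpow_of_exponent_le hr hα.1.le
      have hα' : α ∈ Ioo (0:ℝ) 1 := hsub2 hα
      have h2 : 0 ≤ Real.sin (π * α) * μ α :=
        mul_nonneg (hsin_nn α hα') (hnn α ⟨hα'.1.le, hα'.2.le⟩)
      calc r ^ ε * (Real.sin (π * α) * μ α) ≤ r ^ α * (Real.sin (π * α) * μ α) :=
        mul_le_mul_of_nonneg_right h1 h2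
      _ = r ^ α * Real.sin (π * α) * μ α := by ring
    have step3 : (∫ α in Ioo ε 1, r ^ ε * (Real.sin (π * α) * μ α)) = r ^ ε * c := by
      rw [MeasureTheory.integral_const_mul, hc_def]
    rw [mul_comm]
    linarith
  have hSlow_mid : ∀ r : ℝ, r₀ ≤ r → r₀ * m ≤ S r := by
    intro r hr
    have hr0 : (0:ℝ) ≤ r := le_trans hr₀mem.1.le hr
    have hint_r := GAux.integrable_weight hmeas hint hsin_m hsin_b hr0
    have step2 : (∫ α in Ioo (0:ℝ) 1, r₀ * (Real.sin (π * α) * μ α))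
        ≤ ∫ α in Ioo (0:ℝ) 1, r ^ α * Real.sin (π * α) * μ α := by
      refine setIntegral_mono_on (hsinμ_int.const_mul _) hint_r measurableSet_Ioo
        fun α hα => ?_
      have h1 : r₀ ≤ r ^ α := by
        calc r₀ = r₀ ^ (1:ℝ) := (Real.rpow_one r₀).symm
        _ ≤ r₀ ^ α := Real.rpow_le_rpow_of_exponent_ge hr₀mem.1 hr₀mem.2.le hα.2.le
        _ ≤ r ^ α := Real.rpow_le_rpow hr₀mem.1.le hr hα.1.le
      have h2 : 0 ≤ Real.sin (π * α) * μ α :=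
        mul_nonneg (hsin_nn α hα) (hnn α ⟨hα.1.le, hα.2.le⟩)
      calc r₀ * (Real.sin (π * α) * μ α) ≤ r ^ α * (Real.sin (π * α) * μ α) :=
        mul_le_mul_of_nonneg_right h1 h2
      _ = r ^ α * Real.sin (π * α) * μ α := by ring
    have step3 : (∫ α in Ioo (0:ℝ) 1, r₀ * (Real.sin (π * α) * μ α)) = r₀ * m :=
      MeasureTheory.integral_const_mul _ _
    rw [hS]
    linarith
  -- piece A : (0, r₀]
  have hT := GAux.piece1 hmeas hnn hint hr₀mem.1 hr₀mem.2.le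
  have hTr : ∀ r : ℝ, 0 < r →
      (∫ α in Ioo (0:ℝ) 1, r ^ (α - 1) * (Real.sin (π * α) * μ α)) = S r / r := by
    intro r hr
    rw [hS]
    simp only
    rw [← MeasureTheory.integral_div]
    congr 1
    funext α
    rw [Real.rpow_sub hr, Real.rpow_one]
    ring
  have pieceA : IntegrableOn (fun r => Gfun μ lam r / r) (Ioc 0 r₀) := by
    refine Integrable.mono' (hT.const_mul (4 / lam ^ 2)) hGm.restrict ?_
    filter_upwards [ae_restrict_mem measurableSet_Ioc] with r hr
    have hr0 : 0 < r := hr.1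
    rw [Real.norm_eq_abs, abs_of_nonneg (div_nonneg (hGnn r hr0.le) hr0.le), hTr r hr0]
    have e1 : Gfun μ lam r / r ≤ (4 / lam ^ 2 * S r) / r := by
      gcongr
      exact hGsmall r hr0.le (hCsmall r hr)
    calc Gfun μ lam r / r ≤ (4 / lam ^ 2 * S r) / r := e1
    _ = 4 / lam ^ 2 * (S r / r) := by ring
  -- piece B : (r₀, 1]
  have pieceB : IntegrableOn (fun r => Gfun μ lam r / r) (Ioc r₀ 1) := by
    have hSm : 0 < r₀ * m := mul_pos hr₀mem.1 hm
    refine Integrable.mono' (g := fun _ => 1 / (r₀ * m) / r₀)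
      (integrableOn_const measure_Ioc_lt_top.ne) hGm.restrict ?_
    filter_upwards [ae_restrict_mem measurableSet_Ioc] with r hr
    have hr0 : 0 < r := lt_trans hr₀mem.1 hr.1
    have hS_r : r₀ * m ≤ S r := hSlow_mid r hr.1.le
    have hSpos : 0 < S r := lt_of_lt_of_le hSm hS_r
    rw [Real.norm_eq_abs, abs_of_nonneg (div_nonneg (hGnn r hr0.le) hr0.le)]
    have e1 : Gfun μ lam r / r ≤ (1 / S r) / r := by
      gcongr
      exact hGle1S r hr0.le hSpos
    have t1 : 1 / S r ≤ 1 / (r₀ * m) := one_div_le_one_div_of_le hSm hS_r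
    have t2 : 1 / S r / r ≤ 1 / (r₀ * m) / r := div_le_div_of_nonneg_right t1 hr0.le
    have t3 : 1 / (r₀ * m) / r ≤ 1 / (r₀ * m) / r₀ :=
      div_le_div_of_nonneg_left (by positivity) hr₀mem.1 hr.1.le
    linarith
  -- piece C : (1, ∞)
  have pieceC : IntegrableOn (fun r => Gfun μ lam r / r) (Ioi 1) := by
    have hmaj : IntegrableOn (fun r : ℝ => 1 / c * r ^ (-(1 + ε))) (Ioi 1) :=
      (integrableOn_Ioi_rpow_of_lt (by linarith) zero_lt_one).const_mul _
    refine Integrable.mono' hmaj hGm.restrict ?_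
    filter_upwards [ae_restrict_mem measurableSet_Ioi] with r hr
    have hr0 : (0:ℝ) < r := lt_trans zero_lt_one hr
    have hrε : (0:ℝ) < r ^ ε := Real.rpow_pos_of_pos hr0 ε
    have hS_r : c * r ^ ε ≤ S r := hSlow_tail r hr.le
    have hSpos : 0 < S r := lt_of_lt_of_le (mul_pos hcpos hrε) hS_r
    rw [Real.norm_eq_abs, abs_of_nonneg (div_nonneg (hGnn r hr0.le) hr0.le)]
    have e1 : Gfun μ lam r / r ≤ (1 / S r) / r := by
      gcongr
      exact hGle1S r hr0.le hSpos
    have e2 : (1 / S r) / r ≤ (1 / (c * r ^ ε)) / r :=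
      div_le_div_of_nonneg_right (one_div_le_one_div_of_le (mul_pos hcpos hrε) hS_r) hr0.le
    have e3 : (1 / (c * r ^ ε)) / r = 1 / c * r ^ (-(1 + ε)) := by
      have hx : r ^ (-(1+ε)) = (r * r ^ ε)⁻¹ := by
        rw [Real.rpow_neg hr0.le, Real.rpow_add hr0, Real.rpow_one]
      rw [hx]
      field_simp
    linarith [e3 ▸ e2]
  have hsub : Ioi (0:ℝ) ⊆ Ioc 0 r₀ ∪ (Ioc r₀ 1 ∪ Ioi 1) := by
    intro r hr
    rcases le_or_gt r r₀ with hle | hgt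
    · exact Or.inl ⟨hr, hle⟩
    · rcases le_or_gt r 1 with hle' | hgt'
      · exact Or.inr (Or.inl ⟨hgt, hle'⟩)
      · exact Or.inr (Or.inr hgt')
  exact (pieceA.union (pieceB.union pieceC)).mono_set hsub
end

section
/- Assume λ > 0, μ satisfies (aa), and let γ ∈ (0, 1/2) be such that c₁ := sin(πγ) · ∫_γ^{1−γ} μ(α) dα > 0. Then for every r > 0, G(r) ≤ c₁^{−1} · max{ r^{γ−1}, r^{−γ} }. -/
/-!
Since `(λ + C(r))² ≥ 0`, `G(r) ≤ 1 / S(r)` where `S(r) = ∫₀¹ r^α sin(πα) μ(α) dα`. The integrand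
of `S(r)` is nonnegative, and on `(γ, 1 - γ)` we have `sin(πα) ≥ sin(πγ)` and
`r^α ≥ min(r^γ, r^(1-γ))`, so `S(r) ≥ c₁ min(r^γ, r^(1-γ))`; inverting the minimum gives the maximum.
-/

open MeasureTheory Set Real

lemma sin_pi_mul_le_sin_pi_mul {γ α : ℝ} (hγ : 0 ≤ γ) (hα : α ∈ Icc γ (1 - γ)) :
    sin (π * γ) ≤ sin (π * α) := by
  have hπ := pi_pos
  wlog hα' : α ≤ 1 / 2 generalizing α
  · have hsymm : sin (π * (1 - α)) = sin (π * α) := by rw [mul_one_sub, sin_pi_sub]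
    exact hsymm ▸ this ⟨by linarith [hα.2], by linarith [hα.1]⟩ (by linarith)
  exact sin_le_sin_of_le_of_le_pi_div_two (by nlinarith) (by nlinarith)
    (mul_le_mul_of_nonneg_left hα.1 hπ.le)

lemma min_rpow_le_rpow {r a b x : ℝ} (hr : 0 < r) (hx : x ∈ Icc a b) :
    min (r ^ a) (r ^ b) ≤ r ^ x := by
  rcases le_total 1 r with h | h
  · exact (min_le_left _ _).trans (rpow_le_rpow_of_exponent_le h hx.1)
  · exact (min_le_right _ _).trans (rpow_le_rpow_of_exponent_ge hr h hx.2)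

lemma inv_min_rpow {r : ℝ} (hr : 0 < r) (a b : ℝ) :
    (min (r ^ a) (r ^ b))⁻¹ = max (r ^ (-a)) (r ^ (-b)) := by
  rw [rpow_neg hr.le, rpow_neg hr.le]
  rcases le_total (r ^ a) (r ^ b) with h | h
  · rw [min_eq_left h, max_eq_left (inv_anti₀ (rpow_pos_of_pos hr a) h)]
  · rw [min_eq_right h, max_eq_right (inv_anti₀ (rpow_pos_of_pos hr b) h)]

lemma div_sq_add_sq_le_inv (a : ℝ) {s : ℝ} (hs : 0 < s) : s / (a ^ 2 + s ^ 2) ≤ s⁻¹ := by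
  rw [div_le_iff₀ (by positivity), inv_mul_eq_div, le_div_iff₀ hs]
  nlinarith [sq_nonneg a]

lemma mul_min_rpow_le_integral_rpow_mul_sin_mul {μ : ℝ → ℝ}
    (hnn : ∀ α ∈ Ioo (0 : ℝ) 1, 0 ≤ μ α) (hint : IntegrableOn μ (Ioo 0 1))
    {γ r : ℝ} (hγ : 0 ≤ γ) (hr : 0 < r) :
    (sin (π * γ) * ∫ α in Ioo γ (1 - γ), μ α) * min (r ^ γ) (r ^ (1 - γ)) ≤
      ∫ α in Ioo 0 1, r ^ α * sin (π * α) * μ α := by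
  have hπ := pi_pos
  have hsub : Ioo γ (1 - γ) ⊆ Ioo 0 1 := Ioo_subset_Ioo (by linarith) (by linarith)
  have hf_int : IntegrableOn (fun α => r ^ α * sin (π * α) * μ α) (Ioo 0 1) :=
    (((integrableOn_Icc_iff_integrableOn_Ioo (f := μ)).2 hint).continuousOn_mul
      (by fun_prop (disch := exact hr.ne')) isCompact_Icc).mono_set
      Ioo_subset_Icc_self
  have hf_nn : ∀ α ∈ Ioo (0 : ℝ) 1, 0 ≤ r ^ α * sin (π * α) * μ α := fun α hα =>
    mul_nonneg (mul_nonneg (rpow_pos_of_pos hr α).le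
      (sin_nonneg_of_nonneg_of_le_pi (by nlinarith [hα.1]) (by nlinarith [hα.2]))) (hnn α hα)
  calc (sin (π * γ) * ∫ α in Ioo γ (1 - γ), μ α) * min (r ^ γ) (r ^ (1 - γ))
      = ∫ α in Ioo γ (1 - γ), min (r ^ γ) (r ^ (1 - γ)) * sin (π * γ) * μ α := by
        rw [integral_const_mul]; ring
    _ ≤ ∫ α in Ioo γ (1 - γ), r ^ α * sin (π * α) * μ α := by
        refine setIntegral_mono_on ((hint.mono_set hsub).const_mul _) (hf_int.mono_set hsub)
          measurableSet_Ioo fun α hα => ?_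
        have hαI : α ∈ Icc γ (1 - γ) := Ioo_subset_Icc_self hα
        gcongr
        · exact hnn α (hsub hα)
        · exact sin_nonneg_of_nonneg_of_le_pi (by positivity) (by nlinarith [hα.1, hα.2])
        · exact min_rpow_le_rpow hr hαI
        · exact sin_pi_mul_le_sin_pi_mul hγ hαI
    _ ≤ ∫ α in Ioo 0 1, r ^ α * sin (π * α) * μ α :=
        setIntegral_mono_set hf_int (ae_restrict_of_forall_mem measurableSet_Ioo hf_nn)
          hsub.eventuallyLE

theorem G_upper_bound_general (μ : ℝ → ℝ) (lam : ℝ)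
    (hnn : ∀ α ∈ Icc (0:ℝ) 1, 0 ≤ μ α)
    (hint : IntegrableOn μ (Ioo 0 1))
    (γ : ℝ) (hγ : γ ∈ Ioo (0:ℝ) (1/2))
    (c₁ : ℝ) (hc₁ : c₁ = Real.sin (π * γ) * ∫ α in Ioo γ (1 - γ), μ α)
    (hc₁pos : 0 < c₁) :
    ∀ r > 0, Gfun μ lam r ≤ c₁⁻¹ * max (r ^ (γ - 1)) (r ^ (-γ)) := by
  intro r hr
  have hS : c₁ * min (r ^ γ) (r ^ (1 - γ)) ≤ ∫ α in Ioo 0 1, r ^ α * sin (π * α) * μ α :=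
    hc₁ ▸ mul_min_rpow_le_integral_rpow_mul_sin_mul
      (fun α hα => hnn α (Ioo_subset_Icc_self hα)) hint hγ.1.le hr
  have hc₁m : 0 < c₁ * min (r ^ γ) (r ^ (1 - γ)) :=
    mul_pos hc₁pos (lt_min (rpow_pos_of_pos hr _) (rpow_pos_of_pos hr _))
  calc Gfun μ lam r ≤ (∫ α in Ioo 0 1, r ^ α * sin (π * α) * μ α)⁻¹ :=
        div_sq_add_sq_le_inv _ (hc₁m.trans_le hS)
    _ ≤ (c₁ * min (r ^ γ) (r ^ (1 - γ)))⁻¹ := inv_anti₀ hc₁m hS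
    _ = c₁⁻¹ * max (r ^ (γ - 1)) (r ^ (-γ)) := by
        rw [mul_inv, inv_min_rpow hr, max_comm, neg_sub]

/-- estimate (g4): if `γ ∈ (0,1/2)` and
`c₁ = sin(πγ) ∫_γ^{1-γ} μ > 0`, then `G(r) ≤ c₁⁻¹ max{r^{γ-1}, r^{-γ}}` for all `r > 0`. -/
theorem G_upper_bound (μ : ℝ → ℝ) (lam : ℝ) (hlam : 0 < lam)
    (hmeas : Measurable μ)
    (hnn : ∀ α ∈ Icc (0:ℝ) 1, 0 ≤ μ α)
    (hint : IntegrableOn μ (Ioo 0 1))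
    (hpos : 0 < ∫ α in Ioo (0:ℝ) 1, μ α)
    (γ : ℝ) (hγ : γ ∈ Ioo (0:ℝ) (1/2))
    (c₁ : ℝ) (hc₁ : c₁ = Real.sin (π * γ) * ∫ α in Ioo γ (1 - γ), μ α)
    (hc₁pos : 0 < c₁) :
    ∀ r > 0, Gfun μ lam r ≤ c₁⁻¹ * max (r ^ (γ - 1)) (r ^ (-γ)) :=
  G_upper_bound_general μ lam hnn hint γ hγ c₁ hc₁ hc₁pos
end

section
/- Assume λ > 0, v₀ ∈ ℝ, and μ satisfies (aa) and (f1), and let v(t) = v₀ (λ/π) ∫₀^∞ (e^{−rt}/r) G(r) dr. Then there exist constants c₀ > 0 (depending only on v₀, λ, c_μ and c̄_μ) and T₀ > e such that |v(t)| ≤ c₀ / ln t for all t ≥ T₀. -/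
open MeasureTheory Set Real


/-- Integrability of `α ↦ r^α * f α * μ α` on `(0,1)` for bounded measurable `f`. -/
lemma aux_integrable {μ : ℝ → ℝ} (hmeas : Measurable μ) (hint : IntegrableOn μ (Ioo 0 1))
    {f : ℝ → ℝ} (hf : Measurable f) (hfb : ∀ x, |f x| ≤ 1) {r : ℝ} (hr : 0 < r) :
    IntegrableOn (fun α => r ^ α * f α * μ α) (Ioo (0:ℝ) 1) := by
  refine Integrable.mono' (g := fun α => max 1 r * |μ α|) ((hint.abs).const_mul _) ?_ ?_
  · exact ((measurable_const.pow measurable_id').mul hf |>.mul hmeas).aestronglyMeasurable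
  · refine (ae_restrict_iff' measurableSet_Ioo).2 (ae_of_all _ fun α hα => ?_)
    have h1 : r ^ α ≤ max 1 r := by
      rcases le_or_gt r 1 with h | h
      · exact le_max_of_le_left (Real.rpow_le_one hr.le h hα.1.le)
      · exact le_max_of_le_right (by
          calc r ^ α ≤ r ^ (1:ℝ) := Real.rpow_le_rpow_of_exponent_le h.le hα.2.le
          _ = r := Real.rpow_one r)
    have h0 : 0 ≤ r ^ α := Real.rpow_nonneg hr.le α
    calc ‖r ^ α * f α * μ α‖ = r ^ α * |f α| * |μ α| := by
          rw [norm_eq_abs, abs_mul, abs_mul, abs_of_nonneg h0]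
      _ ≤ max 1 r * 1 * |μ α| := by
          refine mul_le_mul_of_nonneg_right ?_ (abs_nonneg _)
          exact mul_le_mul h1 (hfb α) (abs_nonneg _) (le_trans zero_le_one (le_max_left 1 r))
      _ = max 1 r * |μ α| := by ring


lemma inner_bound {α t : ℝ} (hα : α ∈ Ioo (0:ℝ) 1) (ht : 1 ≤ t) :
    ∫⁻ r in Ioi (0:ℝ), ENNReal.ofReal (Real.exp (-(t*r)) * r ^ (α-1)) ≤
      ENNReal.ofReal (2/α * t ^ (-α)) := by
  have ht0 : (0:ℝ) < t := lt_of_lt_of_le zero_lt_one ht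
  have hb : (0:ℝ) < t⁻¹ := inv_pos.2 ht0
  have hα0 := hα.1
  have hα1 := hα.2
  have hdisj : Disjoint (Ioo (0:ℝ) t⁻¹) (Ici t⁻¹) :=
    Set.disjoint_left.mpr fun x hx hx' => lt_irrefl x (lt_of_lt_of_le hx.2 hx')
  have htneg : (0:ℝ) ≤ t ^ (-α) / α := by positivity
  rw [← Set.Ioo_union_Ici_eq_Ioi hb, lintegral_union measurableSet_Ici hdisj]
  have part1 : ∫⁻ r in Ioo (0:ℝ) t⁻¹, ENNReal.ofReal (Real.exp (-(t*r)) * r ^ (α-1)) ≤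
      ENNReal.ofReal (t ^ (-α) / α) := by
    have hmono : ∫⁻ r in Ioo (0:ℝ) t⁻¹, ENNReal.ofReal (Real.exp (-(t*r)) * r ^ (α-1)) ≤
        ∫⁻ r in Ioo (0:ℝ) t⁻¹, ENNReal.ofReal (r ^ (α-1)) := by
      refine lintegral_mono_ae ((ae_restrict_iff' measurableSet_Ioo).2 (ae_of_all _ fun r hr => ?_))
      refine ENNReal.ofReal_le_ofReal ?_
      have h1 : Real.exp (-(t*r)) ≤ 1 := by
        rw [Real.exp_le_one_iff]
        nlinarith [hr.1]
      nlinarith [Real.rpow_nonneg (le_of_lt hr.1) (α-1), Real.exp_pos (-(t*r))]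
    refine le_trans hmono ?_
    have hi : IntegrableOn (fun r : ℝ => r ^ (α-1)) (Ioo 0 t⁻¹) := by
      have := (intervalIntegrable_iff_integrableOn_Ioc_of_le hb.le).1
        (intervalIntegral.intervalIntegrable_rpow' (by linarith : (-1:ℝ) < α-1))
      exact this.mono_set Ioo_subset_Ioc_self
    have hval : ∫ r in Ioo (0:ℝ) t⁻¹, r ^ (α-1) = t ^ (-α) / α := by
      rw [← integral_Ioc_eq_integral_Ioo, ← intervalIntegral.integral_of_le hb.le,
        integral_rpow (Or.inl (by linarith : (-1:ℝ) < α-1))]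
      rw [Real.zero_rpow (by linarith : α - 1 + 1 ≠ 0)]
      rw [show α - 1 + 1 = α by ring, Real.inv_rpow ht0.le, ← Real.rpow_neg ht0.le]
      ring
    rw [← ofReal_integral_eq_lintegral_ofReal hi
      ((ae_restrict_iff' measurableSet_Ioo).2 (ae_of_all _ fun r hr =>
        Real.rpow_nonneg (le_of_lt hr.1) _)), hval]
  have part2 : ∫⁻ r in Ici t⁻¹, ENNReal.ofReal (Real.exp (-(t*r)) * r ^ (α-1)) ≤
      ENNReal.ofReal (t ^ (-α) / α) := by
    have hmono : ∫⁻ r in Ici t⁻¹, ENNReal.ofReal (Real.exp (-(t*r)) * r ^ (α-1)) ≤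
        ∫⁻ r in Ici t⁻¹, ENNReal.ofReal (t ^ (1-α) * Real.exp (-(t*r))) := by
      refine lintegral_mono_ae ((ae_restrict_iff' measurableSet_Ici).2 (ae_of_all _ fun r hr => ?_))
      refine ENNReal.ofReal_le_ofReal ?_
      have h1 : r ^ (α-1) ≤ t ^ (1-α) := by
        have := Real.rpow_le_rpow_of_nonpos hb hr (by linarith : α - 1 ≤ 0)
        calc r ^ (α-1) ≤ (t⁻¹) ^ (α-1) := this
          _ = t ^ (1-α) := by
            rw [Real.inv_rpow ht0.le, ← Real.rpow_neg ht0.le, neg_sub]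
      calc Real.exp (-(t*r)) * r ^ (α-1) ≤ Real.exp (-(t*r)) * t ^ (1-α) := by
            exact mul_le_mul_of_nonneg_left h1 (Real.exp_pos _).le
        _ = t ^ (1-α) * Real.exp (-(t*r)) := by ring
    refine le_trans hmono ?_
    have hIci : ∫⁻ r in Ici t⁻¹, ENNReal.ofReal (t ^ (1-α) * Real.exp (-(t*r))) =
        ∫⁻ r in Ioi t⁻¹, ENNReal.ofReal (t ^ (1-α) * Real.exp (-(t*r))) :=
      (setLIntegral_congr Ioi_ae_eq_Ici).symm
    rw [hIci]
    have hi : IntegrableOn (fun r : ℝ => t ^ (1-α) * Real.exp (-(t*r))) (Ioi t⁻¹) := by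
      have : IntegrableOn (fun r : ℝ => Real.exp (-t*r)) (Ioi t⁻¹) :=
        exp_neg_integrableOn_Ioi _ ht0
      refine (this.const_mul (t ^ (1-α))).congr (ae_of_all _ fun r => by simp [neg_mul])
    rw [← ofReal_integral_eq_lintegral_ofReal hi
      (ae_of_all _ fun r => by positivity)]
    refine ENNReal.ofReal_le_ofReal ?_
    have hval : ∫ r in Ioi t⁻¹, t ^ (1-α) * Real.exp (-(t*r)) =
        t ^ (1-α) * (t⁻¹ * Real.exp (-1)) := by
      rw [MeasureTheory.integral_const_mul]
      congr 1
      have := MeasureTheory.integral_comp_mul_left_Ioi (fun y => Real.exp (-y)) t⁻¹ ht0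
      rw [mul_inv_cancel₀ ht0.ne'] at this
      rw [this, smul_eq_mul]
      rw [integral_exp_neg_Ioi]
    rw [hval]
    have h2 : t ^ (1-α) * t⁻¹ = t ^ (-α) := by
      rw [← Real.rpow_neg_one t, ← Real.rpow_add ht0]
      norm_num
      ring_nf
    calc t ^ (1-α) * (t⁻¹ * Real.exp (-1)) ≤ t ^ (1-α) * (t⁻¹ * 1) := by
          have he : Real.exp (-1) ≤ 1 := by
            rw [Real.exp_le_one_iff]; norm_num
          have : (0:ℝ) ≤ t ^ (1-α) * t⁻¹ := by positivity
          nlinarith [Real.rpow_nonneg ht0.le (1-α), hb.le]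
      _ = t ^ (-α) := by rw [mul_one, h2]
      _ ≤ t ^ (-α) / α := by
          rw [le_div_iff₀ hα0]
          nlinarith [Real.rpow_nonneg ht0.le (-α)]
  calc _ ≤ ENNReal.ofReal (t ^ (-α) / α) + ENNReal.ofReal (t ^ (-α) / α) :=
        add_le_add part1 part2
    _ = ENNReal.ofReal (2/α * t ^ (-α)) := by
        rw [← ENNReal.ofReal_add htneg htneg]
        congr 1
        field_simp
        ring


/-- The function `v` from formula (postacv), the solution of `D^(μ)v + λv = 0`, `v(0)=v₀`. -/
noncomputable def vfun (μ : ℝ → ℝ) (lam v₀ : ℝ) (t : ℝ) : ℝ :=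
  v₀ * (lam / π) * ∫ r in Ioi (0:ℝ), (Real.exp (-r * t) / r) * Gfun μ lam r

set_option maxHeartbeats 2000000 in
/-- estimate (f10): under (aa) and (f1), `|v(t)| ≤ c₀ / ln t`
for `t` large enough. -/
theorem v_log_decay (μ : ℝ → ℝ) (lam v₀ : ℝ) (hlam : 0 < lam)
    (hmeas : Measurable μ)
    (hnn : ∀ α ∈ Icc (0:ℝ) 1, 0 ≤ μ α)
    (hint : IntegrableOn μ (Ioo 0 1))
    (hpos : 0 < ∫ α in Ioo (0:ℝ) 1, μ α)
    (hf1 : IntegrableOn (fun α => μ α / α) (Ioo 0 1)) :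
    ∃ c₀ > 0, ∃ T₀ > Real.exp 1, ∀ t ≥ T₀,
      |vfun μ lam v₀ t| ≤ c₀ / Real.log t := by
  -- basic positivity facts
  have hμnn : ∀ α ∈ Ioo (0:ℝ) 1, 0 ≤ μ α := fun α hα => hnn α (Ioo_subset_Icc_self hα)
  have hsin_nn : ∀ α ∈ Ioo (0:ℝ) 1, 0 ≤ Real.sin (π * α) := fun α hα =>
    Real.sin_nonneg_of_nonneg_of_le_pi (mul_nonneg Real.pi_pos.le hα.1.le)
      (by nlinarith [Real.pi_pos, hα.2])
  have hsin_pos : ∀ α ∈ Ioo (0:ℝ) 1, 0 < Real.sin (π * α) := fun α hα =>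
    Real.sin_pos_of_pos_of_lt_pi (by nlinarith [Real.pi_pos, hα.1])
      (by nlinarith [Real.pi_pos, hα.2])
  set c : ℝ := ∫ α in Ioo (0:ℝ) 1, μ α with hc
  set cb : ℝ := ∫ α in Ioo (0:ℝ) 1, μ α / α with hcb
  have hcb_ge : c ≤ cb := by
    refine setIntegral_mono_on hint hf1 measurableSet_Ioo fun α hα => ?_
    rw [le_div_iff₀ hα.1]
    nlinarith [hμnn α hα, hα.1, hα.2]
  have hcb_pos : 0 < cb := lt_of_lt_of_le hpos hcb_ge
  -- integrability of sin * μ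
  have hsinμ_int : IntegrableOn (fun α => Real.sin (π * α) * μ α) (Ioo (0:ℝ) 1) := by
    refine Integrable.mono' hint.abs
      (((measurable_id'.const_mul π).sin.mul hmeas).aestronglyMeasurable) ?_
    refine (ae_restrict_iff' measurableSet_Ioo).2 (ae_of_all _ fun α hα => ?_)
    rw [norm_eq_abs, abs_mul]
    calc |Real.sin (π * α)| * |μ α| ≤ 1 * |μ α| :=
          mul_le_mul_of_nonneg_right (abs_le.2 ⟨Real.neg_one_le_sin _, Real.sin_le_one _⟩)
            (abs_nonneg _)
      _ = |μ α| := one_mul _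
  set s : ℝ := ∫ α in Ioo (0:ℝ) 1, Real.sin (π * α) * μ α with hs
  have hs_pos : 0 < s := by
    rw [hs, setIntegral_pos_iff_support_of_nonneg_ae
      ((ae_restrict_iff' measurableSet_Ioo).2 (ae_of_all _ fun α hα =>
        mul_nonneg (hsin_nn α hα) (hμnn α hα))) hsinμ_int]
    have h0 : 0 < volume (Function.support μ ∩ Ioo (0:ℝ) 1) := by
      rw [hc] at hpos
      rw [setIntegral_pos_iff_support_of_nonneg_ae
        ((ae_restrict_iff' measurableSet_Ioo).2 (ae_of_all _ fun α hα => hμnn α hα)) hint] at hpos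
      simpa using hpos
    refine lt_of_lt_of_le h0 (measure_mono ?_)
    intro α hα
    refine ⟨?_, hα.2⟩
    have : Real.sin (π * α) ≠ 0 := (hsin_pos α hα.2).ne'
    simp only [Function.mem_support] at hα ⊢
    exact mul_ne_zero this hα.1
  -- the constants δ and r₀
  set δ : ℝ := min 1 (lam / (4 * cb)) with hδdef
  have hδ_pos : 0 < δ := lt_min one_pos (by positivity)
  have hδ_le1 : δ ≤ 1 := min_le_left _ _
  have hδcb : δ * cb ≤ lam / 4 := by
    have h1 : δ ≤ lam / (4 * cb) := min_le_right _ _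
    rw [le_div_iff₀ (by positivity : (0:ℝ) < 4 * cb)] at h1
    nlinarith
  set x : ℝ := min (1/2) (lam / (4 * c + 4)) with hxdef
  have hc_pos : 0 < c := hpos
  have hx_pos : 0 < x := lt_min (by norm_num) (by positivity)
  have hx_lt1 : x < 1 := lt_of_le_of_lt (min_le_left _ _) (by norm_num)
  have hxc : x * c ≤ lam / 4 := by
    have h1 : x ≤ lam / (4 * c + 4) := min_le_right _ _
    have h2 : x * c ≤ lam / (4 * c + 4) * c := mul_le_mul_of_nonneg_right h1 hc_pos.le
    refine le_trans h2 ?_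
    rw [div_mul_eq_mul_div, div_le_div_iff₀ (by positivity) (by norm_num)]
    nlinarith
  set r₀ : ℝ := x ^ (δ⁻¹) with hr₀def
  have hr₀_pos : 0 < r₀ := Real.rpow_pos_of_pos hx_pos _
  have hr₀_lt1 : r₀ < 1 := Real.rpow_lt_one hx_pos.le hx_lt1 (by positivity)
  have hr₀δ : r₀ ^ δ = x := by
    rw [hr₀def, ← Real.rpow_mul hx_pos.le, inv_mul_cancel₀ hδ_pos.ne', Real.rpow_one]
  -- integrability of r^α * f α * μ α
  have hNint : ∀ r : ℝ, 0 < r →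
      IntegrableOn (fun α => r ^ α * Real.sin (π * α) * μ α) (Ioo (0:ℝ) 1) := fun r hr =>
    aux_integrable hmeas hint (measurable_id'.const_mul π).sin
      (fun y => abs_le.2 ⟨Real.neg_one_le_sin _, Real.sin_le_one _⟩) hr
  have hCint : ∀ r : ℝ, 0 < r →
      IntegrableOn (fun α => r ^ α * Real.cos (π * α) * μ α) (Ioo (0:ℝ) 1) := fun r hr =>
    aux_integrable hmeas hint (measurable_id'.const_mul π).cos
      (fun y => abs_le.2 ⟨Real.neg_one_le_cos _, Real.cos_le_one _⟩) hr
  have hrμint : ∀ r : ℝ, 0 < r →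
      IntegrableOn (fun α => r ^ α * μ α) (Ioo (0:ℝ) 1) := by
    intro r hr
    have := aux_integrable hmeas hint (f := fun _ => (1:ℝ)) measurable_const
      (fun y => by norm_num) hr
    exact this.congr_fun (fun α _ => by ring) measurableSet_Ioo
  set N : ℝ → ℝ := fun r => ∫ α in Ioo (0:ℝ) 1, r ^ α * Real.sin (π * α) * μ α with hNdef
  set C : ℝ → ℝ := fun r => ∫ α in Ioo (0:ℝ) 1, r ^ α * Real.cos (π * α) * μ α with hCdef
  have hGdef : ∀ r : ℝ, Gfun μ lam r = N r / ((lam + C r) ^ 2 + N r ^ 2) := fun r => rfl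
  have hNnn : ∀ r : ℝ, 0 < r → 0 ≤ N r := by
    intro r hr
    refine setIntegral_nonneg measurableSet_Ioo fun α hα => ?_
    exact mul_nonneg (mul_nonneg (Real.rpow_nonneg hr.le α) (hsin_nn α hα)) (hμnn α hα)
  have hGnn : ∀ r : ℝ, 0 < r → 0 ≤ Gfun μ lam r := by
    intro r hr
    rw [hGdef r]
    exact div_nonneg (hNnn r hr) (by positivity)
  have hNge : ∀ r : ℝ, r₀ ≤ r → r₀ * s ≤ N r := by
    intro r hr
    have hrpos : 0 < r := lt_of_lt_of_le hr₀_pos hr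
    have : r₀ * s = ∫ α in Ioo (0:ℝ) 1, r₀ * (Real.sin (π * α) * μ α) := by
      rw [MeasureTheory.integral_const_mul]
    rw [this, hNdef]
    refine setIntegral_mono_on (hsinμ_int.const_mul r₀) (hNint r hrpos)
      measurableSet_Ioo fun α hα => ?_
    have hra : r₀ ≤ r ^ α := by
      rcases le_or_gt r 1 with h | h
      · calc r₀ ≤ r := hr
          _ = r ^ (1:ℝ) := (Real.rpow_one r).symm
          _ ≤ r ^ α := Real.rpow_le_rpow_of_exponent_ge hrpos h hα.2.le
      · calc r₀ ≤ 1 := hr₀_lt1.le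
          _ ≤ r ^ α := Real.one_le_rpow h.le hα.1.le
    rw [← mul_assoc]
    exact mul_le_mul_of_nonneg_right (mul_le_mul_of_nonneg_right hra (hsin_nn α hα)) (hμnn α hα)
  have hCabs : ∀ r : ℝ, 0 < r → r ≤ r₀ → |C r| ≤ lam / 2 := by
    intro r hr hrr₀
    have hr1 : r ≤ 1 := le_trans hrr₀ hr₀_lt1.le
    have step1 : |C r| ≤ ∫ α in Ioo (0:ℝ) 1, r ^ α * μ α := by
      have h0 : |C r| ≤ ∫ α in Ioo (0:ℝ) 1, ‖r ^ α * Real.cos (π * α) * μ α‖ := by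
        rw [hCdef, ← Real.norm_eq_abs]
        exact norm_integral_le_integral_norm _
      refine le_trans h0 ?_
      refine setIntegral_mono_on ((hCint r hr).norm) (hrμint r hr) measurableSet_Ioo
        fun α hα => ?_
      rw [norm_eq_abs, abs_mul, abs_mul, abs_of_nonneg (Real.rpow_nonneg hr.le α),
        abs_of_nonneg (hμnn α hα)]
      refine mul_le_mul_of_nonneg_right ?_ (hμnn α hα)
      calc r ^ α * |Real.cos (π * α)| ≤ r ^ α * 1 :=
            mul_le_mul_of_nonneg_left (abs_le.2 ⟨Real.neg_one_le_cos _, Real.cos_le_one _⟩)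
              (Real.rpow_nonneg hr.le α)
        _ = r ^ α := mul_one _
    have hsplit : Ioo (0:ℝ) 1 = Ioo (0:ℝ) δ ∪ Ico δ 1 :=
      (Set.Ioo_union_Ico_eq_Ioo hδ_pos hδ_le1).symm
    have hdisj : Disjoint (Ioo (0:ℝ) δ) (Ico δ 1) :=
      Set.disjoint_left.mpr fun y hy hy' => lt_irrefl y (lt_of_lt_of_le hy.2 hy'.1)
    have step2 : ∫ α in Ioo (0:ℝ) 1, r ^ α * μ α =
        (∫ α in Ioo (0:ℝ) δ, r ^ α * μ α) + ∫ α in Ico δ 1, r ^ α * μ α := by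
      rw [hsplit]
      exact setIntegral_union hdisj measurableSet_Ico
        ((hrμint r hr).mono_set (by rw [hsplit]; exact subset_union_left))
        ((hrμint r hr).mono_set (by rw [hsplit]; exact subset_union_right))
    have sub1 : Ioo (0:ℝ) δ ⊆ Ioo (0:ℝ) 1 := Ioo_subset_Ioo le_rfl hδ_le1
    have sub2 : Ico δ 1 ⊆ Ioo (0:ℝ) 1 := fun y hy => ⟨lt_of_lt_of_le hδ_pos hy.1, hy.2⟩
    have bound1 : ∫ α in Ioo (0:ℝ) δ, r ^ α * μ α ≤ lam / 4 := by
      have h1 : ∫ α in Ioo (0:ℝ) δ, r ^ α * μ α ≤ ∫ α in Ioo (0:ℝ) δ, δ * (μ α / α) := by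
        refine setIntegral_mono_on ((hrμint r hr).mono_set sub1)
          (IntegrableOn.mono_set (hf1.const_mul δ) sub1) measurableSet_Ioo fun α hα => ?_
        have hα1 : α ∈ Ioo (0:ℝ) 1 := sub1 hα
        have hle : r ^ α ≤ 1 := Real.rpow_le_one hr.le hr1 hα1.1.le
        have hμα : 0 ≤ μ α := hμnn α hα1
        calc r ^ α * μ α ≤ 1 * μ α := mul_le_mul_of_nonneg_right hle hμα
          _ = μ α / α * α := by rw [one_mul, div_mul_cancel₀ _ (ne_of_gt hα1.1)]
          _ ≤ μ α / α * δ := mul_le_mul_of_nonneg_left hα.2.le (div_nonneg hμα hα1.1.le)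
          _ = δ * (μ α / α) := by ring
      have h2 : ∫ α in Ioo (0:ℝ) δ, δ * (μ α / α) ≤ ∫ α in Ioo (0:ℝ) 1, δ * (μ α / α) := by
        refine setIntegral_mono_set (hf1.const_mul δ) ?_ (HasSubset.Subset.eventuallyLE sub1)
        refine (ae_restrict_iff' measurableSet_Ioo).2 (ae_of_all _ fun α hα => ?_)
        exact mul_nonneg hδ_pos.le (div_nonneg (hμnn α hα) hα.1.le)
      have h3 : ∫ α in Ioo (0:ℝ) 1, δ * (μ α / α) = δ * cb := by
        rw [hcb, MeasureTheory.integral_const_mul]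
      linarith [hδcb]
    have bound2 : ∫ α in Ico δ 1, r ^ α * μ α ≤ lam / 4 := by
      have h1 : ∫ α in Ico δ 1, r ^ α * μ α ≤ ∫ α in Ico δ 1, x * μ α := by
        refine setIntegral_mono_on ((hrμint r hr).mono_set sub2)
          (IntegrableOn.mono_set (hint.const_mul x) sub2) measurableSet_Ico fun α hα => ?_
        have hα1 : α ∈ Ioo (0:ℝ) 1 := sub2 hα
        have hle : r ^ α ≤ x := by
          calc r ^ α ≤ r ^ δ := Real.rpow_le_rpow_of_exponent_ge hr hr1 hα.1
            _ ≤ r₀ ^ δ := Real.rpow_le_rpow hr.le hrr₀ hδ_pos.le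
            _ = x := hr₀δ
        exact mul_le_mul_of_nonneg_right hle (hμnn α hα1)
      have h2 : ∫ α in Ico δ 1, x * μ α ≤ ∫ α in Ioo (0:ℝ) 1, x * μ α := by
        refine setIntegral_mono_set (hint.const_mul x) ?_ (HasSubset.Subset.eventuallyLE sub2)
        refine (ae_restrict_iff' measurableSet_Ioo).2 (ae_of_all _ fun α hα => ?_)
        exact mul_nonneg hx_pos.le (hμnn α hα)
      have h3 : ∫ α in Ioo (0:ℝ) 1, x * μ α = x * c := by
        rw [hc, MeasureTheory.integral_const_mul]
      linarith [hxc]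
    calc |C r| ≤ ∫ α in Ioo (0:ℝ) 1, r ^ α * μ α := step1
      _ = _ := step2
      _ ≤ lam / 4 + lam / 4 := add_le_add bound1 bound2
      _ = lam / 2 := by ring
  have hGhead : ∀ r : ℝ, 0 < r → r ≤ r₀ → Gfun μ lam r ≤ 4 / lam ^ 2 * N r := by
    intro r hr hrr₀
    have hC := hCabs r hr hrr₀
    have hden : lam ^ 2 / 4 ≤ (lam + C r) ^ 2 + N r ^ 2 := by
      have h1 : lam / 2 ≤ lam + C r := by
        have := abs_le.1 hC
        linarith [this.1]
      nlinarith [sq_nonneg (N r)]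
    rw [hGdef r]
    calc N r / ((lam + C r) ^ 2 + N r ^ 2) ≤ N r / (lam ^ 2 / 4) := by
          refine div_le_div_of_nonneg_left (hNnn r hr) (by positivity) hden
      _ = 4 / lam ^ 2 * N r := by field_simp
  have hGtail : ∀ r : ℝ, r₀ ≤ r → Gfun μ lam r ≤ 1 / (r₀ * s) := by
    intro r hr
    have hrpos : 0 < r := lt_of_lt_of_le hr₀_pos hr
    have hN := hNge r hr
    have hN0 : 0 < N r := lt_of_lt_of_le (by positivity) hN
    rw [hGdef r]
    calc N r / ((lam + C r) ^ 2 + N r ^ 2) ≤ N r / N r ^ 2 := by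
          refine div_le_div_of_nonneg_left hN0.le (by positivity) ?_
          nlinarith [sq_nonneg (lam + C r)]
      _ = 1 / N r := by rw [sq, div_mul_eq_div_div, div_self hN0.ne']
      _ ≤ 1 / (r₀ * s) := by
          refine one_div_le_one_div_of_le (by positivity) hN
  -- final constants
  set K : ℝ := 1 / (r₀ ^ 2 * s) with hK
  have hK_pos : 0 < K := by positivity
  set A : ℝ := 8 * π * cb / lam ^ 2 with hA
  have hA_pos : 0 < A := by positivity
  refine ⟨|v₀| * (lam / π) * (A + K) + 1, by positivity, Real.exp 1 + 1,
    by linarith [Real.exp_pos 1], fun t ht => ?_⟩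
  have ht1 : 1 ≤ t := by linarith [Real.exp_pos 1]
  have ht0 : 0 < t := lt_of_lt_of_le zero_lt_one ht1
  have hexpt : Real.exp 1 ≤ t := by linarith
  have hlog1 : 1 ≤ Real.log t := by
    rw [Real.le_log_iff_exp_le ht0]; exact hexpt
  have hlogpos : 0 < Real.log t := lt_of_lt_of_le zero_lt_one hlog1
  have hloglet : Real.log t ≤ t := by linarith [Real.log_le_sub_one_of_pos ht0]
  -- the key lintegral estimate
  have key : ∫⁻ r in Ioi (0:ℝ), ENNReal.ofReal ‖Real.exp (-r * t) / r * Gfun μ lam r‖ ≤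
      ENNReal.ofReal ((A + K) / Real.log t) := by
    have hsplitr : Ioi (0:ℝ) = Ioo 0 r₀ ∪ Ici r₀ := (Set.Ioo_union_Ici_eq_Ioi hr₀_pos).symm
    have hdisjr : Disjoint (Ioo (0:ℝ) r₀) (Ici r₀) :=
      Set.disjoint_left.mpr fun y hy hy' => lt_irrefl y (lt_of_lt_of_le hy.2 hy')
    rw [hsplitr, lintegral_union measurableSet_Ici hdisjr]
    have head : ∫⁻ r in Ioo (0:ℝ) r₀, ENNReal.ofReal ‖Real.exp (-r * t) / r * Gfun μ lam r‖ ≤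
        ENNReal.ofReal (A / Real.log t) := by
      have hstep : ∀ r ∈ Ioo (0:ℝ) r₀,
          ENNReal.ofReal ‖Real.exp (-r * t) / r * Gfun μ lam r‖ ≤
          ∫⁻ α in Ioo (0:ℝ) 1, ENNReal.ofReal ((4 / lam ^ 2 * (Real.sin (π * α) * μ α)) *
            (Real.exp (-(t * r)) * r ^ (α - 1))) := by
        intro r hr
        have hrpos := hr.1
        have hbound : ‖Real.exp (-r * t) / r * Gfun μ lam r‖ ≤
            Real.exp (-(t * r)) / r * (4 / lam ^ 2 * N r) := by
          rw [Real.norm_eq_abs, abs_of_nonneg (mul_nonneg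
            (div_nonneg (Real.exp_pos _).le hrpos.le) (hGnn r hrpos)),
            show -r * t = -(t * r) by ring]
          exact mul_le_mul_of_nonneg_left (hGhead r hrpos hr.2.le) (by positivity)
        refine le_trans (ENNReal.ofReal_le_ofReal hbound) ?_
        have hcongr : ∀ α ∈ Ioo (0:ℝ) 1,
            (Real.exp (-(t * r)) / r * (4 / lam ^ 2)) * (r ^ α * Real.sin (π * α) * μ α) =
            (4 / lam ^ 2 * (Real.sin (π * α) * μ α)) * (Real.exp (-(t * r)) * r ^ (α - 1)) := by
          intro α hα
          rw [Real.rpow_sub hrpos, Real.rpow_one]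
          field_simp
        have hInt : IntegrableOn (fun α => (4 / lam ^ 2 * (Real.sin (π * α) * μ α)) *
            (Real.exp (-(t * r)) * r ^ (α - 1))) (Ioo (0:ℝ) 1) := by
          refine IntegrableOn.congr_fun
            ((hNint r hrpos).const_mul (Real.exp (-(t * r)) / r * (4 / lam ^ 2)))
            (fun α hα => hcongr α hα) measurableSet_Ioo
        have hNonneg : 0 ≤ᵐ[volume.restrict (Ioo (0:ℝ) 1)]
            fun α => (4 / lam ^ 2 * (Real.sin (π * α) * μ α)) *
              (Real.exp (-(t * r)) * r ^ (α - 1)) := by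
          refine (ae_restrict_iff' measurableSet_Ioo).2 (ae_of_all _ fun α hα => ?_)
          have := hsin_nn α hα
          have := hμnn α hα
          positivity
        have hNr : Real.exp (-(t * r)) / r * (4 / lam ^ 2 * N r) =
            ∫ α in Ioo (0:ℝ) 1, (4 / lam ^ 2 * (Real.sin (π * α) * μ α)) *
              (Real.exp (-(t * r)) * r ^ (α - 1)) := by
          rw [← setIntegral_congr_fun measurableSet_Ioo hcongr, hNdef,
            MeasureTheory.integral_const_mul]
          ring
        rw [hNr, ofReal_integral_eq_lintegral_ofReal hInt hNonneg]
      have hFmeas : Measurable (fun p : ℝ × ℝ => ENNReal.ofReal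
          ((4 / lam ^ 2 * (Real.sin (π * p.2) * μ p.2)) *
            (Real.exp (-(t * p.1)) * p.1 ^ (p.2 - 1)))) := by
        refine ENNReal.measurable_ofReal.comp (Measurable.mul ?_ ?_)
        · exact measurable_const.mul ((measurable_snd.const_mul π).sin.mul
            (hmeas.comp measurable_snd))
        · exact ((measurable_fst.const_mul t).neg.exp).mul
            (measurable_fst.pow (measurable_snd.sub measurable_const))
      calc ∫⁻ r in Ioo (0:ℝ) r₀, ENNReal.ofReal ‖Real.exp (-r * t) / r * Gfun μ lam r‖
          ≤ ∫⁻ r in Ioo (0:ℝ) r₀, ∫⁻ α in Ioo (0:ℝ) 1,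
              ENNReal.ofReal ((4 / lam ^ 2 * (Real.sin (π * α) * μ α)) *
                (Real.exp (-(t * r)) * r ^ (α - 1))) :=
            lintegral_mono_ae ((ae_restrict_iff' measurableSet_Ioo).2 (ae_of_all _ hstep))
        _ ≤ ∫⁻ r in Ioi (0:ℝ), ∫⁻ α in Ioo (0:ℝ) 1,
              ENNReal.ofReal ((4 / lam ^ 2 * (Real.sin (π * α) * μ α)) *
                (Real.exp (-(t * r)) * r ^ (α - 1))) :=
            lintegral_mono' (Measure.restrict_mono Ioo_subset_Ioi_self le_rfl) le_rfl
        _ = ∫⁻ α in Ioo (0:ℝ) 1, ∫⁻ r in Ioi (0:ℝ),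
              ENNReal.ofReal ((4 / lam ^ 2 * (Real.sin (π * α) * μ α)) *
                (Real.exp (-(t * r)) * r ^ (α - 1))) :=
            lintegral_lintegral_swap (f := fun r α => ENNReal.ofReal
              ((4 / lam ^ 2 * (Real.sin (π * α) * μ α)) *
                (Real.exp (-(t * r)) * r ^ (α - 1)))) hFmeas.aemeasurable
        _ ≤ ∫⁻ α in Ioo (0:ℝ) 1, ENNReal.ofReal
              ((8 * π / (lam ^ 2 * Real.log t)) * (μ α / α)) := by
            refine lintegral_mono_ae ((ae_restrict_iff' measurableSet_Ioo).2
              (ae_of_all _ fun α hα => ?_))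
            have hsnn : 0 ≤ Real.sin (π * α) := hsin_nn α hα
            have hμα : 0 ≤ μ α := hμnn α hα
            have hcnn : 0 ≤ 4 / lam ^ 2 * (Real.sin (π * α) * μ α) := by positivity
            calc ∫⁻ r in Ioi (0:ℝ), ENNReal.ofReal
                  ((4 / lam ^ 2 * (Real.sin (π * α) * μ α)) *
                    (Real.exp (-(t * r)) * r ^ (α - 1)))
                = ENNReal.ofReal (4 / lam ^ 2 * (Real.sin (π * α) * μ α)) *
                  ∫⁻ r in Ioi (0:ℝ), ENNReal.ofReal (Real.exp (-(t * r)) * r ^ (α - 1)) := by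
                  rw [← lintegral_const_mul' _ _ ENNReal.ofReal_ne_top]
                  exact lintegral_congr fun r => by
                    rw [← ENNReal.ofReal_mul hcnn]
              _ ≤ ENNReal.ofReal (4 / lam ^ 2 * (Real.sin (π * α) * μ α)) *
                  ENNReal.ofReal (2 / α * t ^ (-α)) :=
                  mul_le_mul_right (inner_bound hα ht1) _
              _ = ENNReal.ofReal ((4 / lam ^ 2 * (Real.sin (π * α) * μ α)) *
                  (2 / α * t ^ (-α))) := (ENNReal.ofReal_mul hcnn).symm
              _ ≤ ENNReal.ofReal ((8 * π / (lam ^ 2 * Real.log t)) * (μ α / α)) := by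
                  refine ENNReal.ofReal_le_ofReal ?_
                  have hsin : Real.sin (π * α) ≤ π * α :=
                    Real.sin_le (mul_nonneg Real.pi_pos.le hα.1.le)
                  have htα : t ^ (-α) ≤ 1 / (α * Real.log t) := by
                    have hz : 0 < α * Real.log t := mul_pos hα.1 hlogpos
                    have h1 : α * Real.log t ≤ Real.exp (α * Real.log t) := by
                      linarith [Real.add_one_le_exp (α * Real.log t)]
                    have h2 : t ^ (-α) = (Real.exp (α * Real.log t))⁻¹ := by
                      rw [Real.rpow_def_of_pos ht0, ← Real.exp_neg]
                      ring_nf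
                    rw [h2, one_div]
                    exact inv_anti₀ hz h1
                  have e1 : 4 / lam ^ 2 * (Real.sin (π * α) * μ α) * (2 / α * t ^ (-α)) ≤
                      4 / lam ^ 2 * ((π * α) * μ α) * (2 / α * (1 / (α * Real.log t))) := by
                    have hb1 : 4 / lam ^ 2 * (Real.sin (π * α) * μ α) ≤
                        4 / lam ^ 2 * ((π * α) * μ α) :=
                      mul_le_mul_of_nonneg_left
                        (mul_le_mul_of_nonneg_right hsin hμα) (by positivity)
                    have hb2 : 2 / α * t ^ (-α) ≤ 2 / α * (1 / (α * Real.log t)) :=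
                      mul_le_mul_of_nonneg_left htα (div_nonneg (by norm_num) hα.1.le)
                    have hb3 : (0:ℝ) ≤ 2 / α * t ^ (-α) :=
                      mul_nonneg (div_nonneg (by norm_num) hα.1.le)
                        (Real.rpow_nonneg ht0.le _)
                    refine mul_le_mul hb1 hb2 hb3 ?_
                    exact mul_nonneg (div_nonneg (by norm_num) (sq_nonneg lam))
                      (mul_nonneg (mul_nonneg Real.pi_pos.le hα.1.le) hμα)
                  refine le_trans e1 (le_of_eq ?_)
                  have hαne : α ≠ 0 := ne_of_gt hα.1
                  have hlne : Real.log t ≠ 0 := ne_of_gt hlogpos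
                  have hlamne : lam ≠ 0 := ne_of_gt hlam
                  field_simp
                  ring
        _ = ENNReal.ofReal (A / Real.log t) := by
            have hK'nn : (0:ℝ) ≤ 8 * π / (lam ^ 2 * Real.log t) := by positivity
            have haenn : 0 ≤ᵐ[volume.restrict (Ioo (0:ℝ) 1)] fun α => μ α / α := by
              refine (ae_restrict_iff' measurableSet_Ioo).2 (ae_of_all _ fun α hα => ?_)
              exact div_nonneg (hμnn α hα) hα.1.le
            rw [lintegral_congr (fun α => ENNReal.ofReal_mul hK'nn),
              lintegral_const_mul' _ _ ENNReal.ofReal_ne_top,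
              ← ofReal_integral_eq_lintegral_ofReal hf1 haenn,
              ← ENNReal.ofReal_mul hK'nn]
            congr 1
            rw [hA, ← hcb]
            have hlne : Real.log t ≠ 0 := ne_of_gt hlogpos
            have hlamne : lam ≠ 0 := ne_of_gt hlam
            field_simp
            try ring
    have tail : ∫⁻ r in Ici r₀, ENNReal.ofReal ‖Real.exp (-r * t) / r * Gfun μ lam r‖ ≤
        ENNReal.ofReal (K / Real.log t) := by
      have hstep : ∀ r ∈ Ici r₀,
          ENNReal.ofReal ‖Real.exp (-r * t) / r * Gfun μ lam r‖ ≤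
          ENNReal.ofReal (K * Real.exp (-(t * r))) := by
        intro r hr
        have hrpos : 0 < r := lt_of_lt_of_le hr₀_pos hr
        refine ENNReal.ofReal_le_ofReal ?_
        rw [Real.norm_eq_abs, abs_of_nonneg (mul_nonneg
          (div_nonneg (Real.exp_pos _).le hrpos.le) (hGnn r hrpos)),
          show -r * t = -(t * r) by ring]
        have h1 : Real.exp (-(t * r)) / r ≤ Real.exp (-(t * r)) / r₀ :=
          div_le_div_of_nonneg_left (Real.exp_pos _).le hr₀_pos hr
        have h2 : Gfun μ lam r ≤ 1 / (r₀ * s) := hGtail r hr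
        calc Real.exp (-(t * r)) / r * Gfun μ lam r ≤
              Real.exp (-(t * r)) / r₀ * (1 / (r₀ * s)) :=
              mul_le_mul h1 h2 (hGnn r hrpos) (by positivity)
          _ = K * Real.exp (-(t * r)) := by
              rw [hK]; field_simp
      have hi : IntegrableOn (fun r : ℝ => K * Real.exp (-(t * r))) (Ioi r₀) := by
        have : IntegrableOn (fun r : ℝ => Real.exp (-t * r)) (Ioi r₀) :=
          exp_neg_integrableOn_Ioi _ ht0
        refine (this.const_mul K).congr (ae_of_all _ fun r => by simp [neg_mul])
      calc ∫⁻ r in Ici r₀, ENNReal.ofReal ‖Real.exp (-r * t) / r * Gfun μ lam r‖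
          ≤ ∫⁻ r in Ici r₀, ENNReal.ofReal (K * Real.exp (-(t * r))) :=
            lintegral_mono_ae ((ae_restrict_iff' measurableSet_Ici).2 (ae_of_all _ hstep))
        _ = ∫⁻ r in Ioi r₀, ENNReal.ofReal (K * Real.exp (-(t * r))) :=
            (setLIntegral_congr Ioi_ae_eq_Ici).symm
        _ = ENNReal.ofReal (∫ r in Ioi r₀, K * Real.exp (-(t * r))) :=
            (ofReal_integral_eq_lintegral_ofReal hi
              (ae_of_all _ fun r => by positivity)).symm
        _ ≤ ENNReal.ofReal (K / Real.log t) := by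
            refine ENNReal.ofReal_le_ofReal ?_
            have hval : ∫ r in Ioi r₀, K * Real.exp (-(t * r)) =
                K * (t⁻¹ * Real.exp (-(t * r₀))) := by
              rw [MeasureTheory.integral_const_mul]
              congr 1
              have h3 := MeasureTheory.integral_comp_mul_left_Ioi
                (fun y => Real.exp (-y)) r₀ ht0
              rw [h3, smul_eq_mul, integral_exp_neg_Ioi]
            rw [hval]
            have he1 : Real.exp (-(t * r₀)) ≤ 1 := by
              rw [Real.exp_le_one_iff]
              nlinarith
            have h4 : t⁻¹ ≤ 1 / Real.log t := by
              rw [one_div]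
              exact inv_anti₀ hlogpos hloglet
            calc K * (t⁻¹ * Real.exp (-(t * r₀))) ≤ K * (t⁻¹ * 1) := by
                  refine mul_le_mul_of_nonneg_left ?_ hK_pos.le
                  exact mul_le_mul_of_nonneg_left he1 (by positivity)
              _ = K * t⁻¹ := by ring
              _ ≤ K * (1 / Real.log t) := mul_le_mul_of_nonneg_left h4 hK_pos.le
              _ = K / Real.log t := by ring
    calc _ ≤ ENNReal.ofReal (A / Real.log t) + ENNReal.ofReal (K / Real.log t) :=
          add_le_add head tail
      _ = ENNReal.ofReal ((A + K) / Real.log t) := by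
          rw [← ENNReal.ofReal_add (by positivity) (by positivity)]
          congr 1
          ring
  -- wrap up
  have habs : |vfun μ lam v₀ t| = |v₀| * (lam / π) *
      |∫ r in Ioi (0:ℝ), Real.exp (-r * t) / r * Gfun μ lam r| := by
    rw [vfun, abs_mul, abs_mul, abs_of_pos (div_pos hlam Real.pi_pos)]
  have hIbound : |∫ r in Ioi (0:ℝ), Real.exp (-r * t) / r * Gfun μ lam r| ≤
      (A + K) / Real.log t := by
    have h1 := MeasureTheory.norm_integral_le_lintegral_norm
      (μ := volume.restrict (Ioi (0:ℝ)))
      (fun r => Real.exp (-r * t) / r * Gfun μ lam r)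
    rw [Real.norm_eq_abs] at h1
    exact le_trans h1 (ENNReal.toReal_le_of_le_ofReal (by positivity) key)
  rw [habs]
  calc |v₀| * (lam / π) * |∫ r in Ioi (0:ℝ), Real.exp (-r * t) / r * Gfun μ lam r|
      ≤ |v₀| * (lam / π) * ((A + K) / Real.log t) :=
        mul_le_mul_of_nonneg_left hIbound (by positivity)
    _ = (|v₀| * (lam / π) * (A + K)) / Real.log t := by ring
    _ ≤ (|v₀| * (lam / π) * (A + K) + 1) / Real.log t := by
        gcongr
        linarith
end

section
/- Assume λ > 0, v₀ ∈ ℝ, μ satisfies (aa) and (f1), and let v(t) = v₀ (λ/π) ∫₀^∞ (e^{−rt}/r) G(r) dr. Suppose there exist ϑ ∈ (0,1) and a > 0 such that μ(α) ≤ a · exp(−e^{1/α}) for a.e. α ∈ (0, ϑ). Then there exist c > 0 and T₀ > e^e such that |v(t)| ≤ c · t^{−1/ ln ln t} for all t ≥ T₀. -/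
open MeasureTheory Set Real

lemma aux_ofReal_integral_le {X : Type*} [MeasurableSpace X] {ν : Measure X} {f : X → ℝ}
    (hf : 0 ≤ᵐ[ν] f) :
    ENNReal.ofReal (∫ x, f x ∂ν) ≤ ∫⁻ x, ENNReal.ofReal (f x) ∂ν := by
  by_cases hfi : Integrable f ν
  · exact (ofReal_integral_eq_lintegral_ofReal hfi hf).le
  · simp [integral_undef hfi]

lemma aux_integral_exp_Ioi (c : ℝ) {t : ℝ} (ht : 0 < t) :
    ∫ r in Ioi c, Real.exp (-r * t) = Real.exp (-c * t) / t := by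
  have hderiv : ∀ x ∈ Ioi c,
      HasDerivAt (fun r => -Real.exp (-r * t) / t) (Real.exp (-x * t)) x := by
    intro x _
    have h1 : HasDerivAt (fun r : ℝ => -r * t) (-t) x := by
      simpa using ((hasDerivAt_id x).neg.mul_const t)
    have h2 := (h1.exp.neg).div_const t
    exact h2.congr_deriv (by field_simp)
  have hint : IntegrableOn (fun r => Real.exp (-r * t)) (Ioi c) := by
    have := exp_neg_integrableOn_Ioi c ht
    simpa [mul_comm] using this
  have htend : Filter.Tendsto (fun r => -Real.exp (-r * t) / t) Filter.atTop (nhds 0) := by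
    have h0 : Filter.Tendsto (fun r : ℝ => r * (-t)) Filter.atTop Filter.atBot :=
      Filter.Tendsto.atTop_mul_const_of_neg (by linarith) Filter.tendsto_id
    have := ((Real.tendsto_exp_atBot.comp h0).neg).div_const t
    simpa [mul_comm, Function.comp_def, mul_neg, neg_mul] using this
  have hcont : ContinuousWithinAt (fun r => -Real.exp (-r * t) / t) (Ici c) c := by
    apply Continuous.continuousWithinAt; fun_prop
  have := integral_Ioi_of_hasDerivAt_of_tendsto hcont hderiv hint htend
  rw [this]; ring

lemma aux_lintegral_exp_rpow {t α : ℝ} (ht : 1 ≤ t) (hα : 0 < α) (hα1 : α ≤ 1) :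
    ∫⁻ r in Ioi (0:ℝ), ENNReal.ofReal (Real.exp (-r * t) * r ^ (α - 1))
      ≤ ENNReal.ofReal ((1 / α + 1) * t ^ (-α)) := by
  have ht0 : (0:ℝ) < t := lt_of_lt_of_le one_pos ht
  have h1t : (0:ℝ) < 1 / t := by positivity
  rw [← Ioc_union_Ioi_eq_Ioi h1t.le, lintegral_union measurableSet_Ioi Ioc_disjoint_Ioi_same]
  have part1 : ∫⁻ r in Ioc (0:ℝ) (1 / t), ENNReal.ofReal (Real.exp (-r * t) * r ^ (α - 1))
      ≤ ENNReal.ofReal (1 / α * t ^ (-α)) := by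
    have step1 : ∫⁻ r in Ioc (0:ℝ) (1 / t), ENNReal.ofReal (Real.exp (-r * t) * r ^ (α - 1))
        ≤ ∫⁻ r in Ioc (0:ℝ) (1 / t), ENNReal.ofReal (r ^ (α - 1)) := by
      apply lintegral_mono_ae
      filter_upwards [ae_restrict_mem measurableSet_Ioc] with r hr
      apply ENNReal.ofReal_le_ofReal
      have he : Real.exp (-r * t) ≤ 1 := by
        apply Real.exp_le_one_iff.mpr; nlinarith [hr.1]
      have : (0:ℝ) ≤ r ^ (α - 1) := Real.rpow_nonneg hr.1.le _
      nlinarith [Real.exp_pos (-r * t)]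
    have hii : IntervalIntegrable (fun r : ℝ => r ^ (α - 1)) volume 0 (1 / t) :=
      intervalIntegral.intervalIntegrable_rpow' (by linarith)
    have hio : IntegrableOn (fun r : ℝ => r ^ (α - 1)) (Ioc 0 (1 / t)) :=
      (intervalIntegrable_iff_integrableOn_Ioc_of_le h1t.le).mp hii
    have hval : ∫ r in Ioc (0:ℝ) (1 / t), r ^ (α - 1) = 1 / α * t ^ (-α) := by
      rw [← intervalIntegral.integral_of_le h1t.le]
      rw [integral_rpow (Or.inl (by linarith))]
      have : α - 1 + 1 = α := by ring
      rw [this, Real.zero_rpow hα.ne', one_div, Real.inv_rpow ht0.le, ← Real.rpow_neg ht0.le]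
      rw [one_div]
      ring
    have := ofReal_integral_eq_lintegral_ofReal hio
      (by filter_upwards [ae_restrict_mem measurableSet_Ioc] with r hr
          exact Real.rpow_nonneg hr.1.le _)
    rw [← this, hval] at step1
    exact step1
  have part2 : ∫⁻ r in Ioi (1 / t), ENNReal.ofReal (Real.exp (-r * t) * r ^ (α - 1))
      ≤ ENNReal.ofReal (t ^ (-α)) := by
    have step1 : ∫⁻ r in Ioi (1 / t), ENNReal.ofReal (Real.exp (-r * t) * r ^ (α - 1))
        ≤ ∫⁻ r in Ioi (1 / t), ENNReal.ofReal (t ^ ((1:ℝ) - α)) * ENNReal.ofReal (Real.exp (-r * t)) := by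
      apply lintegral_mono_ae
      filter_upwards [ae_restrict_mem measurableSet_Ioi] with r hr
      rw [← ENNReal.ofReal_mul (Real.rpow_nonneg ht0.le _)]
      apply ENNReal.ofReal_le_ofReal
      have hb : r ^ (α - 1) ≤ (1 / t) ^ (α - 1) :=
        Real.rpow_le_rpow_of_nonpos h1t (le_of_lt hr) (by linarith)
      have heq : (1 / t : ℝ) ^ (α - 1) = t ^ ((1:ℝ) - α) := by
        rw [one_div, Real.inv_rpow ht0.le, ← Real.rpow_neg ht0.le]
        congr 1; ring
      calc Real.exp (-r * t) * r ^ (α - 1) ≤ Real.exp (-r * t) * (1 / t) ^ (α - 1) := by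
            gcongr
        _ = t ^ ((1:ℝ) - α) * Real.exp (-r * t) := by rw [heq]; ring
    rw [lintegral_const_mul' _ _ ENNReal.ofReal_ne_top] at step1
    have hexpint : IntegrableOn (fun r => Real.exp (-r * t)) (Ioi (1 / t)) := by
      have := exp_neg_integrableOn_Ioi (1 / t) ht0
      simpa [mul_comm] using this
    have hev : ∫⁻ r in Ioi (1 / t), ENNReal.ofReal (Real.exp (-r * t))
        = ENNReal.ofReal (Real.exp (-(1 / t) * t) / t) := by
      rw [← ofReal_integral_eq_lintegral_ofReal hexpint
        (ae_of_all _ fun r => (Real.exp_pos _).le), aux_integral_exp_Ioi _ ht0]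
    rw [hev, ← ENNReal.ofReal_mul (Real.rpow_nonneg ht0.le _)] at step1
    refine step1.trans (ENNReal.ofReal_le_ofReal ?_)
    have h1 : Real.exp (-(1 / t) * t) = Real.exp (-1) := by
      congr 1; field_simp
    have h2 : t ^ ((1:ℝ) - α) * (1 / t) = t ^ (-α) := by
      rw [one_div, ← Real.rpow_neg_one t, ← Real.rpow_add ht0]
      congr 1; ring
    calc t ^ ((1:ℝ) - α) * (Real.exp (-(1 / t) * t) / t)
        = (t ^ ((1:ℝ) - α) * (1 / t)) * Real.exp (-(1 / t) * t) := by ring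
      _ ≤ (t ^ ((1:ℝ) - α) * (1 / t)) * 1 := by
          have hx : Real.exp (-(1 / t) * t) ≤ 1 := by
            rw [h1]; exact Real.exp_le_one_iff.mpr (by norm_num)
          have hy : (0:ℝ) ≤ t ^ ((1:ℝ) - α) * (1 / t) := by positivity
          nlinarith
      _ = t ^ (-α) := by rw [mul_one, h2]
  calc _ ≤ ENNReal.ofReal (1 / α * t ^ (-α)) + ENNReal.ofReal (t ^ (-α)) := add_le_add part1 part2
    _ = ENNReal.ofReal ((1 / α + 1) * t ^ (-α)) := by
        rw [← ENNReal.ofReal_add (by positivity) (Real.rpow_nonneg ht0.le _)]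
        ring_nf

set_option maxHeartbeats 1000000 in
/-- estimate (f14): if `μ(α) ≤ a exp(-e^{1/α})` a.e. near `0`,
then `|v(t)| ≤ c t^{-1/ln ln t}` for `t` large. -/
theorem v_superlog_decay (μ : ℝ → ℝ) (lam v₀ : ℝ) (hlam : 0 < lam)
    (hmeas : Measurable μ)
    (hnn : ∀ α ∈ Icc (0:ℝ) 1, 0 ≤ μ α)
    (hint : IntegrableOn μ (Ioo 0 1))
    (hpos : 0 < ∫ α in Ioo (0:ℝ) 1, μ α)
    (hf1 : IntegrableOn (fun α => μ α / α) (Ioo 0 1))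
    (ϑ : ℝ) (hϑ : ϑ ∈ Ioo (0:ℝ) 1) (a : ℝ) (ha : 0 < a)
    (hμbound : ∀ᵐ α ∂(volume.restrict (Ioo 0 ϑ)),
      μ α ≤ a * Real.exp (-Real.exp (1 / α))) :
    ∃ c > 0, ∃ T₀ > Real.exp (Real.exp 1), ∀ t ≥ T₀,
      |vfun μ lam v₀ t| ≤ c * t ^ (-(1 / Real.log (Real.log t))) := by
  obtain ⟨hϑ0, hϑ1⟩ := hϑ
  have hπ : (0:ℝ) < π := Real.pi_pos
  set S : ℝ → ℝ := fun r => ∫ α in Ioo (0:ℝ) 1, r ^ α * Real.sin (π * α) * μ α with hSdef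
  set Cc : ℝ → ℝ := fun r => ∫ α in Ioo (0:ℝ) 1, r ^ α * Real.cos (π * α) * μ α with hCcdef
  have hG : ∀ r, Gfun μ lam r = S r / ((lam + Cc r) ^ 2 + (S r) ^ 2) := fun r => rfl
  clear_value S Cc
  have hSr : ∀ r : ℝ, S r = ∫ α in Ioo (0:ℝ) 1, r ^ α * Real.sin (π * α) * μ α :=
    fun r => by rw [hSdef]
  set cμ : ℝ := ∫ α in Ioo (0:ℝ) 1, μ α with hcμdef
  set cb : ℝ := ∫ α in Ioo (0:ℝ) 1, μ α / α with hcbdef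
  clear_value cμ cb
  have hnn' : ∀ α ∈ Ioo (0:ℝ) 1, 0 ≤ μ α := fun α hα => hnn α ⟨hα.1.le, hα.2.le⟩
  have hμae : 0 ≤ᵐ[volume.restrict (Ioo (0:ℝ) 1)] μ := by
    filter_upwards [ae_restrict_mem measurableSet_Ioo] with α hα using hnn' α hα
  have hcμ0 : 0 ≤ cμ := le_of_lt hpos
  have hcb0 : 0 ≤ cb := by
    rw [hcbdef]
    exact setIntegral_nonneg measurableSet_Ioo (fun α hα => div_nonneg (hnn' α hα) hα.1.le)
  -- choice of δ and r₀
  set δ : ℝ := min (1/2) (lam / (4 * (cb + 1))) with hδdef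
  have hδ0 : 0 < δ := lt_min (by norm_num) (by positivity)
  have hδ1 : δ ≤ 1/2 := min_le_left _ _
  have hδlam : δ * (cb + 1) ≤ lam / 4 := by
    calc δ * (cb + 1) ≤ lam / (4 * (cb + 1)) * (cb + 1) := by
          apply mul_le_mul_of_nonneg_right (min_le_right _ _) (by linarith)
      _ = lam / 4 := by field_simp
  set β : ℝ := lam / (4 * (cμ + 1)) with hβdef
  have hβ0 : 0 < β := by rw [hβdef]; positivity
  set r₀ : ℝ := min (1/2) (β ^ (1/δ)) with hr₀def
  have hr₀0 : 0 < r₀ := lt_min (by norm_num) (Real.rpow_pos_of_pos hβ0 _)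
  have hr₀1 : r₀ ≤ 1 := (min_le_left _ _).trans (by norm_num)
  have hr₀δ : r₀ ^ δ ≤ β := by
    calc r₀ ^ δ ≤ (β ^ (1/δ)) ^ δ := Real.rpow_le_rpow hr₀0.le (min_le_right _ _) hδ0.le
      _ = β := by rw [← Real.rpow_mul hβ0.le, one_div, inv_mul_cancel₀ hδ0.ne', Real.rpow_one]
  clear_value δ β r₀
  -- integrability helper
  have key_int : ∀ (C : ℝ) (f : ℝ → ℝ), Measurable f →
      (∀ α ∈ Ioo (0:ℝ) 1, ‖f α‖ ≤ C * μ α) → IntegrableOn f (Ioo 0 1) := by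
    intro C f hm hb
    exact Integrable.mono' (hint.const_mul C) hm.aestronglyMeasurable
      ((ae_restrict_iff' measurableSet_Ioo).mpr (ae_of_all _ hb))
  have hm_sin : Measurable fun α : ℝ => Real.sin (π * α) :=
    (measurable_const.mul measurable_id).sin
  have hm_cos : Measurable fun α : ℝ => Real.cos (π * α) :=
    (measurable_const.mul measurable_id).cos
  have hm_pow : ∀ r : ℝ, Measurable fun α : ℝ => r ^ α :=
    fun r => measurable_const.pow measurable_id
  have hrpow_le : ∀ r : ℝ, 0 < r → ∀ α : ℝ, α ∈ Ioo (0:ℝ) 1 → r ^ α ≤ max 1 r := by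
    intro r hr α hα
    rcases le_total r 1 with h | h
    · exact le_max_of_le_left (Real.rpow_le_one hr.le h hα.1.le)
    · refine le_max_of_le_right ?_
      calc r ^ α ≤ r ^ (1:ℝ) := Real.rpow_le_rpow_of_exponent_le h hα.2.le
        _ = r := Real.rpow_one r
  have habs : ∀ (g : ℝ → ℝ), (∀ x : ℝ, |g x| ≤ 1) → ∀ r : ℝ, 0 < r →
      ∀ α ∈ Ioo (0:ℝ) 1, ‖r ^ α * g α * μ α‖ ≤ (max 1 r) * μ α := by
    intro g hg r hr α hα
    rw [Real.norm_eq_abs, abs_mul, abs_mul,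
      abs_of_nonneg (Real.rpow_nonneg hr.le α), abs_of_nonneg (hnn' α hα)]
    calc r ^ α * |g α| * μ α ≤ (max 1 r) * 1 * μ α := by
          apply mul_le_mul_of_nonneg_right _ (hnn' α hα)
          exact mul_le_mul (hrpow_le r hr α hα) (hg α) (abs_nonneg _)
            (le_trans zero_le_one (le_max_left _ _))
      _ = (max 1 r) * μ α := by ring
  have hIsin : ∀ r : ℝ, 0 < r →
      IntegrableOn (fun α => r ^ α * Real.sin (π * α) * μ α) (Ioo 0 1) := fun r hr =>
    key_int (max 1 r) _ (((hm_pow r).mul hm_sin).mul hmeas)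
      (habs _ (fun x => Real.abs_sin_le_one _) r hr)
  have hIcos : ∀ r : ℝ, 0 < r →
      IntegrableOn (fun α => r ^ α * Real.cos (π * α) * μ α) (Ioo 0 1) := fun r hr =>
    key_int (max 1 r) _ (((hm_pow r).mul hm_cos).mul hmeas)
      (habs _ (fun x => Real.abs_cos_le_one _) r hr)
  have hIpow : ∀ r : ℝ, 0 < r → IntegrableOn (fun α => r ^ α * μ α) (Ioo 0 1) := by
    intro r hr
    apply key_int (max 1 r) _ ((hm_pow r).mul hmeas)
    intro α hα
    simp only [Pi.mul_apply]
    rw [Real.norm_eq_abs, abs_mul, abs_of_nonneg (Real.rpow_nonneg hr.le α),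
      abs_of_nonneg (hnn' α hα)]
    exact mul_le_mul_of_nonneg_right (hrpow_le r hr α hα) (hnn' α hα)
  have hsin_nn : ∀ α ∈ Ioo (0:ℝ) 1, 0 ≤ Real.sin (π * α) := by
    intro α hα
    apply Real.sin_nonneg_of_nonneg_of_le_pi (mul_nonneg hπ.le hα.1.le)
    nlinarith [hα.2]
  have hSnn : ∀ r : ℝ, 0 < r → 0 ≤ S r := by
    intro r hr
    rw [hSdef]
    apply setIntegral_nonneg measurableSet_Ioo
    exact fun α hα => mul_nonneg (mul_nonneg (Real.rpow_nonneg hr.le α) (hsin_nn α hα))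
      (hnn' α hα)
  -- s₀
  set s₀ : ℝ := ∫ α in Ioo (0:ℝ) 1, Real.sin (π * α) * μ α with hs₀def
  clear_value s₀
  have hs₀int : IntegrableOn (fun α => Real.sin (π * α) * μ α) (Ioo 0 1) := by
    apply key_int 1 _ (hm_sin.mul hmeas)
    intro α hα
    simp only [Pi.mul_apply]
    rw [Real.norm_eq_abs, abs_mul, abs_of_nonneg (hnn' α hα), one_mul]
    exact mul_le_of_le_one_left (hnn' α hα) (Real.abs_sin_le_one _)
  have hs₀nn : 0 ≤ s₀ := by
    rw [hs₀def]
    exact setIntegral_nonneg measurableSet_Ioo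
      (fun α hα => mul_nonneg (hsin_nn α hα) (hnn' α hα))
  have hs₀pos : 0 < s₀ := by
    rcases hs₀nn.lt_or_eq with h | h
    · exact h
    · exfalso
      have hnn2 : 0 ≤ᵐ[volume.restrict (Ioo (0:ℝ) 1)] fun α => Real.sin (π * α) * μ α := by
        filter_upwards [ae_restrict_mem measurableSet_Ioo] with α hα
        exact mul_nonneg (hsin_nn α hα) (hnn' α hα)
      rw [hs₀def] at h
      have hz : (fun α => Real.sin (π * α) * μ α) =ᵐ[volume.restrict (Ioo (0:ℝ) 1)] 0 :=
        (integral_eq_zero_iff_of_nonneg_ae hnn2 hs₀int).mp h.symm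
      have hμz : μ =ᵐ[volume.restrict (Ioo (0:ℝ) 1)] 0 := by
        filter_upwards [hz, ae_restrict_mem measurableSet_Ioo] with α h1 h2
        have hs : Real.sin (π * α) ≠ 0 := by
          apply ne_of_gt
          apply Real.sin_pos_of_pos_of_lt_pi (mul_pos hπ h2.1)
          nlinarith [h2.2]
        have h1' : Real.sin (π * α) * μ α = 0 := h1
        rcases mul_eq_zero.mp h1' with h | h
        · exact absurd h hs
        · exact h
      have : cμ = 0 := by
        rw [hcμdef]
        exact integral_eq_zero_of_ae hμz
      linarith
  -- the bound |Cc r| ≤ lam/2 for small r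
  have hpow_half : ∀ r : ℝ, 0 < r → r ≤ r₀ → ∫ α in Ioo (0:ℝ) 1, r ^ α * μ α ≤ lam / 2 := by
    intro r hr hrr₀
    have hr1 : r ≤ 1 := hrr₀.trans hr₀1
    have hsplit : Ioo (0:ℝ) 1 = Ioo 0 δ ∪ Ico δ 1 :=
      (Ioo_union_Ico_eq_Ioo hδ0 (by linarith)).symm
    have hsub1 : Ioo (0:ℝ) δ ⊆ Ioo (0:ℝ) 1 := Ioo_subset_Ioo_right (by linarith)
    have hsub2 : Ico δ 1 ⊆ Ioo (0:ℝ) 1 := fun x hx => ⟨lt_of_lt_of_le hδ0 hx.1, hx.2⟩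
    have hi := hIpow r hr
    have hi1 : IntegrableOn (fun α => r ^ α * μ α) (Ioo 0 δ) := hi.mono_set hsub1
    have hi2 : IntegrableOn (fun α => r ^ α * μ α) (Ico δ 1) := hi.mono_set hsub2
    have hdisj : Disjoint (Ioo (0:ℝ) δ) (Ico δ 1) := by
      apply Set.disjoint_left.mpr
      rintro x ⟨_, h2⟩ ⟨h3, _⟩
      exact absurd h3 (not_le.mpr h2)
    rw [hsplit, setIntegral_union hdisj measurableSet_Ico hi1 hi2]
    have hpart1 : ∫ α in Ioo (0:ℝ) δ, r ^ α * μ α ≤ lam / 4 := by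
      have s1 : ∫ α in Ioo (0:ℝ) δ, r ^ α * μ α ≤ ∫ α in Ioo (0:ℝ) δ, δ * (μ α / α) := by
        have hg1 : IntegrableOn (fun x => δ * (μ x / x)) (Ioo 0 1) := hf1.const_mul δ
        have hg2 : IntegrableOn (fun x => δ * (μ x / x)) (Ioo 0 δ) := hg1.mono_set hsub1
        apply setIntegral_mono_on hi1 hg2 measurableSet_Ioo
        intro α hα
        have hα0 : 0 < α := hα.1
        have hα' : α ∈ Ioo (0:ℝ) 1 := hsub1 hα
        have h1 : r ^ α ≤ 1 := Real.rpow_le_one hr.le hr1 hα0.le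
        have hμrw : α * (μ α / α) = μ α := by
          rw [mul_comm]
          exact div_mul_cancel₀ _ (ne_of_gt hα0)
        calc r ^ α * μ α ≤ 1 * μ α := mul_le_mul_of_nonneg_right h1 (hnn' α hα')
          _ = α * (μ α / α) := by rw [one_mul, hμrw]
          _ ≤ δ * (μ α / α) := mul_le_mul_of_nonneg_right hα.2.le
              (div_nonneg (hnn' α hα') hα0.le)
      have s2 : ∫ α in Ioo (0:ℝ) δ, δ * (μ α / α) = δ * ∫ α in Ioo (0:ℝ) δ, μ α / α :=
        integral_const_mul δ _
      have s3 : ∫ α in Ioo (0:ℝ) δ, μ α / α ≤ cb := by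
        rw [hcbdef]
        apply setIntegral_mono_set hf1 ?_ (HasSubset.Subset.eventuallyLE hsub1)
        filter_upwards [ae_restrict_mem measurableSet_Ioo] with α hα
        exact div_nonneg (hnn' α hα) hα.1.le
      calc ∫ α in Ioo (0:ℝ) δ, r ^ α * μ α ≤ δ * ∫ α in Ioo (0:ℝ) δ, μ α / α := by
            rw [← s2]; exact s1
        _ ≤ δ * cb := mul_le_mul_of_nonneg_left s3 hδ0.le
        _ ≤ δ * (cb + 1) := by nlinarith
        _ ≤ lam / 4 := hδlam
    have hpart2 : ∫ α in Ico δ 1, r ^ α * μ α ≤ lam / 4 := by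
      have s1 : ∫ α in Ico δ 1, r ^ α * μ α ≤ ∫ α in Ico δ 1, r ^ δ * μ α := by
        have hg1 : IntegrableOn (fun x => r ^ δ * μ x) (Ioo 0 1) := hint.const_mul _
        have hg2 : IntegrableOn (fun x => r ^ δ * μ x) (Ico δ 1) := hg1.mono_set hsub2
        apply setIntegral_mono_on hi2 hg2 measurableSet_Ico
        intro α hα
        exact mul_le_mul_of_nonneg_right
          (Real.rpow_le_rpow_of_exponent_ge hr hr1 hα.1) (hnn' α (hsub2 hα))
      have s2 : ∫ α in Ico δ 1, r ^ δ * μ α = r ^ δ * ∫ α in Ico δ 1, μ α :=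
        integral_const_mul _ _
      have s3 : ∫ α in Ico δ 1, μ α ≤ cμ := by
        rw [hcμdef]
        exact setIntegral_mono_set hint hμae (HasSubset.Subset.eventuallyLE hsub2)
      have s4 : r ^ δ ≤ β := le_trans (Real.rpow_le_rpow hr.le hrr₀ hδ0.le) hr₀δ
      have s5 : (0:ℝ) ≤ ∫ α in Ico δ 1, μ α :=
        setIntegral_nonneg measurableSet_Ico (fun α hα => hnn' α (hsub2 hα))
      calc ∫ α in Ico δ 1, r ^ α * μ α ≤ r ^ δ * ∫ α in Ico δ 1, μ α := by
            rw [← s2]; exact s1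
        _ ≤ β * cμ := mul_le_mul s4 s3 s5 hβ0.le
        _ ≤ β * (cμ + 1) := by nlinarith
        _ = lam / 4 := by rw [hβdef]; field_simp
    linarith
  have hCb : ∀ r : ℝ, 0 < r → r ≤ r₀ → |Cc r| ≤ lam / 2 := by
    intro r hr hrr₀
    have h1 : |Cc r| ≤ ∫ α in Ioo (0:ℝ) 1, |r ^ α * Real.cos (π * α) * μ α| := by
      rw [hCcdef]
      simpa only [Real.norm_eq_abs] using
        norm_integral_le_integral_norm (μ := volume.restrict (Ioo (0:ℝ) 1))
          (fun α => r ^ α * Real.cos (π * α) * μ α)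
    have h2 : ∫ α in Ioo (0:ℝ) 1, |r ^ α * Real.cos (π * α) * μ α|
        ≤ ∫ α in Ioo (0:ℝ) 1, r ^ α * μ α := by
      apply setIntegral_mono_on (hIcos r hr).abs (hIpow r hr) measurableSet_Ioo
      intro α hα
      rw [abs_mul, abs_mul, abs_of_nonneg (Real.rpow_nonneg hr.le α),
        abs_of_nonneg (hnn' α hα)]
      calc r ^ α * |Real.cos (π * α)| * μ α ≤ r ^ α * 1 * μ α := by
            apply mul_le_mul_of_nonneg_right _ (hnn' α hα)
            exact mul_le_mul_of_nonneg_left (Real.abs_cos_le_one _) (Real.rpow_nonneg hr.le α)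
        _ = r ^ α * μ α := by ring
    linarith [hpow_half r hr hrr₀]
  -- lower bound for S r when r ≥ r₀
  have hSlow : ∀ r : ℝ, r₀ ≤ r → r₀ * s₀ ≤ S r := by
    intro r hrr
    have hr0 : 0 < r := lt_of_lt_of_le hr₀0 hrr
    have hr₀pow : ∀ α ∈ Ioo (0:ℝ) 1, r₀ ≤ r ^ α := by
      intro α hα
      rcases le_total r 1 with h | h
      · calc r₀ ≤ r := hrr
          _ = r ^ (1:ℝ) := (Real.rpow_one r).symm
          _ ≤ r ^ α := Real.rpow_le_rpow_of_exponent_ge hr0 h hα.2.le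
      · calc r₀ ≤ 1 := hr₀1
          _ ≤ r ^ α := Real.one_le_rpow h hα.1.le
    have e1 : r₀ * s₀ = ∫ α in Ioo (0:ℝ) 1, r₀ * (Real.sin (π * α) * μ α) := by
      rw [hs₀def, integral_const_mul]
    rw [e1, hSdef]
    apply setIntegral_mono_on (hs₀int.const_mul r₀) (hIsin r hr0) measurableSet_Ioo
    intro α hα
    calc r₀ * (Real.sin (π * α) * μ α) ≤ r ^ α * (Real.sin (π * α) * μ α) :=
          mul_le_mul_of_nonneg_right (hr₀pow α hα)
            (mul_nonneg (hsin_nn α hα) (hnn' α hα))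
      _ = r ^ α * Real.sin (π * α) * μ α := by ring
  have hGub2 : ∀ r : ℝ, r₀ ≤ r → Gfun μ lam r ≤ 1 / (r₀ * s₀) := by
    intro r hrr
    have hSl : r₀ * s₀ ≤ S r := hSlow r hrr
    have hSpos : 0 < S r := lt_of_lt_of_le (by positivity) hSl
    rw [hG r]
    calc S r / ((lam + Cc r) ^ 2 + S r ^ 2) ≤ S r / (S r ^ 2) := by
          apply div_le_div_of_nonneg_left hSpos.le (by positivity)
          exact le_add_of_nonneg_left (sq_nonneg _)
      _ = 1 / S r := by rw [sq]; field_simp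
      _ ≤ 1 / (r₀ * s₀) := one_div_le_one_div_of_le (by positivity) hSl
  have hGnn : ∀ r : ℝ, 0 < r → 0 ≤ Gfun μ lam r := by
    intro r hr
    rw [hG r]
    exact div_nonneg (hSnn r hr) (by positivity)
  -- the constant
  set K : ℝ := 4 / lam ^ 2 * (2 * π * (a + cμ)) + 1 / (r₀ ^ 2 * s₀) with hKdef
  have hKA : (0:ℝ) ≤ 4 / lam ^ 2 * (2 * π * (a + cμ)) := by
    apply mul_nonneg (by positivity)
    apply mul_nonneg (by positivity)
    linarith
  have hKB : (0:ℝ) ≤ 1 / (r₀ ^ 2 * s₀) := by positivity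
  have hK0 : 0 ≤ K := by rw [hKdef]; exact add_nonneg hKA hKB
  clear_value K
  refine ⟨|v₀| * (lam / π) * K + 1,
    by nlinarith [mul_nonneg (mul_nonneg (abs_nonneg v₀) (div_pos hlam hπ).le) hK0],
    max (Real.exp (Real.exp (1/ϑ))) (Real.exp (Real.exp 1)) + 1, ?_, ?_⟩
  · have := le_max_right (Real.exp (Real.exp (1/ϑ))) (Real.exp (Real.exp 1))
    linarith
  intro t ht
  have hte1 : Real.exp (Real.exp 1) < t := by
    have := le_max_right (Real.exp (Real.exp (1/ϑ))) (Real.exp (Real.exp 1))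
    linarith
  have hteϑ : Real.exp (Real.exp (1/ϑ)) < t := by
    have := le_max_left (Real.exp (Real.exp (1/ϑ))) (Real.exp (Real.exp 1))
    linarith
  have ht1 : 1 < t := by
    have h1 : Real.exp 0 < Real.exp (Real.exp 1) := Real.exp_lt_exp.mpr (Real.exp_pos 1)
    rw [Real.exp_zero] at h1
    linarith
  have ht0 : 0 < t := lt_trans one_pos ht1
  have hlogt : Real.exp 1 < Real.log t := by
    rw [← Real.log_exp (Real.exp 1)]
    exact Real.log_lt_log (Real.exp_pos _) hte1
  have hlogt0 : 0 < Real.log t := lt_trans (Real.exp_pos 1) hlogt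
  have hloglog1 : 1 < Real.log (Real.log t) := by
    rw [← Real.log_exp 1]
    exact Real.log_lt_log (Real.exp_pos 1) hlogt
  have hloglogϑ : 1/ϑ < Real.log (Real.log t) := by
    have h1 : Real.exp (1/ϑ) < Real.log t := by
      rw [← Real.log_exp (Real.exp (1/ϑ))]
      exact Real.log_lt_log (Real.exp_pos _) hteϑ
    rw [← Real.log_exp (1/ϑ)]
    exact Real.log_lt_log (Real.exp_pos _) h1
  set ε : ℝ := 1 / Real.log (Real.log t) with hεdef
  have hε0 : 0 < ε := div_pos one_pos (by linarith)
  have hε1 : ε < 1 := by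
    rw [hεdef, div_lt_one (by linarith)]
    linarith
  have hεϑ : ε < ϑ := by
    rw [hεdef, div_lt_iff₀ (by linarith)]
    have := (div_lt_iff₀ hϑ0).mp hloglogϑ
    linarith
  have htpow1 : t ^ (-(1:ℝ)) ≤ t ^ (-ε) :=
    Real.rpow_le_rpow_of_exponent_le ht1.le (by linarith)
  have hinv_tpow : 1/t ≤ t ^ (-ε) := by
    rw [one_div, ← Real.rpow_neg_one t]
    exact htpow1
  -- step 0 : reduce to a lintegral bound
  have step0 : |vfun μ lam v₀ t| ≤ |v₀| * (lam / π) *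
      (∫⁻ r in Ioi (0:ℝ), ENNReal.ofReal (Real.exp (-r * t) / r * Gfun μ lam r)).toReal := by
    rw [vfun, abs_mul, abs_mul, abs_of_pos (div_pos hlam hπ)]
    rw [mul_assoc, mul_assoc]
    apply mul_le_mul_of_nonneg_left _ (abs_nonneg v₀)
    apply mul_le_mul_of_nonneg_left _ (le_of_lt (div_pos hlam hπ))
    rw [← Real.norm_eq_abs]
    refine (norm_integral_le_lintegral_norm _).trans (le_of_eq ?_)
    apply congrArg ENNReal.toReal
    apply setLIntegral_congr_fun measurableSet_Ioi
    intro r hr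
    dsimp only
    rw [Real.norm_eq_abs, abs_of_nonneg
      (mul_nonneg (div_nonneg (Real.exp_pos _).le (le_of_lt hr)) (hGnn r hr))]

  -- the kernel F and its properties
  set F : ℝ → ℝ → ℝ := fun r α => Real.exp (-r * t) * r ^ (α - 1) * (Real.sin (π * α) * μ α)
    with hFdef
  have hFnn : ∀ r : ℝ, 0 < r → ∀ α ∈ Ioo (0:ℝ) 1, 0 ≤ F r α := by
    intro r hr α hα
    rw [hFdef]
    exact mul_nonneg (mul_nonneg (Real.exp_pos _).le (Real.rpow_nonneg hr.le _))
      (mul_nonneg (hsin_nn α hα) (hnn' α hα))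
  -- pointwise bound on (0, r₀]
  have p1a : ∀ᵐ r ∂(volume.restrict (Ioc (0:ℝ) r₀)),
      ENNReal.ofReal (Real.exp (-r * t) / r * Gfun μ lam r)
        ≤ ENNReal.ofReal (4 / lam ^ 2) * ∫⁻ α in Ioo (0:ℝ) 1, ENNReal.ofReal (F r α) := by
    filter_upwards [ae_restrict_mem measurableSet_Ioc] with r hr
    have hr0 : 0 < r := hr.1
    have hrr₀ : r ≤ r₀ := hr.2
    have hden : (lam / 2) ^ 2 ≤ (lam + Cc r) ^ 2 + (S r) ^ 2 := by
      have h1 : |Cc r| ≤ lam / 2 := hCb r hr0 hrr₀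
      have h2 := (abs_le.mp h1).1
      nlinarith [sq_nonneg (S r)]
    have hGb : Gfun μ lam r ≤ 4 / lam ^ 2 * S r := by
      rw [hG r]
      have hd2 : 1 / ((lam + Cc r) ^ 2 + S r ^ 2) ≤ 1 / ((lam / 2) ^ 2) :=
        one_div_le_one_div_of_le (by positivity) hden
      have hlamne : lam ≠ 0 := hlam.ne'
      calc S r / ((lam + Cc r) ^ 2 + S r ^ 2)
          = S r * (1 / ((lam + Cc r) ^ 2 + S r ^ 2)) := by ring
        _ ≤ S r * (1 / ((lam / 2) ^ 2)) := mul_le_mul_of_nonneg_left hd2 (hSnn r hr0)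
        _ = 4 / lam ^ 2 * S r := by field_simp; ring
    have key2 : ∫ α in Ioo (0:ℝ) 1, F r α = Real.exp (-r * t) / r * S r := by
      have e1 : EqOn (fun α => F r α)
          (fun α => Real.exp (-r * t) / r * (r ^ α * Real.sin (π * α) * μ α)) (Ioo (0:ℝ) 1) := by
        intro α hα
        simp only [hFdef]
        rw [Real.rpow_sub hr0, Real.rpow_one]
        ring
      rw [setIntegral_congr_fun measurableSet_Ioo e1, integral_const_mul, hSr r]
    calc ENNReal.ofReal (Real.exp (-r * t) / r * Gfun μ lam r)
        ≤ ENNReal.ofReal (4 / lam ^ 2 * ∫ α in Ioo (0:ℝ) 1, F r α) := by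
          apply ENNReal.ofReal_le_ofReal
          rw [key2]
          calc Real.exp (-r * t) / r * Gfun μ lam r
              ≤ Real.exp (-r * t) / r * (4 / lam ^ 2 * S r) :=
                mul_le_mul_of_nonneg_left hGb (by positivity)
            _ = 4 / lam ^ 2 * (Real.exp (-r * t) / r * S r) := by ring
      _ = ENNReal.ofReal (4 / lam ^ 2) * ENNReal.ofReal (∫ α in Ioo (0:ℝ) 1, F r α) :=
          ENNReal.ofReal_mul (by positivity)
      _ ≤ ENNReal.ofReal (4 / lam ^ 2) * ∫⁻ α in Ioo (0:ℝ) 1, ENNReal.ofReal (F r α) := by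
          apply mul_le_mul_right
          apply aux_ofReal_integral_le
          filter_upwards [ae_restrict_mem measurableSet_Ioo] with α hα
          exact hFnn r hr0 α hα
  -- inner r-integral bound for each α
  have p1c : ∀ᵐ α ∂(volume.restrict (Ioo (0:ℝ) 1)),
      ∫⁻ r in Ioi (0:ℝ), ENNReal.ofReal (F r α) ≤ ENNReal.ofReal (μ α * (2 * π * t ^ (-α))) := by
    filter_upwards [ae_restrict_mem measurableSet_Ioo] with α hα
    have hα0 : 0 < α := hα.1
    have hα1 : α < 1 := hα.2
    have hαne : α ≠ 0 := ne_of_gt hα0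
    have hsμ : 0 ≤ Real.sin (π * α) * μ α := mul_nonneg (hsin_nn α hα) (hnn' α hα)
    have e1 : ∀ r : ℝ, ENNReal.ofReal (F r α)
        = ENNReal.ofReal (Real.sin (π * α) * μ α) *
            ENNReal.ofReal (Real.exp (-r * t) * r ^ (α - 1)) := by
      intro r
      rw [← ENNReal.ofReal_mul hsμ]
      congr 1
      simp only [hFdef]
      ring
    calc ∫⁻ r in Ioi (0:ℝ), ENNReal.ofReal (F r α)
        = ENNReal.ofReal (Real.sin (π * α) * μ α) *
            ∫⁻ r in Ioi (0:ℝ), ENNReal.ofReal (Real.exp (-r * t) * r ^ (α - 1)) := by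
          rw [← lintegral_const_mul' _ _ ENNReal.ofReal_ne_top]
          exact lintegral_congr fun r => e1 r
      _ ≤ ENNReal.ofReal (Real.sin (π * α) * μ α) * ENNReal.ofReal ((1 / α + 1) * t ^ (-α)) :=
          mul_le_mul_right (aux_lintegral_exp_rpow ht1.le hα0 hα1.le) _
      _ = ENNReal.ofReal (Real.sin (π * α) * μ α * ((1 / α + 1) * t ^ (-α))) :=
          (ENNReal.ofReal_mul hsμ).symm
      _ ≤ ENNReal.ofReal (μ α * (2 * π * t ^ (-α))) := by
          apply ENNReal.ofReal_le_ofReal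
          have h1 : Real.sin (π * α) ≤ π * α := Real.sin_le (by positivity)
          have h2 : Real.sin (π * α) * (1 / α + 1) ≤ 2 * π := by
            calc Real.sin (π * α) * (1 / α + 1) ≤ π * α * (1 / α + 1) :=
                  mul_le_mul_of_nonneg_right h1 (by positivity)
              _ = π * (1 + α) := by field_simp
              _ ≤ 2 * π := by nlinarith
          have h3 : 0 ≤ μ α * t ^ (-α) := mul_nonneg (hnn' α hα) (Real.rpow_nonneg ht0.le _)
          calc Real.sin (π * α) * μ α * ((1 / α + 1) * t ^ (-α))
              = Real.sin (π * α) * (1 / α + 1) * (μ α * t ^ (-α)) := by ring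
            _ ≤ 2 * π * (μ α * t ^ (-α)) := mul_le_mul_of_nonneg_right h2 h3
            _ = μ α * (2 * π * t ^ (-α)) := by ring
  -- the α-integral bound
  have p1d : ∫⁻ α in Ioo (0:ℝ) 1, ENNReal.ofReal (μ α * (2 * π * t ^ (-α)))
      ≤ ENNReal.ofReal (2 * π * (a + cμ) * t ^ (-ε)) := by
    have hsplitα : Ioo (0:ℝ) 1 = Ioo 0 ε ∪ Ico ε 1 :=
      (Ioo_union_Ico_eq_Ioo hε0 hε1.le).symm
    have hdisjα : Disjoint (Ioo (0:ℝ) ε) (Ico ε 1) := by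
      apply Set.disjoint_left.mpr
      rintro x ⟨_, h2⟩ ⟨h3, _⟩
      exact absurd h3 (not_le.mpr h2)
    rw [hsplitα, lintegral_union measurableSet_Ico hdisjα]
    have parta : ∫⁻ α in Ioo (0:ℝ) ε, ENNReal.ofReal (μ α * (2 * π * t ^ (-α)))
        ≤ ENNReal.ofReal (2 * π * a * t ^ (-ε)) := by
      have hsubε : Ioo (0:ℝ) ε ⊆ Ioo 0 ϑ := Ioo_subset_Ioo_right hεϑ.le
      have hb : ∀ᵐ α ∂(volume.restrict (Ioo (0:ℝ) ε)), μ α ≤ a * Real.exp (-Real.exp (1/α)) :=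
        ae_restrict_of_ae_restrict_of_subset hsubε hμbound
      calc ∫⁻ α in Ioo (0:ℝ) ε, ENNReal.ofReal (μ α * (2 * π * t ^ (-α)))
          ≤ ∫⁻ _ in Ioo (0:ℝ) ε, ENNReal.ofReal (2 * π * a * t ^ (-ε)) := by
            apply lintegral_mono_ae
            filter_upwards [hb, ae_restrict_mem measurableSet_Ioo] with α h1 h2
            apply ENNReal.ofReal_le_ofReal
            have hα0 : 0 < α := h2.1
            have hαε : α < ε := h2.2
            have g1 : Real.exp (1/ε) ≤ Real.exp (1/α) :=
              Real.exp_le_exp.mpr (one_div_le_one_div_of_le hα0 hαε.le)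
            have g2 : (1:ℝ)/ε = Real.log (Real.log t) := by rw [hεdef, one_div_one_div]
            have g3 : Real.log t ≤ Real.exp (1/α) := by
              calc Real.log t = Real.exp (Real.log (Real.log t)) := (Real.exp_log hlogt0).symm
                _ = Real.exp (1/ε) := by rw [g2]
                _ ≤ Real.exp (1/α) := g1
            have g5 : Real.exp (-Real.log t) = 1/t := by
              rw [Real.exp_neg, Real.exp_log ht0, one_div]
            have g6 : μ α ≤ a * (1/t) := by
              calc μ α ≤ a * Real.exp (-Real.exp (1/α)) := h1
                _ ≤ a * Real.exp (-Real.log t) :=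
                    mul_le_mul_of_nonneg_left (Real.exp_le_exp.mpr (by linarith)) ha.le
                _ = a * (1/t) := by rw [g5]
            have g7 : t ^ (-α) ≤ 1 := Real.rpow_le_one_of_one_le_of_nonpos ht1.le (by linarith)
            have hμnna : 0 ≤ μ α := hnn' α ⟨hα0, lt_trans hαε hε1⟩
            calc μ α * (2 * π * t ^ (-α)) ≤ (a * (1/t)) * (2 * π * 1) := by
                  apply mul_le_mul g6 _ _ (by positivity)
                  · exact mul_le_mul_of_nonneg_left g7 (by positivity)
                  · exact mul_nonneg (by positivity) (Real.rpow_nonneg ht0.le _)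
              _ = 2 * π * a * (1/t) := by ring
              _ ≤ 2 * π * a * t ^ (-ε) := mul_le_mul_of_nonneg_left hinv_tpow (by positivity)
        _ = ENNReal.ofReal (2 * π * a * t ^ (-ε)) * volume (Ioo (0:ℝ) ε) :=
            setLIntegral_const _ _
        _ ≤ ENNReal.ofReal (2 * π * a * t ^ (-ε)) * 1 := by
            apply mul_le_mul_right
            rw [Real.volume_Ioo]
            exact ENNReal.ofReal_le_one.mpr (by linarith)
        _ = ENNReal.ofReal (2 * π * a * t ^ (-ε)) := mul_one _
    have partb : ∫⁻ α in Ico ε 1, ENNReal.ofReal (μ α * (2 * π * t ^ (-α)))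
        ≤ ENNReal.ofReal (2 * π * t ^ (-ε) * cμ) := by
      have hsub2 : Ico ε 1 ⊆ Ioo (0:ℝ) 1 := fun x hx => ⟨lt_of_lt_of_le hε0 hx.1, hx.2⟩
      calc ∫⁻ α in Ico ε 1, ENNReal.ofReal (μ α * (2 * π * t ^ (-α)))
          ≤ ∫⁻ α in Ico ε 1, ENNReal.ofReal (2 * π * t ^ (-ε)) * ENNReal.ofReal (μ α) := by
            apply lintegral_mono_ae
            filter_upwards [ae_restrict_mem measurableSet_Ico] with α hα
            rw [← ENNReal.ofReal_mul (by positivity)]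
            apply ENNReal.ofReal_le_ofReal
            have hx : t ^ (-α) ≤ t ^ (-ε) :=
              Real.rpow_le_rpow_of_exponent_le ht1.le (by linarith [hα.1])
            calc μ α * (2 * π * t ^ (-α)) ≤ μ α * (2 * π * t ^ (-ε)) := by
                  apply mul_le_mul_of_nonneg_left _ (hnn' α (hsub2 hα))
                  exact mul_le_mul_of_nonneg_left hx (by positivity)
              _ = 2 * π * t ^ (-ε) * μ α := by ring
        _ = ENNReal.ofReal (2 * π * t ^ (-ε)) * ∫⁻ α in Ico ε 1, ENNReal.ofReal (μ α) :=
            lintegral_const_mul' _ _ ENNReal.ofReal_ne_top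
        _ ≤ ENNReal.ofReal (2 * π * t ^ (-ε)) * ENNReal.ofReal cμ := by
            apply mul_le_mul_right
            calc ∫⁻ α in Ico ε 1, ENNReal.ofReal (μ α)
                ≤ ∫⁻ α in Ioo (0:ℝ) 1, ENNReal.ofReal (μ α) := lintegral_mono_set hsub2
              _ = ENNReal.ofReal cμ := by
                  rw [hcμdef]
                  exact (ofReal_integral_eq_lintegral_ofReal hint hμae).symm
        _ = ENNReal.ofReal (2 * π * t ^ (-ε) * cμ) := by
            rw [← ENNReal.ofReal_mul (by positivity)]
    calc (∫⁻ α in Ioo (0:ℝ) ε, ENNReal.ofReal (μ α * (2 * π * t ^ (-α))))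
          + ∫⁻ α in Ico ε 1, ENNReal.ofReal (μ α * (2 * π * t ^ (-α)))
        ≤ ENNReal.ofReal (2 * π * a * t ^ (-ε)) + ENNReal.ofReal (2 * π * t ^ (-ε) * cμ) :=
          add_le_add parta partb
      _ = ENNReal.ofReal (2 * π * a * t ^ (-ε) + 2 * π * t ^ (-ε) * cμ) := by
          rw [← ENNReal.ofReal_add (by positivity) (mul_nonneg (by positivity) hcμ0)]
      _ ≤ ENNReal.ofReal (2 * π * (a + cμ) * t ^ (-ε)) :=
          ENNReal.ofReal_le_ofReal (le_of_eq (by ring))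
  -- piece 1 assembled
  have hp1 : ∫⁻ r in Ioc (0:ℝ) r₀, ENNReal.ofReal (Real.exp (-r * t) / r * Gfun μ lam r)
      ≤ ENNReal.ofReal (4 / lam ^ 2 * (2 * π * (a + cμ) * t ^ (-ε))) := by
    have hFmeas : Measurable (Function.uncurry fun r α => ENNReal.ofReal (F r α)) := by
      apply Measurable.ennreal_ofReal
      simp only [hFdef, Function.uncurry]
      exact ((measurable_fst.neg.mul measurable_const).exp.mul
        (measurable_fst.pow (measurable_snd.sub measurable_const))).mul
        ((measurable_const.mul measurable_snd).sin.mul (hmeas.comp measurable_snd))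
    have hnncoef : (0:ℝ) ≤ 2 * π * (a + cμ) * t ^ (-ε) :=
      mul_nonneg (mul_nonneg (by positivity) (by linarith)) (Real.rpow_nonneg ht0.le _)
    calc ∫⁻ r in Ioc (0:ℝ) r₀, ENNReal.ofReal (Real.exp (-r * t) / r * Gfun μ lam r)
        ≤ ∫⁻ r in Ioc (0:ℝ) r₀, ENNReal.ofReal (4 / lam ^ 2) *
            ∫⁻ α in Ioo (0:ℝ) 1, ENNReal.ofReal (F r α) := lintegral_mono_ae p1a
      _ = ENNReal.ofReal (4 / lam ^ 2) *
            ∫⁻ r in Ioc (0:ℝ) r₀, ∫⁻ α in Ioo (0:ℝ) 1, ENNReal.ofReal (F r α) :=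
          lintegral_const_mul' _ _ ENNReal.ofReal_ne_top
      _ ≤ ENNReal.ofReal (4 / lam ^ 2) *
            ∫⁻ r in Ioi (0:ℝ), ∫⁻ α in Ioo (0:ℝ) 1, ENNReal.ofReal (F r α) :=
          mul_le_mul_right (lintegral_mono_set Ioc_subset_Ioi_self) _
      _ = ENNReal.ofReal (4 / lam ^ 2) *
            ∫⁻ α in Ioo (0:ℝ) 1, ∫⁻ r in Ioi (0:ℝ), ENNReal.ofReal (F r α) := by
          rw [lintegral_lintegral_swap hFmeas.aemeasurable]
      _ ≤ ENNReal.ofReal (4 / lam ^ 2) * ENNReal.ofReal (2 * π * (a + cμ) * t ^ (-ε)) := by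
          apply mul_le_mul_right
          exact le_trans (lintegral_mono_ae p1c) p1d
      _ = ENNReal.ofReal (4 / lam ^ 2 * (2 * π * (a + cμ) * t ^ (-ε))) :=
          (ENNReal.ofReal_mul (by positivity)).symm
  -- piece 2
  have hp2 : ∫⁻ r in Ioi r₀, ENNReal.ofReal (Real.exp (-r * t) / r * Gfun μ lam r)
      ≤ ENNReal.ofReal (1 / (r₀ ^ 2 * s₀) * t ^ (-ε)) := by
    have hr₀ne : r₀ ≠ 0 := hr₀0.ne'
    have hs₀ne : s₀ ≠ 0 := hs₀pos.ne'
    have hcoef : (0:ℝ) ≤ 1 / (r₀ ^ 2 * s₀) :=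
      div_nonneg zero_le_one (mul_nonneg (sq_nonneg r₀) hs₀nn)
    calc ∫⁻ r in Ioi r₀, ENNReal.ofReal (Real.exp (-r * t) / r * Gfun μ lam r)
        ≤ ∫⁻ r in Ioi r₀, ENNReal.ofReal (1 / (r₀ ^ 2 * s₀)) *
            ENNReal.ofReal (Real.exp (-r * t)) := by
          apply lintegral_mono_ae
          filter_upwards [ae_restrict_mem measurableSet_Ioi] with r hr
          have hr0 : 0 < r := lt_trans hr₀0 hr
          rw [← ENNReal.ofReal_mul hcoef]
          apply ENNReal.ofReal_le_ofReal
          calc Real.exp (-r * t) / r * Gfun μ lam r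
              ≤ Real.exp (-r * t) / r * (1 / (r₀ * s₀)) :=
                mul_le_mul_of_nonneg_left (hGub2 r hr.le) (by positivity)
            _ ≤ Real.exp (-r * t) / r₀ * (1 / (r₀ * s₀)) := by
                apply mul_le_mul_of_nonneg_right _ (by positivity)
                apply div_le_div_of_nonneg_left (Real.exp_pos _).le hr₀0 hr.le
            _ = 1 / (r₀ ^ 2 * s₀) * Real.exp (-r * t) := by field_simp
      _ = ENNReal.ofReal (1 / (r₀ ^ 2 * s₀)) * ∫⁻ r in Ioi r₀, ENNReal.ofReal (Real.exp (-r * t)) :=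
          lintegral_const_mul' _ _ ENNReal.ofReal_ne_top
      _ ≤ ENNReal.ofReal (1 / (r₀ ^ 2 * s₀)) * ENNReal.ofReal (t ^ (-ε)) := by
          apply mul_le_mul_right
          have hexpint : IntegrableOn (fun r => Real.exp (-r * t)) (Ioi r₀) := by
            have := exp_neg_integrableOn_Ioi r₀ ht0
            simpa [mul_comm] using this
          rw [← ofReal_integral_eq_lintegral_ofReal hexpint
            (ae_of_all _ fun r => (Real.exp_pos _).le), aux_integral_exp_Ioi _ ht0]
          apply ENNReal.ofReal_le_ofReal
          have h1 : Real.exp (-r₀ * t) ≤ 1 := Real.exp_le_one_iff.mpr (by nlinarith)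
          calc Real.exp (-r₀ * t) / t ≤ 1 / t := by gcongr
            _ ≤ t ^ (-ε) := hinv_tpow
      _ = ENNReal.ofReal (1 / (r₀ ^ 2 * s₀) * t ^ (-ε)) :=
          (ENNReal.ofReal_mul hcoef).symm
  -- total bound
  have main : ∫⁻ r in Ioi (0:ℝ), ENNReal.ofReal (Real.exp (-r * t) / r * Gfun μ lam r)
      ≤ ENNReal.ofReal (K * t ^ (-ε)) := by
    rw [← Ioc_union_Ioi_eq_Ioi hr₀0.le, lintegral_union measurableSet_Ioi Ioc_disjoint_Ioi_same]
    refine (add_le_add hp1 hp2).trans ?_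
    have hnnA : (0:ℝ) ≤ 4 / lam ^ 2 * (2 * π * (a + cμ) * t ^ (-ε)) := by
      apply mul_nonneg (by positivity)
      exact mul_nonneg (mul_nonneg (by positivity) (by linarith)) (Real.rpow_nonneg ht0.le _)
    rw [← ENNReal.ofReal_add hnnA
      (mul_nonneg (div_nonneg zero_le_one (mul_nonneg (sq_nonneg r₀) hs₀nn))
        (Real.rpow_nonneg ht0.le _))]
    apply ENNReal.ofReal_le_ofReal
    rw [hKdef]
    apply le_of_eq
    ring
  -- conclusion
  have hfin : |vfun μ lam v₀ t| ≤ |v₀| * (lam / π) * (K * t ^ (-ε)) := by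
    refine step0.trans ?_
    apply mul_le_mul_of_nonneg_left _ (mul_nonneg (abs_nonneg v₀) (div_pos hlam hπ).le)
    exact ENNReal.toReal_le_of_le_ofReal
      (mul_nonneg hK0 (Real.rpow_nonneg ht0.le _)) main
  calc |vfun μ lam v₀ t| ≤ |v₀| * (lam / π) * (K * t ^ (-ε)) := hfin
    _ = |v₀| * (lam / π) * K * t ^ (-ε) := by ring
    _ ≤ (|v₀| * (lam / π) * K + 1) * t ^ (-ε) := by
        apply mul_le_mul_of_nonneg_right _ (Real.rpow_nonneg ht0.le _)
        linarith
end

section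
/- Assume λ > 0, v₀ ∈ ℝ with v₀ ≠ 0, μ satisfies (aa) and (f1), let v(t) = v₀ (λ/π) ∫₀^∞ (e^{−rt}/r) G(r) dr, and let δ ∈ (0,1). Then the following are equivalent: (i) μ(α) = 0 for a.e. α ∈ (0, δ) (i.e. supp μ ⊆ [δ, 1]); (ii) there exists c > 0 such that |v(t)| ≤ c · t^{−δ} for all t > 1. -/
open MeasureTheory Set Real

namespace VDecay

noncomputable def Nr (μ : ℝ → ℝ) (r : ℝ) : ℝ :=
  ∫ α in Ioo (0:ℝ) 1, r ^ α * Real.sin (π * α) * μ α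

noncomputable def Cr (μ : ℝ → ℝ) (r : ℝ) : ℝ :=
  ∫ α in Ioo (0:ℝ) 1, r ^ α * Real.cos (π * α) * μ α

noncomputable def Mr (μ : ℝ → ℝ) (r : ℝ) : ℝ :=
  ∫ α in Ioo (0:ℝ) 1, r ^ α * μ α

noncomputable def Dr (μ : ℝ → ℝ) (lam : ℝ) (r : ℝ) : ℝ :=
  (lam + Cr μ r) ^ 2 + (Nr μ r) ^ 2

section basic

variable {μ : ℝ → ℝ} (hmeas : Measurable μ)
  (hnn : ∀ α ∈ Icc (0:ℝ) 1, 0 ≤ μ α) (hint : IntegrableOn μ (Ioo 0 1))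

/-- rpow bound on (0,1). -/
lemma rpow_le_max {r α : ℝ} (hr : 0 < r) (h0 : 0 ≤ α) (h1 : α ≤ 1) :
    r ^ α ≤ max 1 r := by
  rcases le_total r 1 with h | h
  · exact le_max_of_le_left (Real.rpow_le_one hr.le h h0)
  · calc r ^ α ≤ r ^ (1:ℝ) := Real.rpow_le_rpow_of_exponent_le h h1
    _ = r := Real.rpow_one r
    _ ≤ max 1 r := le_max_right _ _

include hmeas hnn hint in
lemma integrableOn_kernel {g : ℝ → ℝ} (hg : Measurable g) (hg1 : ∀ x, |g x| ≤ 1)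
    {r : ℝ} (hr : 0 < r) :
    IntegrableOn (fun α => r ^ α * g α * μ α) (Ioo (0:ℝ) 1) := by
  have hrm : Measurable fun α : ℝ => r ^ α := by
    have : (fun α : ℝ => r ^ α) = fun α => Real.exp (Real.log r * α) := by
      funext α; exact Real.rpow_def_of_pos hr α
    rw [this]
    exact (measurable_const.mul measurable_id).exp
  refine Integrable.mono' (hint.const_mul (max 1 r)) ?_ ?_
  · exact ((hrm.mul hg).mul hmeas).aestronglyMeasurable
  · filter_upwards [ae_restrict_mem measurableSet_Ioo] with α hα
    have hμ : 0 ≤ μ α := hnn α ⟨hα.1.le, hα.2.le⟩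
    have h1 : |r ^ α * g α * μ α| = r ^ α * |g α| * μ α := by
      rw [abs_mul, abs_mul, abs_of_nonneg (Real.rpow_nonneg hr.le α), abs_of_nonneg hμ]
    rw [Real.norm_eq_abs, h1]
    have h2 : r ^ α * |g α| ≤ max 1 r := by
      calc r ^ α * |g α| ≤ r ^ α * 1 :=
            mul_le_mul_of_nonneg_left (hg1 α) (Real.rpow_nonneg hr.le α)
      _ = r ^ α := mul_one _
      _ ≤ max 1 r := rpow_le_max hr hα.1.le hα.2.le
    exact mul_le_mul_of_nonneg_right h2 hμ

include hmeas hnn hint in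
lemma integrableOn_sin_kernel {r : ℝ} (hr : 0 < r) :
    IntegrableOn (fun α => r ^ α * Real.sin (π * α) * μ α) (Ioo (0:ℝ) 1) :=
  integrableOn_kernel hmeas hnn hint
    (Real.measurable_sin.comp (measurable_const.mul measurable_id))
    (fun x => Real.abs_sin_le_one _) hr

include hmeas hnn hint in
lemma integrableOn_cos_kernel {r : ℝ} (hr : 0 < r) :
    IntegrableOn (fun α => r ^ α * Real.cos (π * α) * μ α) (Ioo (0:ℝ) 1) :=
  integrableOn_kernel hmeas hnn hint
    (Real.measurable_cos.comp (measurable_const.mul measurable_id))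
    (fun x => Real.abs_cos_le_one _) hr

include hmeas hnn hint in
lemma integrableOn_one_kernel {r : ℝ} (hr : 0 < r) :
    IntegrableOn (fun α => r ^ α * μ α) (Ioo (0:ℝ) 1) := by
  have := integrableOn_kernel hmeas hnn hint measurable_const (g := fun _ => 1)
    (fun x => by norm_num) hr
  simpa using this


include hmeas hnn hint in
lemma Nr_nonneg {r : ℝ} (hr : 0 < r) : 0 ≤ Nr μ r := by
  refine setIntegral_nonneg measurableSet_Ioo fun α hα => ?_
  have h1 : 0 ≤ Real.sin (π * α) :=
    Real.sin_nonneg_of_nonneg_of_le_pi (mul_nonneg Real.pi_pos.le hα.1.le)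
      (by nlinarith [hα.2, Real.pi_pos])
  have h2 := hnn α ⟨hα.1.le, hα.2.le⟩
  have h3 : (0:ℝ) ≤ r ^ α := Real.rpow_nonneg hr.le α
  positivity

include hmeas hnn hint in
lemma Nr_mono {r r' : ℝ} (hr : 0 < r) (hrr : r ≤ r') : Nr μ r ≤ Nr μ r' := by
  refine setIntegral_mono_on (integrableOn_sin_kernel hmeas hnn hint hr)
    (integrableOn_sin_kernel hmeas hnn hint (hr.trans_le hrr)) measurableSet_Ioo
    fun α hα => ?_
  have h1 : 0 ≤ Real.sin (π * α) :=
    Real.sin_nonneg_of_nonneg_of_le_pi (mul_nonneg Real.pi_pos.le hα.1.le)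
      (by nlinarith [hα.2, Real.pi_pos])
  have h2 : r ^ α ≤ r' ^ α := Real.rpow_le_rpow hr.le hrr hα.1.le
  have hμ := hnn α ⟨hα.1.le, hα.2.le⟩
  exact mul_le_mul_of_nonneg_right (mul_le_mul_of_nonneg_right h2 h1) hμ

include hmeas hnn hint in
lemma Nr_le_Mr {r : ℝ} (hr : 0 < r) : Nr μ r ≤ Mr μ r := by
  refine setIntegral_mono_on (integrableOn_sin_kernel hmeas hnn hint hr)
    (integrableOn_one_kernel hmeas hnn hint hr) measurableSet_Ioo fun α hα => ?_
  have h1 : Real.sin (π * α) ≤ 1 := Real.sin_le_one _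
  have hμ := hnn α ⟨hα.1.le, hα.2.le⟩
  have hrn := Real.rpow_nonneg hr.le α
  calc r ^ α * Real.sin (π * α) * μ α ≤ r ^ α * 1 * μ α :=
        mul_le_mul_of_nonneg_right (mul_le_mul_of_nonneg_left h1 hrn) hμ
  _ = r ^ α * μ α := by ring

include hmeas hnn hint in
lemma abs_Cr_le_Mr {r : ℝ} (hr : 0 < r) : |Cr μ r| ≤ Mr μ r := by
  have habs : |Cr μ r| ≤ ∫ α in Ioo (0:ℝ) 1, |r ^ α * Real.cos (π * α) * μ α| := by
    simpa [Cr, Real.norm_eq_abs, abs_mul] using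
      norm_integral_le_integral_norm (μ := volume.restrict (Ioo (0:ℝ) 1))
        (fun α => r ^ α * Real.cos (π * α) * μ α)
  refine habs.trans ?_
  simp only [abs_mul]
  refine setIntegral_mono_on (IntegrableOn.congr_fun
      ((integrableOn_cos_kernel hmeas hnn hint hr).abs)
      (fun α _ => by rw [abs_mul, abs_mul]) measurableSet_Ioo)
    (integrableOn_one_kernel hmeas hnn hint hr) measurableSet_Ioo fun α hα => ?_
  have hμ := hnn α ⟨hα.1.le, hα.2.le⟩
  have hrn := Real.rpow_nonneg hr.le α
  rw [abs_of_nonneg hrn, abs_of_nonneg hμ]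
  calc r ^ α * |Real.cos (π * α)| * μ α ≤ r ^ α * 1 * μ α :=
        mul_le_mul_of_nonneg_right
          (mul_le_mul_of_nonneg_left (Real.abs_cos_le_one _) hrn) hμ
  _ = r ^ α * μ α := by ring

include hmeas hnn hint in
lemma Mr_le_cmu {r : ℝ} (hr : 0 < r) (hr1 : r ≤ 1) :
    Mr μ r ≤ ∫ α in Ioo (0:ℝ) 1, μ α := by
  refine setIntegral_mono_on (integrableOn_one_kernel hmeas hnn hint hr) hint
    measurableSet_Ioo fun α hα => ?_
  have hμ := hnn α ⟨hα.1.le, hα.2.le⟩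
  have h1 : r ^ α ≤ 1 := Real.rpow_le_one hr.le hr1 hα.1.le
  nlinarith

include hmeas hnn hint in
/-- Positivity of the weighted integral over `Ioo 0 b`. -/
lemma sin_kernel_pos {b : ℝ} (hb : 0 < b) (hb1 : b ≤ 1)
    (hsup : 0 < volume (Function.support μ ∩ Ioo 0 b)) {r : ℝ} (hr : 0 < r) :
    0 < ∫ α in Ioo (0:ℝ) b, r ^ α * Real.sin (π * α) * μ α := by
  have hsub : Ioo (0:ℝ) b ⊆ Ioo 0 1 := Ioo_subset_Ioo le_rfl hb1
  have hI : IntegrableOn (fun α => r ^ α * Real.sin (π * α) * μ α) (Ioo 0 b) :=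
    (integrableOn_sin_kernel hmeas hnn hint hr).mono_set hsub
  have hnn' : 0 ≤ᵐ[volume.restrict (Ioo (0:ℝ) b)]
      fun α => r ^ α * Real.sin (π * α) * μ α := by
    filter_upwards [ae_restrict_mem measurableSet_Ioo] with α hα
    have h1 : 0 ≤ Real.sin (π * α) :=
      Real.sin_nonneg_of_nonneg_of_le_pi (mul_nonneg Real.pi_pos.le hα.1.le)
        (by nlinarith [hα.2, hb1, Real.pi_pos])
    have h2 := hnn α ⟨hα.1.le, ((hα.2.trans_le hb1)).le⟩
    have h3 : (0:ℝ) ≤ r ^ α := Real.rpow_nonneg hr.le α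
    positivity
  rw [setIntegral_pos_iff_support_of_nonneg_ae hnn' hI]
  refine hsup.trans_le (measure_mono fun α hα => ?_)
  obtain ⟨hμα, hα⟩ := hα
  refine ⟨?_, hα⟩
  have h1 : 0 < Real.sin (π * α) :=
    Real.sin_pos_of_pos_of_lt_pi (by nlinarith [Real.pi_pos, hα.1])
      (by nlinarith [hα.2, hb1, Real.pi_pos])
  have h2 : (0:ℝ) < r ^ α := Real.rpow_pos_of_pos hr α
  simp only [Function.mem_support] at hμα ⊢
  intro h
  rcases mul_eq_zero.1 h with h' | h'
  · rcases mul_eq_zero.1 h' with h'' | h''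
    · exact h2.ne' h''
    · exact h1.ne' h''
  · exact hμα h'

lemma measurable_rpow2 : Measurable fun p : ℝ × ℝ => p.1 ^ p.2 := by
  have h : ∀ p : ℝ × ℝ, p.1 ^ p.2 =
      if p.1 = 0 then (if p.2 = 0 then 1 else 0)
      else Real.exp (Real.log p.1 * p.2) * if p.1 < 0 then Real.cos (p.2 * π) else 1 := by
    intro p
    rcases lt_trichotomy p.1 0 with h | h | h
    · rw [if_neg h.ne, if_pos h, Real.rpow_def_of_neg h]
    · rw [if_pos h, h]
      rcases eq_or_ne p.2 0 with h2 | h2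
      · rw [if_pos h2, h2, Real.rpow_zero]
      · rw [if_neg h2, Real.zero_rpow h2]
    · rw [if_neg h.ne', if_neg (not_lt.2 h.le), Real.rpow_def_of_pos h, mul_one]
  have hs0 : MeasurableSet {p : ℝ × ℝ | p.1 = 0} :=
    measurable_fst (measurableSet_singleton 0)
  have hs2 : MeasurableSet {p : ℝ × ℝ | p.2 = 0} :=
    measurable_snd (measurableSet_singleton 0)
  have hsneg : MeasurableSet {p : ℝ × ℝ | p.1 < 0} :=
    measurable_fst measurableSet_Iio
  simp only [funext h]
  exact Measurable.ite hs0 (Measurable.ite hs2 measurable_const measurable_const)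
    ((((Real.measurable_log.comp measurable_fst).mul measurable_snd).exp).mul
      (Measurable.ite hsneg (Real.measurable_cos.comp (measurable_snd.mul_const π))
        measurable_const))

include hmeas in
lemma measurable_Nr : Measurable (Nr μ) := by
  have : StronglyMeasurable fun p : ℝ × ℝ => p.1 ^ p.2 * Real.sin (π * p.2) * μ p.2 :=
    ((measurable_rpow2.mul
      (Real.measurable_sin.comp (measurable_const.mul measurable_snd))).mul
      (hmeas.comp measurable_snd)).stronglyMeasurable
  exact (MeasureTheory.StronglyMeasurable.integral_prod_right' this).measurable

include hmeas in
lemma measurable_Cr : Measurable (Cr μ) := by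
  have : StronglyMeasurable fun p : ℝ × ℝ => p.1 ^ p.2 * Real.cos (π * p.2) * μ p.2 :=
    ((measurable_rpow2.mul
      (Real.measurable_cos.comp (measurable_const.mul measurable_snd))).mul
      (hmeas.comp measurable_snd)).stronglyMeasurable
  exact (MeasureTheory.StronglyMeasurable.integral_prod_right' this).measurable

include hmeas in
lemma measurable_G (lam : ℝ) :
    Measurable fun r => Nr μ r / Dr μ lam r := by
  refine (measurable_Nr hmeas).div ?_
  exact ((measurable_const.add (measurable_Cr hmeas)).pow measurable_const).add
    ((measurable_Nr hmeas).pow measurable_const)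

include hmeas hnn hint in
lemma prodF_integrable (hf1 : IntegrableOn (fun α => μ α / α) (Ioo 0 1)) :
    Integrable (fun p : ℝ × ℝ => p.1 ^ (p.2 - 1) * Real.sin (π * p.2) * μ p.2)
      ((volume.restrict (Ioo (0:ℝ) 1)).prod (volume.restrict (Ioo (0:ℝ) 1))) := by
  have hFmeas : Measurable fun p : ℝ × ℝ => p.1 ^ (p.2 - 1) * Real.sin (π * p.2) * μ p.2 :=
    ((measurable_rpow2.comp (measurable_fst.prodMk
        (measurable_snd.sub measurable_const))).mul
      (Real.measurable_sin.comp (measurable_const.mul measurable_snd))).mul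
      (hmeas.comp measurable_snd)
  rw [integrable_prod_iff' hFmeas.aestronglyMeasurable]
  constructor
  · filter_upwards [ae_restrict_mem measurableSet_Ioo] with α hα
    have h1 : IntegrableOn (fun r : ℝ => r ^ (α - 1)) (Ioo (0:ℝ) 1) := by
      have h2 : IntervalIntegrable (fun r : ℝ => r ^ (α - 1)) volume 0 1 :=
        intervalIntegral.intervalIntegrable_rpow' (by linarith [hα.1])
      rw [intervalIntegrable_iff_integrableOn_Ioc_of_le zero_le_one] at h2
      exact h2.mono_set Ioo_subset_Ioc_self
    exact IntegrableOn.congr_fun (h1.mul_const (Real.sin (π * α) * μ α))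
      (fun r _ => (mul_assoc _ _ _).symm) measurableSet_Ioo
  · have hcomp : ∀ α ∈ Ioo (0:ℝ) 1,
        (∫ r in Ioo (0:ℝ) 1, ‖r ^ (α - 1) * Real.sin (π * α) * μ α‖)
          = (Real.sin (π * α) * μ α) * (1 / α) := by
      intro α hα
      have hμα := hnn α ⟨hα.1.le, hα.2.le⟩
      have hsin : 0 ≤ Real.sin (π * α) :=
        Real.sin_nonneg_of_nonneg_of_le_pi (mul_nonneg Real.pi_pos.le hα.1.le)
          (by nlinarith [hα.2, Real.pi_pos])
      have h2 : (∫ r in Ioo (0:ℝ) 1, ‖r ^ (α - 1) * Real.sin (π * α) * μ α‖)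
          = ∫ r in Ioo (0:ℝ) 1, r ^ (α - 1) * (Real.sin (π * α) * μ α) := by
        refine setIntegral_congr_fun measurableSet_Ioo fun r hr => ?_
        have hr0 : (0:ℝ) < r ^ (α - 1) := Real.rpow_pos_of_pos hr.1 _
        rw [Real.norm_eq_abs, abs_mul, abs_mul, abs_of_pos hr0, abs_of_nonneg hsin,
          abs_of_nonneg hμα, mul_assoc]
      have h3 : ∫ r in Ioo (0:ℝ) 1, r ^ (α - 1) = 1 / α := by
        have h4 := integral_rpow (a := 0) (b := 1)
          (Or.inl (by linarith [hα.1] : (-1:ℝ) < α - 1))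
        rw [intervalIntegral.integral_of_le zero_le_one] at h4
        rw [← MeasureTheory.integral_Ioc_eq_integral_Ioo, h4]
        rw [sub_add_cancel, Real.one_rpow, Real.zero_rpow (ne_of_gt hα.1)]
        ring
      rw [h2, MeasureTheory.integral_mul_const, h3]
      ring
    refine Integrable.mono' (hf1.const_mul 1) ?_ ?_
    · exact (MeasureTheory.AEStronglyMeasurable.integral_prod_right'
        (f := fun p : ℝ × ℝ => ‖p.2 ^ (p.1 - 1) * Real.sin (π * p.1) * μ p.1‖)
        (((measurable_rpow2.comp (measurable_snd.prodMk
            (measurable_fst.sub measurable_const))).mul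
          (Real.measurable_sin.comp (measurable_const.mul measurable_fst))).mul
          (hmeas.comp measurable_fst)).norm.aestronglyMeasurable)
    · filter_upwards [ae_restrict_mem measurableSet_Ioo] with α hα
      rw [hcomp α hα]
      have hμα := hnn α ⟨hα.1.le, hα.2.le⟩
      have hsin0 : 0 ≤ Real.sin (π * α) :=
        Real.sin_nonneg_of_nonneg_of_le_pi (mul_nonneg Real.pi_pos.le hα.1.le)
          (by nlinarith [hα.2, Real.pi_pos])
      have hsin1 : Real.sin (π * α) ≤ 1 := Real.sin_le_one _
      have h5 : (0:ℝ) ≤ 1 / α := by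
        have := hα.1; positivity
      rw [Real.norm_eq_abs,
        abs_of_nonneg (mul_nonneg (mul_nonneg hsin0 hμα) h5), one_mul,
        div_eq_mul_one_div (μ α) α]
      exact mul_le_mul_of_nonneg_right (mul_le_of_le_one_left hμα hsin1) h5

include hmeas hnn hint in
lemma integrableOn_Nr_div (hf1 : IntegrableOn (fun α => μ α / α) (Ioo 0 1)) :
    IntegrableOn (fun r => Nr μ r / r) (Ioo (0:ℝ) 1) := by
  have hI := (prodF_integrable hmeas hnn hint hf1).integral_prod_left
  refine hI.congr ?_
  filter_upwards [ae_restrict_mem measurableSet_Ioo] with r hr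
  have h6 : ∀ α : ℝ, r ^ (α - 1) * Real.sin (π * α) * μ α
      = r ^ α * Real.sin (π * α) * μ α / r := by
    intro α
    rw [show α - 1 = α - (1:ℝ) by ring, Real.rpow_sub hr.1, Real.rpow_one]
    ring
  simp only [h6]
  rw [MeasureTheory.integral_div]
  rfl

lemma Gfun_eq (μ : ℝ → ℝ) (lam r : ℝ) : Gfun μ lam r = Nr μ r / Dr μ lam r := rfl

include hmeas hnn hint in
lemma integrableOn_sinmu : IntegrableOn (fun α => Real.sin (π * α) * μ α) (Ioo (0:ℝ) 1) := by
  refine IntegrableOn.congr_fun (integrableOn_sin_kernel hmeas hnn hint one_pos)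
    (fun α _ => by rw [Real.one_rpow, one_mul]) measurableSet_Ioo

include hmeas hnn hint in
lemma Nr_lower {b r : ℝ} (hb : 0 < b) (hb1 : b ≤ 1) (hr : 0 < r) (hr1 : r ≤ 1) :
    r ^ b * ∫ α in Ioo (0:ℝ) b, Real.sin (π * α) * μ α ≤ Nr μ r := by
  have hsub : Ioo (0:ℝ) b ⊆ Ioo 0 1 := Ioo_subset_Ioo le_rfl hb1
  have hsm : IntegrableOn (fun α => Real.sin (π * α) * μ α) (Ioo (0:ℝ) b) :=
    (integrableOn_sinmu hmeas hnn hint).mono_set hsub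
  have step1 : r ^ b * (∫ α in Ioo (0:ℝ) b, Real.sin (π * α) * μ α)
      ≤ ∫ α in Ioo (0:ℝ) b, r ^ α * Real.sin (π * α) * μ α := by
    rw [← MeasureTheory.integral_const_mul]
    refine setIntegral_mono_on (hsm.const_mul _)
      ((integrableOn_sin_kernel hmeas hnn hint hr).mono_set hsub)
      measurableSet_Ioo fun α hα => ?_
    have h1 : r ^ b ≤ r ^ α := Real.rpow_le_rpow_of_exponent_ge hr hr1 hα.2.le
    have hsin : 0 ≤ Real.sin (π * α) :=
      Real.sin_nonneg_of_nonneg_of_le_pi (mul_nonneg Real.pi_pos.le hα.1.le)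
        (by nlinarith [hα.2, hb1, Real.pi_pos])
    have hμα := hnn α ⟨hα.1.le, ((hα.2.trans_le hb1)).le⟩
    calc r ^ b * (Real.sin (π * α) * μ α) ≤ r ^ α * (Real.sin (π * α) * μ α) :=
          mul_le_mul_of_nonneg_right h1 (mul_nonneg hsin hμα)
    _ = r ^ α * Real.sin (π * α) * μ α := by ring
  refine step1.trans ?_
  refine setIntegral_mono_set (integrableOn_sin_kernel hmeas hnn hint hr) ?_
    (HasSubset.Subset.eventuallyLE hsub)
  filter_upwards [ae_restrict_mem measurableSet_Ioo] with α hα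
  have hsin : 0 ≤ Real.sin (π * α) :=
    Real.sin_nonneg_of_nonneg_of_le_pi (mul_nonneg Real.pi_pos.le hα.1.le)
      (by nlinarith [hα.2, Real.pi_pos])
  have hμα := hnn α ⟨hα.1.le, hα.2.le⟩
  have : (0:ℝ) ≤ r ^ α := Real.rpow_nonneg hr.le α
  positivity

include hmeas hnn hint in
lemma exists_r0 {lam : ℝ} (hlam : 0 < lam)
    (hpos : 0 < ∫ α in Ioo (0:ℝ) 1, μ α)
    (hf1 : IntegrableOn (fun α => μ α / α) (Ioo 0 1)) :
    ∃ r₀ : ℝ, 0 < r₀ ∧ r₀ ≤ 1 ∧ ∀ r, 0 < r → r ≤ r₀ → Mr μ r ≤ lam / 2 := by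
  set cmu : ℝ := ∫ α in Ioo (0:ℝ) 1, μ α with hcmu
  set cbar : ℝ := ∫ α in Ioo (0:ℝ) 1, μ α / α with hcbar
  have hcbar0 : 0 ≤ cbar := by
    refine setIntegral_nonneg measurableSet_Ioo fun α hα => ?_
    have := hnn α ⟨hα.1.le, hα.2.le⟩
    have := hα.1
    positivity
  set a : ℝ := min (1/2) (lam / (4 * (cbar + 1))) with ha_def
  have ha0 : 0 < a := by
    refine lt_min (by norm_num) ?_
    have : (0:ℝ) < 4 * (cbar + 1) := by nlinarith
    positivity
  have ha1 : a ≤ 1 := (min_le_left _ _).trans (by norm_num)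
  set y : ℝ := lam / (4 * (cmu + 1)) with hy_def
  have hy0 : 0 < y := by
    have : (0:ℝ) < 4 * (cmu + 1) := by nlinarith
    positivity
  refine ⟨min 1 (y ^ a⁻¹), lt_min one_pos (Real.rpow_pos_of_pos hy0 _),
    min_le_left _ _, fun r hr hrle => ?_⟩
  have hr1 : r ≤ 1 := hrle.trans (min_le_left _ _)
  have hMb : Mr μ r ≤ a * cbar + r ^ a * cmu := by
    have hRint : IntegrableOn (fun α => a * (μ α / α) + r ^ a * μ α) (Ioo (0:ℝ) 1) :=
      (hf1.const_mul a).add (hint.const_mul _)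
    have hstep : Mr μ r ≤ ∫ α in Ioo (0:ℝ) 1, (a * (μ α / α) + r ^ a * μ α) := by
      refine setIntegral_mono_on (integrableOn_one_kernel hmeas hnn hint hr) hRint
        measurableSet_Ioo fun α hα => ?_
      have hμα := hnn α ⟨hα.1.le, hα.2.le⟩
      have hα0 := hα.1
      have hra : (0:ℝ) ≤ r ^ a := Real.rpow_nonneg hr.le a
      rcases le_total α a with hcase | hcase
      · have h1 : r ^ α ≤ 1 := Real.rpow_le_one hr.le hr1 hα.1.le
        have hq : μ α / α * α = μ α := div_mul_cancel₀ _ (ne_of_gt hα0)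
        have hda : (0:ℝ) ≤ μ α / α := by positivity
        nlinarith
      · have h1 : r ^ α ≤ r ^ a := Real.rpow_le_rpow_of_exponent_ge hr hr1 hcase
        have hda : (0:ℝ) ≤ μ α / α := by positivity
        nlinarith
    rwa [MeasureTheory.integral_add (hf1.const_mul a) (hint.const_mul _),
      MeasureTheory.integral_const_mul, MeasureTheory.integral_const_mul] at hstep
  have hra_y : r ^ a ≤ y := by
    have h1 : r ^ a ≤ (y ^ a⁻¹) ^ a :=
      Real.rpow_le_rpow hr.le (hrle.trans (min_le_right _ _)) ha0.le
    have h2 : (y ^ a⁻¹) ^ a = y := by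
      rw [← Real.rpow_mul hy0.le, inv_mul_cancel₀ (ne_of_gt ha0), Real.rpow_one]
    rw [h2] at h1; exact h1
  have hterm1 : a * cbar ≤ lam / 4 := by
    have h1 : a ≤ lam / (4 * (cbar + 1)) := min_le_right _ _
    have h2 : a * cbar ≤ lam / (4 * (cbar + 1)) * cbar :=
      mul_le_mul_of_nonneg_right h1 hcbar0
    have h3 : (0:ℝ) < 4 * (cbar + 1) := by nlinarith
    refine h2.trans ?_
    rw [div_mul_eq_mul_div, div_le_div_iff₀ h3 (by norm_num)]
    nlinarith
  have hterm2 : r ^ a * cmu ≤ lam / 4 := by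
    have h2 : r ^ a * cmu ≤ y * cmu :=
      mul_le_mul_of_nonneg_right hra_y hpos.le
    have h3 : (0:ℝ) < 4 * (cmu + 1) := by nlinarith
    refine h2.trans ?_
    rw [hy_def, div_mul_eq_mul_div, div_le_div_iff₀ h3 (by norm_num)]
    nlinarith
  linarith

include hmeas hnn hint in
lemma support_pos (hpos : 0 < ∫ α in Ioo (0:ℝ) 1, μ α) :
    0 < volume (Function.support μ ∩ Ioo (0:ℝ) 1) := by
  have hnn' : 0 ≤ᵐ[volume.restrict (Ioo (0:ℝ) 1)] μ := by
    filter_upwards [ae_restrict_mem measurableSet_Ioo] with α hα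
    exact hnn α ⟨hα.1.le, hα.2.le⟩
  exact (setIntegral_pos_iff_support_of_nonneg_ae hnn' hint).1 hpos

include hmeas hnn hint in
lemma Dr_nonneg (lam r : ℝ) : 0 ≤ Dr μ lam r := by unfold Dr; positivity

include hmeas hnn hint in
lemma Dmin_le_Dr {lam : ℝ} (hlam : 0 < lam) {r₀ : ℝ} (hr₀ : 0 < r₀) (hr₀1 : r₀ ≤ 1)
    (hsmall : ∀ r, 0 < r → r ≤ r₀ → Mr μ r ≤ lam / 2)
    {r : ℝ} (hr : 0 < r) (hr1 : r ≤ 1) :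
    min (lam ^ 2 / 4) (Nr μ r₀ ^ 2) ≤ Dr μ lam r := by
  rcases le_total r r₀ with hcase | hcase
  · have hC : |Cr μ r| ≤ lam / 2 :=
      (abs_Cr_le_Mr hmeas hnn hint hr).trans (hsmall r hr hcase)
    have h1 : lam / 2 ≤ lam + Cr μ r := by
      have := abs_le.1 hC
      linarith [this.1]
    have h2 : lam ^ 2 / 4 ≤ (lam + Cr μ r) ^ 2 := by nlinarith
    refine (min_le_left _ _).trans (h2.trans ?_)
    have := sq_nonneg (Nr μ r)
    unfold Dr; linarith
  · have h1 : Nr μ r₀ ≤ Nr μ r := Nr_mono hmeas hnn hint hr₀ hcase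
    have h0 : 0 ≤ Nr μ r₀ := Nr_nonneg hmeas hnn hint hr₀
    have h2 : Nr μ r₀ ^ 2 ≤ Nr μ r ^ 2 := by nlinarith
    refine (min_le_right _ _).trans (h2.trans ?_)
    have := sq_nonneg (lam + Cr μ r)
    unfold Dr; linarith

include hmeas hnn hint in
lemma Gfun_nonneg {lam : ℝ} {r : ℝ} (hr : 0 < r) : 0 ≤ Gfun μ lam r := by
  rw [Gfun_eq]
  exact div_nonneg (Nr_nonneg hmeas hnn hint hr) (Dr_nonneg hmeas hnn hint lam r)

include hmeas hnn hint in
lemma Gfun_le_of_one_le {lam : ℝ} (hN1 : 0 < Nr μ 1) {r : ℝ} (hr : 1 ≤ r) :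
    Gfun μ lam r ≤ 1 / Nr μ 1 := by
  have hN : 0 < Nr μ r := lt_of_lt_of_le hN1 (Nr_mono hmeas hnn hint one_pos hr)
  rw [Gfun_eq]
  have h1 : Nr μ r / Dr μ lam r ≤ Nr μ r / Nr μ r ^ 2 := by
    apply div_le_div_of_nonneg_left hN.le (pow_pos hN 2)
    have := sq_nonneg (lam + Cr μ r)
    unfold Dr; linarith
  refine h1.trans ?_
  have h2 : Nr μ r / Nr μ r ^ 2 = 1 / Nr μ r := by
    rw [sq, div_mul_eq_div_div, div_self hN.ne']
  rw [h2]
  exact one_div_le_one_div_of_le hN1 (Nr_mono hmeas hnn hint one_pos hr)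

include hmeas in
lemma measurable_H (lam t : ℝ) :
    Measurable fun r => Real.exp (-r * t) / r * Gfun μ lam r := by
  have h1 : Measurable fun r : ℝ => Real.exp (-r * t) / r :=
    ((measurable_id.neg.mul_const t).exp).div measurable_id
  have h2 : Measurable fun r => Gfun μ lam r := by
    have := measurable_G hmeas (μ := μ) lam
    simpa [funext fun r => Gfun_eq μ lam r] using this
  exact h1.mul h2

include hmeas hnn hint in
lemma integrableOn_H {lam : ℝ} (hlam : 0 < lam)
    (hf1 : IntegrableOn (fun α => μ α / α) (Ioo 0 1))
    {Dmin : ℝ} (hDmin : 0 < Dmin)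
    (hD : ∀ r, 0 < r → r ≤ 1 → Dmin ≤ Dr μ lam r)
    (hN1 : 0 < Nr μ 1) {t : ℝ} (ht : 0 < t) :
    IntegrableOn (fun r => Real.exp (-r * t) / r * Gfun μ lam r) (Ioi (0:ℝ)) := by
  rw [← Ioc_union_Ioi_eq_Ioi (zero_le_one (α := ℝ))]
  refine IntegrableOn.union ?_ ?_
  · rw [integrableOn_Ioc_iff_integrableOn_Ioo]
    refine Integrable.mono' ((integrableOn_Nr_div hmeas hnn hint hf1).const_mul (1 / Dmin))
      ((measurable_H hmeas lam t).aestronglyMeasurable) ?_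
    filter_upwards [ae_restrict_mem measurableSet_Ioo] with r hr
    have hG0 : 0 ≤ Gfun μ lam r := Gfun_nonneg hmeas hnn hint hr.1
    have hexp : Real.exp (-r * t) ≤ 1 :=
      Real.exp_le_one_iff.2 (by nlinarith [hr.1, ht])
    have hN0 : 0 ≤ Nr μ r := Nr_nonneg hmeas hnn hint hr.1
    have hr0 : (0:ℝ) < r := hr.1
    rw [Real.norm_eq_abs,
      abs_of_nonneg (mul_nonneg (div_nonneg (Real.exp_pos _).le hr0.le) hG0)]
    have hGle : Gfun μ lam r ≤ Nr μ r / Dmin := by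
      rw [Gfun_eq]
      exact div_le_div_of_nonneg_left hN0 hDmin (hD r hr.1 hr.2.le)
    have hfrac : Real.exp (-r * t) / r ≤ 1 / r :=
      (div_le_div_iff_of_pos_right hr0).2 hexp
    calc Real.exp (-r * t) / r * Gfun μ lam r
        ≤ 1 / r * (Nr μ r / Dmin) :=
          mul_le_mul hfrac hGle hG0 (le_of_lt (one_div_pos.2 hr0))
    _ = 1 / Dmin * (Nr μ r / r) := by ring
  · refine Integrable.mono' ((exp_neg_integrableOn_Ioi 1 ht).const_mul (1 / Nr μ 1))
      ((measurable_H hmeas lam t).aestronglyMeasurable) ?_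
    filter_upwards [ae_restrict_mem measurableSet_Ioi] with r hr
    have hr0 : (0:ℝ) < r := lt_of_lt_of_le one_pos hr.le
    have hG0 : 0 ≤ Gfun μ lam r := Gfun_nonneg hmeas hnn hint hr0
    have hGle : Gfun μ lam r ≤ 1 / Nr μ 1 := Gfun_le_of_one_le hmeas hnn hint hN1 hr.le
    rw [Real.norm_eq_abs, abs_of_nonneg (mul_nonneg (by positivity) hG0)]
    have h1 : Real.exp (-r * t) / r ≤ Real.exp (-r * t) :=
      div_le_self (Real.exp_pos _).le hr.le
    calc Real.exp (-r * t) / r * Gfun μ lam r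
        ≤ Real.exp (-r * t) * (1 / Nr μ 1) :=
          mul_le_mul h1 hGle hG0 (Real.exp_pos _).le
    _ = 1 / Nr μ 1 * Real.exp (-t * r) := by rw [neg_mul, mul_comm r t, ← neg_mul]; ring

include hmeas hnn hint in
lemma vfun_abs {lam v₀ t : ℝ} (hlam : 0 < lam) :
    |vfun μ lam v₀ t| = |v₀| * (lam / π) *
      ∫ r in Ioi (0:ℝ), Real.exp (-r * t) / r * Gfun μ lam r := by
  have hI : 0 ≤ ∫ r in Ioi (0:ℝ), Real.exp (-r * t) / r * Gfun μ lam r :=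
    setIntegral_nonneg measurableSet_Ioi fun r hr =>
      mul_nonneg (div_nonneg (Real.exp_pos _).le (le_of_lt hr))
        (Gfun_nonneg hmeas hnn hint hr)
  rw [vfun, abs_mul, abs_mul, abs_of_nonneg hI,
    abs_of_pos (div_pos hlam Real.pi_pos)]

include hmeas hnn hint in
lemma forward {lam v₀ : ℝ} (hlam : 0 < lam) (hv₀ : v₀ ≠ 0)
    (hpos : 0 < ∫ α in Ioo (0:ℝ) 1, μ α)
    (hf1 : IntegrableOn (fun α => μ α / α) (Ioo 0 1))
    {δ : ℝ} (hδ0 : 0 < δ) (hδ1 : δ < 1)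
    (hae : ∀ᵐ α ∂(volume.restrict (Ioo 0 δ)), μ α = 0) :
    ∃ c > 0, ∀ t > (1:ℝ), |vfun μ lam v₀ t| ≤ c * t ^ (-δ) := by
  obtain ⟨r₀, hr₀0, hr₀1, hsmall⟩ := exists_r0 hmeas hnn hint hlam hpos hf1
  have hsup := support_pos hmeas hnn hint hpos
  have hN1 : 0 < Nr μ 1 := by
    have := sin_kernel_pos hmeas hnn hint one_pos le_rfl hsup one_pos
    exact this
  have hNr₀ : 0 < Nr μ r₀ := sin_kernel_pos hmeas hnn hint one_pos le_rfl hsup hr₀0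
  set Dmin : ℝ := min (lam ^ 2 / 4) (Nr μ r₀ ^ 2) with hDmin_def
  have hDmin : 0 < Dmin := lt_min (by positivity) (pow_pos hNr₀ 2)
  have hD : ∀ r, 0 < r → r ≤ 1 → Dmin ≤ Dr μ lam r := fun r hr hr1 =>
    Dmin_le_Dr hmeas hnn hint hlam hr₀0 hr₀1 hsmall hr hr1
  set cmu : ℝ := ∫ α in Ioo (0:ℝ) 1, μ α with hcmu_def
  have haeq : ∀ᵐ α : ℝ ∂volume, α ∈ Ioo (0:ℝ) δ → μ α = 0 := by
    rwa [ae_restrict_iff' measurableSet_Ioo] at hae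
  have hNub : ∀ r : ℝ, 0 < r → r ≤ 1 → Nr μ r ≤ r ^ δ * cmu := by
    intro r hr hr1
    have hmono : ∀ᵐ α ∂volume.restrict (Ioo (0:ℝ) 1),
        r ^ α * Real.sin (π * α) * μ α ≤ r ^ δ * μ α := by
      filter_upwards [ae_restrict_of_ae haeq, ae_restrict_mem measurableSet_Ioo]
        with α h1 h2
      have hμα := hnn α ⟨h2.1.le, h2.2.le⟩
      rcases lt_or_ge α δ with hc | hc
      · rw [h1 ⟨h2.1, hc⟩]; simp
      · have h3 : r ^ α ≤ r ^ δ := Real.rpow_le_rpow_of_exponent_ge hr hr1 hc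
        have h4 : Real.sin (π * α) ≤ 1 := Real.sin_le_one _
        have h5 : (0:ℝ) ≤ r ^ α := Real.rpow_nonneg hr.le α
        calc r ^ α * Real.sin (π * α) * μ α ≤ r ^ α * 1 * μ α :=
              mul_le_mul_of_nonneg_right (mul_le_mul_of_nonneg_left h4 h5) hμα
        _ = r ^ α * μ α := by ring
        _ ≤ r ^ δ * μ α := mul_le_mul_of_nonneg_right h3 hμα
    have := integral_mono_ae (integrableOn_sin_kernel hmeas hnn hint hr)
      (hint.const_mul (r ^ δ)) hmono
    rwa [MeasureTheory.integral_const_mul] at this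
  set A : ℝ := cmu / Dmin * Real.Gamma δ + 1 / Nr μ 1 with hA_def
  have hApos : 0 < A :=
    add_pos (mul_pos (div_pos hpos hDmin) (Real.Gamma_pos_of_pos hδ0))
      (one_div_pos.2 hN1)
  refine ⟨|v₀| * (lam / π) * A,
    mul_pos (mul_pos (abs_pos.2 hv₀) (div_pos hlam Real.pi_pos)) hApos,
    fun t ht => ?_⟩
  have ht0 : (0:ℝ) < t := lt_trans one_pos ht
  have hHI := integrableOn_H hmeas hnn hint hlam hf1 hDmin hD hN1 ht0
  rw [vfun_abs hmeas hnn hint hlam]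
  have hsplit : (∫ r in Ioi (0:ℝ), Real.exp (-r * t) / r * Gfun μ lam r)
      = (∫ r in Ioc (0:ℝ) 1, Real.exp (-r * t) / r * Gfun μ lam r)
        + ∫ r in Ioi (1:ℝ), Real.exp (-r * t) / r * Gfun μ lam r := by
    rw [← setIntegral_union (Ioc_disjoint_Ioi le_rfl) measurableSet_Ioi
      (hHI.mono_set Ioc_subset_Ioi_self) (hHI.mono_set (Ioi_subset_Ioi zero_le_one)),
      Ioc_union_Ioi_eq_Ioi zero_le_one]
  have hGamInt : IntegrableOn (fun x : ℝ => x ^ (δ - 1) * Real.exp (-(t * x)))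
      (Ioi (0:ℝ)) := by
    have := integrableOn_rpow_mul_exp_neg_mul_rpow
      (by linarith : (-1:ℝ) < δ - 1) zero_lt_one ht0
    simpa [Real.rpow_one, neg_mul] using this
  have hpiece1 : (∫ r in Ioc (0:ℝ) 1, Real.exp (-r * t) / r * Gfun μ lam r)
      ≤ cmu / Dmin * ((1 / t) ^ δ * Real.Gamma δ) := by
    have hb1 : (∫ r in Ioc (0:ℝ) 1, Real.exp (-r * t) / r * Gfun μ lam r)
        ≤ ∫ r in Ioc (0:ℝ) 1, cmu / Dmin * (r ^ (δ - 1) * Real.exp (-(t * r))) := by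
      refine setIntegral_mono_on (hHI.mono_set Ioc_subset_Ioi_self)
        ((hGamInt.mono_set Ioc_subset_Ioi_self).const_mul _) measurableSet_Ioc
        fun r hr => ?_
      have hr0 : (0:ℝ) < r := hr.1
      have hN0 : 0 ≤ Nr μ r := Nr_nonneg hmeas hnn hint hr0
      have hGle : Gfun μ lam r ≤ r ^ δ * cmu / Dmin := by
        rw [Gfun_eq]
        refine le_trans (div_le_div_of_nonneg_left hN0 hDmin (hD r hr0 hr.2)) ?_
        exact (div_le_div_iff_of_pos_right hDmin).2 (hNub r hr0 hr.2)
      have he0 : 0 ≤ Real.exp (-r * t) / r :=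
        div_nonneg (Real.exp_pos _).le hr0.le
      calc Real.exp (-r * t) / r * Gfun μ lam r
          ≤ Real.exp (-r * t) / r * (r ^ δ * cmu / Dmin) :=
            mul_le_mul_of_nonneg_left hGle he0
      _ = cmu / Dmin * (r ^ (δ - 1) * Real.exp (-(t * r))) := by
          rw [Real.rpow_sub hr0, Real.rpow_one, show -r * t = -(t * r) by ring]
          field_simp
    refine hb1.trans ?_
    rw [MeasureTheory.integral_const_mul]
    have hb2 : (∫ r in Ioc (0:ℝ) 1, r ^ (δ - 1) * Real.exp (-(t * r)))
        ≤ ∫ r in Ioi (0:ℝ), r ^ (δ - 1) * Real.exp (-(t * r)) := by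
      refine setIntegral_mono_set hGamInt ?_
        (HasSubset.Subset.eventuallyLE Ioc_subset_Ioi_self)
      filter_upwards [ae_restrict_mem measurableSet_Ioi] with r hr
      exact mul_nonneg (Real.rpow_nonneg (le_of_lt hr) _) (Real.exp_pos _).le
    rw [integral_rpow_mul_exp_neg_mul_Ioi hδ0 ht0] at hb2
    exact mul_le_mul_of_nonneg_left hb2 (le_of_lt (div_pos hpos hDmin))
  have hExpInt : IntegrableOn (fun r : ℝ => Real.exp (-r)) (Ioi (1:ℝ)) := by
    simpa [neg_one_mul] using exp_neg_integrableOn_Ioi (a := (1:ℝ)) one_pos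
  have hpiece2 : (∫ r in Ioi (1:ℝ), Real.exp (-r * t) / r * Gfun μ lam r)
      ≤ 1 / Nr μ 1 * Real.exp (-t) := by
    have hb1 : (∫ r in Ioi (1:ℝ), Real.exp (-r * t) / r * Gfun μ lam r)
        ≤ ∫ r in Ioi (1:ℝ), 1 / Nr μ 1 * Real.exp (-(t - 1)) * Real.exp (-r) := by
      refine setIntegral_mono_on (hHI.mono_set (Ioi_subset_Ioi zero_le_one))
        ((hExpInt.const_mul _)) measurableSet_Ioi fun r hr => ?_
      have hr1 : (1:ℝ) ≤ r := le_of_lt hr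
      have hr0 : (0:ℝ) < r := lt_of_lt_of_le one_pos hr1
      have hG0 : 0 ≤ Gfun μ lam r := Gfun_nonneg hmeas hnn hint hr0
      have hGle : Gfun μ lam r ≤ 1 / Nr μ 1 :=
        Gfun_le_of_one_le hmeas hnn hint hN1 hr1
      have h1 : Real.exp (-r * t) / r ≤ Real.exp (-r * t) :=
        div_le_self (Real.exp_pos _).le hr1
      have h2 : Real.exp (-r * t) ≤ Real.exp (-(t - 1)) * Real.exp (-r) := by
        rw [← Real.exp_add]
        refine Real.exp_le_exp.2 ?_
        nlinarith
      calc Real.exp (-r * t) / r * Gfun μ lam r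
          ≤ Real.exp (-r * t) * (1 / Nr μ 1) :=
            mul_le_mul h1 hGle hG0 (Real.exp_pos _).le
      _ ≤ Real.exp (-(t - 1)) * Real.exp (-r) * (1 / Nr μ 1) :=
            mul_le_mul_of_nonneg_right h2 (le_of_lt (one_div_pos.2 hN1))
      _ = 1 / Nr μ 1 * Real.exp (-(t - 1)) * Real.exp (-r) := by ring
    refine hb1.trans ?_
    rw [MeasureTheory.integral_const_mul, integral_exp_neg_Ioi]
    rw [mul_assoc, ← Real.exp_add]
    rw [show -(t - 1) + -1 = -t by ring]
  have h1t : (1 / t) ^ δ = t ^ (-δ) := by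
    rw [one_div, ← Real.rpow_neg_one t, ← Real.rpow_mul ht0.le]
    ring_nf
  have hexp_le : Real.exp (-t) ≤ t ^ (-δ) := by
    have h2 : t ^ δ ≤ t := by
      nth_rewrite 2 [← Real.rpow_one t]
      exact Real.rpow_le_rpow_of_exponent_le (le_of_lt ht) hδ1.le
    have h3 : t ≤ Real.exp t := by linarith [Real.add_one_le_exp t]
    rw [Real.exp_neg, Real.rpow_neg ht0.le]
    exact inv_anti₀ (Real.rpow_pos_of_pos ht0 δ) (h2.trans h3)
  have hfin : (∫ r in Ioi (0:ℝ), Real.exp (-r * t) / r * Gfun μ lam r)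
      ≤ A * t ^ (-δ) := by
    rw [hsplit, hA_def]
    have hg1 := hpiece1
    rw [h1t] at hg1
    have hg2 : 1 / Nr μ 1 * Real.exp (-t) ≤ 1 / Nr μ 1 * t ^ (-δ) :=
      mul_le_mul_of_nonneg_left hexp_le (le_of_lt (one_div_pos.2 hN1))
    calc _ ≤ cmu / Dmin * Real.Gamma δ * t ^ (-δ) + 1 / Nr μ 1 * t ^ (-δ) := by
          refine add_le_add (hg1.trans (le_of_eq (by ring))) (hpiece2.trans hg2)
    _ = (cmu / Dmin * Real.Gamma δ + 1 / Nr μ 1) * t ^ (-δ) := by ring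
  calc |v₀| * (lam / π) * (∫ r in Ioi (0:ℝ), Real.exp (-r * t) / r * Gfun μ lam r)
      ≤ |v₀| * (lam / π) * (A * t ^ (-δ)) :=
        mul_le_mul_of_nonneg_left hfin
          (mul_nonneg (abs_nonneg _) (le_of_lt (div_pos hlam Real.pi_pos)))
  _ = |v₀| * (lam / π) * A * t ^ (-δ) := by ring

include hmeas hnn hint in
lemma backward {lam v₀ : ℝ} (hlam : 0 < lam) (hv₀ : v₀ ≠ 0)
    (hpos : 0 < ∫ α in Ioo (0:ℝ) 1, μ α)
    (hf1 : IntegrableOn (fun α => μ α / α) (Ioo 0 1))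
    {δ : ℝ} (hδ0 : 0 < δ) (hδ1 : δ < 1) {c : ℝ} (hc : 0 < c)
    (hbd : ∀ t > (1:ℝ), |vfun μ lam v₀ t| ≤ c * t ^ (-δ)) :
    ∀ᵐ α ∂(volume.restrict (Ioo 0 δ)), μ α = 0 := by
  by_contra hne
  -- extract a positive-measure part of the support strictly below δ
  have h0 : volume ({α : ℝ | μ α ≠ 0} ∩ Ioo 0 δ) ≠ 0 := by
    intro h
    apply hne
    rw [ae_restrict_iff' measurableSet_Ioo, ae_iff]
    have hset : {a : ℝ | ¬(a ∈ Ioo (0:ℝ) δ → μ a = 0)}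
        = {α : ℝ | μ α ≠ 0} ∩ Ioo 0 δ := by
      ext a
      simp only [mem_setOf_eq, Classical.not_imp, mem_inter_iff, mem_Ioo]
      tauto
    rw [hset]
    exact h
  have hunion : {α : ℝ | μ α ≠ 0} ∩ Ioo 0 δ
      ⊆ ⋃ n : ℕ, ({α : ℝ | μ α ≠ 0} ∩ Ioo 0 (δ - δ / (n + 2))) := by
    rintro x ⟨hx1, hx2⟩
    have hδx : 0 < δ - x := by linarith [hx2.2]
    obtain ⟨n, hn⟩ := exists_nat_gt (δ / (δ - x))
    refine mem_iUnion.2 ⟨n, hx1, hx2.1, ?_⟩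
    have h1 : δ / (δ - x) < (n:ℝ) + 2 := by linarith
    have h2 : δ < ((n:ℝ) + 2) * (δ - x) := by
      rw [div_lt_iff₀ hδx] at h1; linarith
    have h3 : δ / ((n:ℝ) + 2) < δ - x := by
      rw [div_lt_iff₀ (by positivity)]; linarith
    linarith
  have hex : ∃ n : ℕ, volume ({α : ℝ | μ α ≠ 0} ∩ Ioo 0 (δ - δ / (n + 2))) ≠ 0 := by
    by_contra hall
    push_neg at hall
    exact h0 (measure_mono_null hunion (measure_iUnion_null hall))
  obtain ⟨n, hn⟩ := hex
  set b : ℝ := δ - δ / (n + 2) with hb_def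
  have hn2 : (0:ℝ) < (n:ℝ) + 2 := by positivity
  have hfrac : 0 < δ / ((n:ℝ) + 2) := by positivity
  have hfrac2 : δ / ((n:ℝ) + 2) < δ := by
    rw [div_lt_iff₀ hn2]; nlinarith
  have hb0 : 0 < b := by rw [hb_def]; push_cast; linarith
  have hbδ : b < δ := by rw [hb_def]; push_cast; linarith
  have hb1 : b ≤ 1 := by linarith
  have hsupb : 0 < volume (Function.support μ ∩ Ioo 0 b) := by
    refine lt_of_le_of_ne (by positivity) (Ne.symm ?_)
    have : Function.support μ = {α : ℝ | μ α ≠ 0} := rfl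
    rw [this, hb_def]
    push_cast
    exact hn
  set J : ℝ := ∫ α in Ioo (0:ℝ) b, Real.sin (π * α) * μ α with hJ_def
  have hJpos : 0 < J := by
    have h1 := sin_kernel_pos hmeas hnn hint hb0 hb1 hsupb one_pos
    have h2 : (∫ α in Ioo (0:ℝ) b, (1:ℝ) ^ α * Real.sin (π * α) * μ α) = J := by
      rw [hJ_def]
      exact setIntegral_congr_fun measurableSet_Ioo fun α _ => by
        rw [Real.one_rpow, one_mul]
    rwa [h2] at h1
  -- D-bounds context
  obtain ⟨r₀, hr₀0, hr₀1, hsmall⟩ := exists_r0 hmeas hnn hint hlam hpos hf1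
  have hsup := support_pos hmeas hnn hint hpos
  have hN1 : 0 < Nr μ 1 := sin_kernel_pos hmeas hnn hint one_pos le_rfl hsup one_pos
  have hNr₀ : 0 < Nr μ r₀ := sin_kernel_pos hmeas hnn hint one_pos le_rfl hsup hr₀0
  set Dmin : ℝ := min (lam ^ 2 / 4) (Nr μ r₀ ^ 2) with hDmin_def
  have hDmin : 0 < Dmin := lt_min (by positivity) (pow_pos hNr₀ 2)
  have hD : ∀ r, 0 < r → r ≤ 1 → Dmin ≤ Dr μ lam r := fun r hr hr1 =>
    Dmin_le_Dr hmeas hnn hint hlam hr₀0 hr₀1 hsmall hr hr1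
  set cmu : ℝ := ∫ α in Ioo (0:ℝ) 1, μ α with hcmu_def
  set K : ℝ := (lam + cmu) ^ 2 + cmu ^ 2 with hK_def
  have hKpos : 0 < K :=
    add_pos_of_pos_of_nonneg (pow_pos (by linarith) 2) (sq_nonneg _)
  have hDK : ∀ r, 0 < r → r ≤ 1 → Dr μ lam r ≤ K := by
    intro r hr hr1
    have hC : |Cr μ r| ≤ cmu :=
      (abs_Cr_le_Mr hmeas hnn hint hr).trans (Mr_le_cmu hmeas hnn hint hr hr1)
    have hN : Nr μ r ≤ cmu :=
      (Nr_le_Mr hmeas hnn hint hr).trans (Mr_le_cmu hmeas hnn hint hr hr1)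
    have hN0 : 0 ≤ Nr μ r := Nr_nonneg hmeas hnn hint hr
    have hCab := abs_le.1 hC
    unfold Dr
    nlinarith [hCab.1, hCab.2]
  have hGlb : ∀ r, 0 < r → r ≤ 1 → J / K * r ^ b ≤ Gfun μ lam r := by
    intro r hr hr1
    have h1 : r ^ b * J ≤ Nr μ r := Nr_lower hmeas hnn hint hb0 hb1 hr hr1
    have hDpos' : 0 < Dr μ lam r := lt_of_lt_of_le hDmin (hD r hr hr1)
    rw [Gfun_eq]
    calc J / K * r ^ b = r ^ b * J / K := by ring
    _ ≤ Nr μ r / K := (div_le_div_iff_of_pos_right hKpos).2 h1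
    _ ≤ Nr μ r / Dr μ lam r :=
        div_le_div_of_nonneg_left (Nr_nonneg hmeas hnn hint hr) hDpos'
          (hDK r hr hr1)
  -- lower bound for the integral
  have hlow : ∀ t : ℝ, 2 ≤ t →
      J / K * Real.exp (-2) * 2 ^ (b - 1) * t ^ (-b)
        ≤ ∫ r in Ioi (0:ℝ), Real.exp (-r * t) / r * Gfun μ lam r := by
    intro t ht2
    have ht0 : (0:ℝ) < t := by linarith
    have hHI := integrableOn_H hmeas hnn hint hlam hf1 hDmin hD hN1 ht0
    have hs : Ioc (1/t) (2/t) ⊆ Ioi (0:ℝ) := fun x hx =>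
      lt_trans (by positivity) hx.1
    have hstep1 : (∫ r in Ioc (1/t) (2/t), Real.exp (-r * t) / r * Gfun μ lam r)
        ≤ ∫ r in Ioi (0:ℝ), Real.exp (-r * t) / r * Gfun μ lam r := by
      refine setIntegral_mono_set hHI ?_ (HasSubset.Subset.eventuallyLE hs)
      filter_upwards [ae_restrict_mem measurableSet_Ioi] with r hr
      exact mul_nonneg (div_nonneg (Real.exp_pos _).le (le_of_lt hr))
        (Gfun_nonneg hmeas hnn hint hr)
    have hconst : ∀ r ∈ Ioc (1/t) (2/t),
        J / K * Real.exp (-2) * (2/t) ^ (b - 1)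
          ≤ Real.exp (-r * t) / r * Gfun μ lam r := by
      intro r hr
      have hr0 : (0:ℝ) < r := lt_trans (by positivity) hr.1
      have hr1 : r ≤ 1 := hr.2.trans (by rw [div_le_one ht0]; linarith)
      have hrt : r * t ≤ 2 := (le_div_iff₀ ht0).1 hr.2
      have hexp : Real.exp (-2) ≤ Real.exp (-r * t) :=
        Real.exp_le_exp.2 (by linarith)
      have hrb : (2/t) ^ (b - 1) ≤ r ^ (b - 1) :=
        Real.rpow_le_rpow_of_nonpos hr0 hr.2 (by linarith)
      have hJK : 0 ≤ J / K * Real.exp (-2) :=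
        mul_nonneg (le_of_lt (div_pos hJpos hKpos)) (Real.exp_pos _).le
      have hG : J / K * r ^ b ≤ Gfun μ lam r := hGlb r hr0 hr1
      calc J / K * Real.exp (-2) * (2/t) ^ (b - 1)
          ≤ J / K * Real.exp (-2) * r ^ (b - 1) :=
            mul_le_mul_of_nonneg_left hrb hJK
      _ = Real.exp (-2) / r * (J / K * r ^ b) := by
          rw [Real.rpow_sub hr0, Real.rpow_one]; ring
      _ ≤ Real.exp (-r * t) / r * Gfun μ lam r :=
          mul_le_mul ((div_le_div_iff_of_pos_right hr0).2 hexp) hG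
            (mul_nonneg (le_of_lt (div_pos hJpos hKpos))
              (Real.rpow_nonneg hr0.le b))
            (div_nonneg (Real.exp_pos _).le hr0.le)
    have hvol : (volume (Ioc (1/t) (2/t))).toReal = 1/t := by
      rw [Real.volume_Ioc, ENNReal.toReal_ofReal (by rw [div_sub_div_same]; positivity)]
      rw [div_sub_div_same]
      norm_num
    have hlowint := setIntegral_ge_of_const_le (μ := volume) measurableSet_Ioc
      (by rw [Real.volume_Ioc]; exact ENNReal.ofReal_ne_top) hconst
      (hHI.mono_set hs)
    rw [measureReal_def, hvol] at hlowint
    refine le_trans (le_of_eq ?_) (hlowint.trans hstep1)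
    -- 2^(b-1) * t^(-b) = (2/t)^(b-1) * (1/t)
    have halg : (2:ℝ) ^ (b - 1) * t ^ (-b) = (2/t) ^ (b - 1) * (1/t) := by
      have ht1 : t ^ (b - 1) * t = t ^ b := by
        rw [← Real.rpow_add_one (ne_of_gt ht0) (b - 1)]
        norm_num
      have h2 : (2/t) ^ (b - 1) * (1/t) = 2 ^ (b - 1) / (t ^ (b - 1) * t) := by
        rw [Real.div_rpow (by norm_num) ht0.le]; ring
      rw [h2, ht1, Real.rpow_neg ht0.le, div_eq_mul_inv]
    rw [mul_assoc, halg]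
    ring
  -- assemble the contradiction
  set c₃ : ℝ := |v₀| * (lam / π) * (J / K * Real.exp (-2) * 2 ^ (b - 1)) with hc₃_def
  have hc₃pos : 0 < c₃ :=
    mul_pos (mul_pos (abs_pos.2 hv₀) (div_pos hlam Real.pi_pos))
      (mul_pos (mul_pos (div_pos hJpos hKpos) (Real.exp_pos _))
        (Real.rpow_pos_of_pos two_pos _))
  have hlow2 : ∀ t : ℝ, 2 ≤ t → c₃ * t ^ (-b) ≤ |vfun μ lam v₀ t| := by
    intro t ht2
    have ht0 : (0:ℝ) < t := by linarith
    rw [vfun_abs hmeas hnn hint hlam]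
    calc c₃ * t ^ (-b)
        = |v₀| * (lam / π) * (J / K * Real.exp (-2) * 2 ^ (b - 1) * t ^ (-b)) := by
          rw [hc₃_def]; ring
    _ ≤ |v₀| * (lam / π) * ∫ r in Ioi (0:ℝ), Real.exp (-r * t) / r * Gfun μ lam r :=
        mul_le_mul_of_nonneg_left (hlow t ht2)
          (mul_nonneg (abs_nonneg _) (le_of_lt (div_pos hlam Real.pi_pos)))
  set q : ℝ := c / c₃ with hq_def
  have hq0 : 0 ≤ q := le_of_lt (div_pos hc hc₃pos)
  set T : ℝ := max 2 ((q + 1) ^ (δ - b)⁻¹) with hT_def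
  have hT2 : (2:ℝ) ≤ T := le_max_left _ _
  have hT1 : (1:ℝ) < T := by linarith
  have hTpos : (0:ℝ) < T := by linarith
  have h3 : c₃ * T ^ (-b) ≤ c * T ^ (-δ) := le_trans (hlow2 T hT2) (hbd T hT1)
  have h4 : T ^ (-b) = T ^ (δ - b) * T ^ (-δ) := by
    rw [← Real.rpow_add hTpos]; ring_nf
  have hTδpos : 0 < T ^ (-δ) := Real.rpow_pos_of_pos hTpos _
  have h5 : c₃ * T ^ (δ - b) ≤ c := by
    have h6 : c₃ * T ^ (δ - b) * T ^ (-δ) ≤ c * T ^ (-δ) := by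
      rw [mul_assoc, ← h4]; exact h3
    exact le_of_mul_le_mul_right h6 hTδpos
  have h7 : q + 1 ≤ T ^ (δ - b) := by
    have hroot : (q + 1) ^ (δ - b)⁻¹ ≤ T := le_max_right _ _
    have hq1 : (0:ℝ) ≤ q + 1 := by linarith
    have h8 := Real.rpow_le_rpow (Real.rpow_nonneg hq1 _) hroot
      (by linarith : (0:ℝ) ≤ δ - b)
    rwa [← Real.rpow_mul hq1, inv_mul_cancel₀ (by linarith : δ - b ≠ 0),
      Real.rpow_one] at h8
  have h8 : c₃ * (q + 1) ≤ c :=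
    le_trans (mul_le_mul_of_nonneg_left h7 hc₃pos.le) h5
  have h9 : c₃ * (q + 1) = c + c₃ := by
    rw [hq_def]
    field_simp
  linarith

end basic

end VDecay

/-- equivalence (f15): for `δ ∈ (0,1)`, `supp μ ⊆ [δ,1]`
(i.e. `μ = 0` a.e. on `(0,δ)`) holds if and only if `|v(t)| ≤ c t^{-δ}` for
`t > 1` and some `c > 0`. -/
theorem v_polynomial_decay_iff (μ : ℝ → ℝ) (lam v₀ : ℝ) (hlam : 0 < lam)
    (hv₀ : v₀ ≠ 0)
    (hmeas : Measurable μ)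
    (hnn : ∀ α ∈ Icc (0:ℝ) 1, 0 ≤ μ α)
    (hint : IntegrableOn μ (Ioo 0 1))
    (hpos : 0 < ∫ α in Ioo (0:ℝ) 1, μ α)
    (hf1 : IntegrableOn (fun α => μ α / α) (Ioo 0 1))
    (δ : ℝ) (hδ : δ ∈ Ioo (0:ℝ) 1) :
    (∀ᵐ α ∂(volume.restrict (Ioo 0 δ)), μ α = 0) ↔
      ∃ c > 0, ∀ t > (1:ℝ), |vfun μ lam v₀ t| ≤ c * t ^ (-δ) := by
  constructor
  · intro hae
    exact VDecay.forward hmeas hnn hint hlam hv₀ hpos hf1 hδ.1 hδ.2 hae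
  · rintro ⟨c, hc, hbd⟩
    exact VDecay.backward hmeas hnn hint hlam hv₀ hpos hf1 hδ.1 hδ.2 hc hbd
end
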